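/- arXiv:1905.12950 — 4 statements merged into one kernel-verified Lean document; each statement's English description precedes it below -/
import Mathlib

section
/- There is a universal constant C > 0 such that the Mixing-Past-Posteriors algorithm with doubling trick (Algorithm 5) guarantees the following: for any K ≥ 2, T ≥ 2, S, n, any loss sequence ℓ_1,…,ℓ_T ∈ [−1,1]^K, and any benchmark sequence i_1,…,i_T ∈ [K] with at most S−1 switches and at most n distinct actions, the distributions p_1,…,p_T it produces satisfy Σ_{t=1}^T r_t(i_t) ≤ C·(√((S ln T + n ln K)·Σ_{t=1}^T Σ_{i=1}^K p_t(i) r_t(i)²) + (S ln T + n ln K)·ln T), where r_t(i) = ⟨p_t, ℓ_t⟩ − ℓ_t(i). In particular, since Σ_t Σ_i p_t(i) r_t(i)² ≤ 4T, the switching regret is at most O(√(T(S ln T + n ln K))). -/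
/-- A valid trajectory of the Mixing-Past-Posteriors algorithm with doubling trick
(Algorithm 5 in the paper), with parameters `K, T, S, n`, mixing `γ = 1/T`,
loss sequence `ℓ`, posteriors `ptl = p̃`, played distributions `p`,
current-period start times `t0`, and doubling budgets `D`.  The learning rate in
a period with budget `D t` is `min{1/5, √((S ln T + n ln K)/D t)}`, and the
algorithm restarts (doubling the budget) as soon as the accumulated quantity
`Σ_{τ = t0}^{t} Σ_i p_τ(i) r_τ(i)²` exceeds the current budget. -/
def Alg5Traj (K T S n : ℕ) (ℓ ptl p : ℕ → Fin K → ℝ)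
    (t0 : ℕ → ℕ) (D : ℕ → ℝ) : Prop :=
  t0 1 = 1 ∧ D 1 = 1 ∧ (∀ i, ptl 1 i = 1 / (K : ℝ)) ∧
  -- the mixing step (with p_{t0} = p̃_{t0})
  (∀ t ∈ Finset.Icc 1 T, ∀ i,
    p t i =
      if t = t0 t then ptl t i
      else (1 - 1 / (T : ℝ)) * ptl t i +
        ((1 / (T : ℝ)) / ((t : ℝ) - (t0 t : ℝ))) *
          ∑ τ ∈ Finset.Icc (t0 t) (t - 1), ptl τ i) ∧
  -- restart / no-restart transitions
  (∀ t ∈ Finset.Icc 1 T,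
    ((∑ τ ∈ Finset.Icc (t0 t) t, ∑ i,
        p τ i * ((∑ j, p τ j * ℓ τ j) - ℓ τ i) ^ 2) > D t →
      t0 (t + 1) = t + 1 ∧ D (t + 1) = 2 * D t ∧
        ∀ i, ptl (t + 1) i = 1 / (K : ℝ)) ∧
    ((∑ τ ∈ Finset.Icc (t0 t) t, ∑ i,
        p τ i * ((∑ j, p τ j * ℓ τ j) - ℓ τ i) ^ 2) ≤ D t →
      t0 (t + 1) = t0 t ∧ D (t + 1) = D t ∧
        ∀ i, ptl (t + 1) i =
          p t i * Real.exp
            (min (1 / 5)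
              (Real.sqrt (((S : ℝ) * Real.log T + (n : ℝ) * Real.log K) / D t)) *
              ((∑ j, p t j * ℓ t j) - ℓ t i)) /
          ∑ j, p t j * Real.exp
            (min (1 / 5)
              (Real.sqrt (((S : ℝ) * Real.log T + (n : ℝ) * Real.log K) / D t)) *
              ((∑ j', p t j' * ℓ t j') - ℓ t j))))

namespace MPP

open Finset

structure Ctx where
  K : ℕ
  T : ℕ
  S : ℕ
  n : ℕ
  hK : 2 ≤ K
  hT : 2 ≤ T
  hS : 1 ≤ S
  hn : 1 ≤ n
  l : ℕ → Fin K → ℝ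
  ptl : ℕ → Fin K → ℝ
  p : ℕ → Fin K → ℝ
  t0 : ℕ → ℕ
  D : ℕ → ℝ
  hl : ∀ t ∈ Finset.Icc 1 T, ∀ i, |l t i| ≤ 1
  htraj : Alg5Traj K T S n l ptl p t0 D

variable (c : Ctx)

noncomputable def Ctx.r (t : ℕ) (i : Fin c.K) : ℝ := (∑ j, c.p t j * c.l t j) - c.l t i
noncomputable def Ctx.v (t : ℕ) : ℝ := ∑ i, c.p t i * (c.r t i) ^ 2
noncomputable def Ctx.Q : ℝ := (c.S : ℝ) * Real.log c.T + (c.n : ℝ) * Real.log c.K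
def Ctx.Res (t : ℕ) : Prop := (∑ τ ∈ Finset.Icc (c.t0 t) t, c.v τ) > c.D t
noncomputable def Ctx.eta (d : ℝ) : ℝ := min (1/5) (Real.sqrt (c.Q / d))
noncomputable def Ctx.Z (η : ℝ) (t : ℕ) : ℝ := ∑ j, c.p t j * Real.exp (η * c.r t j)
noncomputable def Ctx.q (η : ℝ) (t : ℕ) (i : Fin c.K) : ℝ :=
  c.p t i * Real.exp (η * c.r t i) / c.Z η t

instance : Nonempty (Fin c.K) := ⟨⟨0, by have := c.hK; omega⟩⟩

lemma Ctx.T_pos : (0:ℝ) < c.T := by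
  have := c.hT; positivity
lemma Ctx.K_pos : (0:ℝ) < c.K := by
  have := c.hK; positivity
lemma Ctx.logT_pos : 0 < Real.log c.T := by
  apply Real.log_pos; exact_mod_cast c.hT
lemma Ctx.logK_pos : 0 < Real.log c.K := by
  apply Real.log_pos; exact_mod_cast c.hK
lemma Ctx.log2_le_logT : Real.log 2 ≤ Real.log c.T := by
  apply Real.log_le_log (by norm_num); exact_mod_cast c.hT

lemma Ctx.Q_pos : 0 < c.Q := by
  have h1 := c.logT_pos; have h2 := c.logK_pos
  have : (1:ℝ) ≤ c.S := by exact_mod_cast c.hS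
  have : (1:ℝ) ≤ c.n := by exact_mod_cast c.hn
  unfold Ctx.Q; nlinarith [c.logT_pos, c.logK_pos]

lemma Ctx.Q_ge_one : 1 ≤ c.Q := by
  have hS : (1:ℝ) ≤ c.S := by exact_mod_cast c.hS
  have hn : (1:ℝ) ≤ c.n := by exact_mod_cast c.hn
  have h2 : Real.log 2 ≤ Real.log c.T := c.log2_le_logT
  have h2' : Real.log 2 ≤ Real.log c.K := by
    apply Real.log_le_log (by norm_num); exact_mod_cast c.hK
  have hl2 : (0.6931471803:ℝ) < Real.log 2 := Real.log_two_gt_d9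
  have := c.logT_pos; have := c.logK_pos
  unfold Ctx.Q; nlinarith

lemma Ctx.logT_le_Q : Real.log c.T ≤ c.Q := by
  have hS : (1:ℝ) ≤ c.S := by exact_mod_cast c.hS
  have hn : (0:ℝ) ≤ c.n := by positivity
  have := c.logT_pos; have := c.logK_pos
  unfold Ctx.Q; nlinarith

-- trajectory accessors
lemma Ctx.t0_one : c.t0 1 = 1 := c.htraj.1
lemma Ctx.D_one : c.D 1 = 1 := c.htraj.2.1
lemma Ctx.ptl_one : ∀ i, c.ptl 1 i = 1 / (c.K : ℝ) := c.htraj.2.2.1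

lemma Ctx.mix (t : ℕ) (h1 : 1 ≤ t) (h2 : t ≤ c.T) (i : Fin c.K) :
    c.p t i = if t = c.t0 t then c.ptl t i
      else (1 - 1 / (c.T : ℝ)) * c.ptl t i +
        ((1 / (c.T : ℝ)) / ((t : ℝ) - (c.t0 t : ℝ))) *
          ∑ τ ∈ Finset.Icc (c.t0 t) (t - 1), c.ptl τ i :=
  c.htraj.2.2.2.1 t (Finset.mem_Icc.2 ⟨h1, h2⟩) i

lemma Ctx.res_sum_eq (t : ℕ) :
    (∑ τ ∈ Finset.Icc (c.t0 t) t, ∑ i,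
        c.p τ i * ((∑ j, c.p τ j * c.l τ j) - c.l τ i) ^ 2)
      = ∑ τ ∈ Finset.Icc (c.t0 t) t, c.v τ := by
  simp [Ctx.v, Ctx.r]

lemma Ctx.step_res (t : ℕ) (h1 : 1 ≤ t) (h2 : t ≤ c.T) (h : c.Res t) :
    c.t0 (t + 1) = t + 1 ∧ c.D (t + 1) = 2 * c.D t ∧
      ∀ i, c.ptl (t + 1) i = 1 / (c.K : ℝ) := by
  have := (c.htraj.2.2.2.2 t (Finset.mem_Icc.2 ⟨h1, h2⟩)).1
  rw [c.res_sum_eq] at this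
  exact this h

lemma Ctx.step_nores (t : ℕ) (h1 : 1 ≤ t) (h2 : t ≤ c.T) (h : ¬ c.Res t) :
    c.t0 (t + 1) = c.t0 t ∧ c.D (t + 1) = c.D t ∧
      ∀ i, c.ptl (t + 1) i = c.q (c.eta (c.D t)) t i := by
  have h' := (c.htraj.2.2.2.2 t (Finset.mem_Icc.2 ⟨h1, h2⟩)).2
  rw [c.res_sum_eq] at h'
  have := h' (le_of_not_gt h)
  refine ⟨this.1, this.2.1, ?_⟩
  intro i
  rw [this.2.2 i]
  simp [Ctx.q, Ctx.Z, Ctx.eta, Ctx.Q, Ctx.r]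


def Ctx.Props (t : ℕ) : Prop :=
  (∀ i, 0 < c.ptl t i) ∧ (∑ i, c.ptl t i) = 1 ∧ 1 ≤ c.t0 t ∧ c.t0 t ≤ t ∧
    (∀ i, c.ptl (c.t0 t) i = 1 / (c.K : ℝ)) ∧ 1 ≤ c.D t

lemma Ctx.unif_pos : (0:ℝ) < 1 / (c.K : ℝ) := by
  have := c.K_pos; positivity

lemma Ctx.unif_sum : (∑ _i : Fin c.K, 1 / (c.K : ℝ)) = 1 := by
  rw [Finset.sum_const, Finset.card_univ, Fintype.card_fin, nsmul_eq_mul]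
  have := c.K_pos
  field_simp

lemma Ctx.p_pos_sum (t : ℕ) (ht1 : 1 ≤ t) (htT : t ≤ c.T)
    (h1 : ∀ τ, c.t0 t ≤ τ → τ ≤ t → (∀ i, 0 < c.ptl τ i) ∧ (∑ i, c.ptl τ i) = 1)
    (h2 : 1 ≤ c.t0 t) (h3 : c.t0 t ≤ t) :
    (∀ i, 0 < c.p t i) ∧ (∑ i, c.p t i) = 1 := by
  by_cases hc : t = c.t0 t
  · constructor
    · intro i; rw [c.mix t ht1 htT i, if_pos hc]; exact (h1 t h3 le_rfl).1 i
    · have : (∑ i, c.p t i) = ∑ i, c.ptl t i := by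
        apply Finset.sum_congr rfl; intro i _
        rw [c.mix t ht1 htT i, if_pos hc]
      rw [this]; exact (h1 t h3 le_rfl).2
  · have hlt : c.t0 t < t := lt_of_le_of_ne h3 (fun h => hc h.symm)
    have hT1 : (1:ℝ) < c.T := by exact_mod_cast c.hT
    have hA : (0:ℝ) < 1 - 1 / (c.T : ℝ) := by
      have : 1 / (c.T:ℝ) < 1 := by
        rw [div_lt_one c.T_pos]; exact hT1
      linarith
    have hts : (c.t0 t : ℝ) + 1 ≤ (t:ℝ) := by exact_mod_cast hlt
    have hden : (0:ℝ) < (t:ℝ) - (c.t0 t : ℝ) := by linarith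
    have hB : (0:ℝ) < (1 / (c.T : ℝ)) / ((t : ℝ) - (c.t0 t : ℝ)) :=
      div_pos (by positivity) hden
    have hsum_nonneg : ∀ i : Fin c.K, (0:ℝ) ≤ ∑ τ ∈ Finset.Icc (c.t0 t) (t - 1), c.ptl τ i := by
      intro i
      apply Finset.sum_nonneg
      intro τ hτ
      rw [Finset.mem_Icc] at hτ
      exact le_of_lt ((h1 τ hτ.1 (le_trans hτ.2 (Nat.sub_le t 1))).1 i)
    constructor
    · intro i
      rw [c.mix t ht1 htT i, if_neg hc]
      have := (h1 t h3 le_rfl).1 i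
      nlinarith [hsum_nonneg i]
    · have hcard : ((Finset.Icc (c.t0 t) (t - 1)).card : ℝ) = (t:ℝ) - (c.t0 t : ℝ) := by
        rw [Nat.card_Icc]
        have h4 : c.t0 t ≤ t - 1 := by omega
        have : t - 1 + 1 - c.t0 t = t - c.t0 t := by omega
        rw [this]
        push_cast [Nat.cast_sub h3]
        ring
      calc (∑ i, c.p t i)
          = ∑ i, ((1 - 1 / (c.T : ℝ)) * c.ptl t i +
              ((1 / (c.T : ℝ)) / ((t : ℝ) - (c.t0 t : ℝ))) *
                ∑ τ ∈ Finset.Icc (c.t0 t) (t - 1), c.ptl τ i) := by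
            apply Finset.sum_congr rfl; intro i _
            rw [c.mix t ht1 htT i, if_neg hc]
        _ = (1 - 1 / (c.T : ℝ)) * (∑ i, c.ptl t i) +
              ((1 / (c.T : ℝ)) / ((t : ℝ) - (c.t0 t : ℝ))) *
                ∑ τ ∈ Finset.Icc (c.t0 t) (t - 1), (∑ i, c.ptl τ i) := by
            rw [Finset.sum_add_distrib, ← Finset.mul_sum, ← Finset.mul_sum, Finset.sum_comm]
        _ = (1 - 1 / (c.T : ℝ)) * 1 +
              ((1 / (c.T : ℝ)) / ((t : ℝ) - (c.t0 t : ℝ))) * ((t:ℝ) - (c.t0 t : ℝ)) := by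
            have hinner : (∑ τ ∈ Finset.Icc (c.t0 t) (t - 1), (∑ i, c.ptl τ i))
                = (t:ℝ) - (c.t0 t : ℝ) := by
              calc (∑ τ ∈ Finset.Icc (c.t0 t) (t - 1), (∑ i, c.ptl τ i))
                  = ∑ _τ ∈ Finset.Icc (c.t0 t) (t - 1), (1:ℝ) :=
                    Finset.sum_congr rfl (fun τ hτ => by
                      rw [Finset.mem_Icc] at hτ
                      exact (h1 τ hτ.1 (le_trans hτ.2 (Nat.sub_le t 1))).2)
                _ = (t:ℝ) - (c.t0 t : ℝ) := by
                    rw [Finset.sum_const, nsmul_eq_mul, hcard, mul_one]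
            rw [(h1 t h3 le_rfl).2, hinner]
        _ = 1 := by field_simp; ring

lemma Ctx.props : ∀ t, 1 ≤ t → t ≤ c.T + 1 → c.Props t := by
  intro t
  induction t using Nat.strong_induction_on with
  | _ t IH =>
    intro ht1 ht2
    match t, ht1 with
    | 1, _ =>
      refine ⟨fun i => ?_, ?_, ?_, ?_, fun i => ?_, ?_⟩
      · rw [c.ptl_one i]; exact c.unif_pos
      · rw [Finset.sum_congr rfl (fun i _ => c.ptl_one i)]; exact c.unif_sum
      · rw [c.t0_one]
      · rw [c.t0_one]
      · rw [c.t0_one]; exact c.ptl_one i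
      · rw [c.D_one]
    | (s'+2), _ =>
      show c.Props (s' + 1 + 1)
      set s := s' + 1 with hs_def
      have hs1 : 1 ≤ s := by omega
      have hsT : s ≤ c.T := by omega
      have IHs : ∀ τ, 1 ≤ τ → τ ≤ s → c.Props τ := fun τ h1 h2 =>
        IH τ (by omega) h1 (by omega)
      have Ps := IHs s hs1 le_rfl
      have hp := c.p_pos_sum s hs1 hsT
        (fun τ hτ1 hτ2 => ⟨(IHs τ (le_trans Ps.2.2.1 hτ1) hτ2).1,
          (IHs τ (le_trans Ps.2.2.1 hτ1) hτ2).2.1⟩)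
        Ps.2.2.1 Ps.2.2.2.1
      by_cases hres : c.Res s
      · obtain ⟨e1, e2, e3⟩ := c.step_res s hs1 hsT hres
        refine ⟨fun i => ?_, ?_, ?_, ?_, fun i => ?_, ?_⟩
        · rw [e3 i]; exact c.unif_pos
        · rw [Finset.sum_congr rfl (fun i _ => e3 i)]; exact c.unif_sum
        · rw [e1]; omega
        · rw [e1]
        · rw [e1]; exact e3 i
        · rw [e2]; linarith [Ps.2.2.2.2.2]
      · obtain ⟨e1, e2, e3⟩ := c.step_nores s hs1 hsT hres
        have hZpos : 0 < c.Z (c.eta (c.D s)) s := by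
          unfold Ctx.Z
          apply Finset.sum_pos
          · intro i _
            exact mul_pos (hp.1 i) (Real.exp_pos _)
          · exact Finset.univ_nonempty
        refine ⟨fun i => ?_, ?_, ?_, ?_, fun i => ?_, ?_⟩
        · rw [e3 i]
          exact div_pos (mul_pos (hp.1 i) (Real.exp_pos _)) hZpos
        · rw [Finset.sum_congr rfl (fun i _ => e3 i)]
          unfold Ctx.q
          rw [← Finset.sum_div]
          unfold Ctx.Z at hZpos ⊢
          exact div_self (ne_of_gt hZpos)
        · rw [e1]; exact Ps.2.2.1
        · rw [e1]; exact le_trans Ps.2.2.2.1 (by omega)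
        · rw [e1]; exact Ps.2.2.2.2.1 i
        · rw [e2]; exact Ps.2.2.2.2.2

lemma Ctx.ptl_pos (t : ℕ) (h1 : 1 ≤ t) (h2 : t ≤ c.T + 1) : ∀ i, 0 < c.ptl t i :=
  (c.props t h1 h2).1
lemma Ctx.ptl_sum (t : ℕ) (h1 : 1 ≤ t) (h2 : t ≤ c.T + 1) : (∑ i, c.ptl t i) = 1 :=
  (c.props t h1 h2).2.1
lemma Ctx.t0_ge (t : ℕ) (h1 : 1 ≤ t) (h2 : t ≤ c.T + 1) : 1 ≤ c.t0 t :=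
  (c.props t h1 h2).2.2.1
lemma Ctx.t0_le (t : ℕ) (h1 : 1 ≤ t) (h2 : t ≤ c.T + 1) : c.t0 t ≤ t :=
  (c.props t h1 h2).2.2.2.1
lemma Ctx.D_ge_one (t : ℕ) (h1 : 1 ≤ t) (h2 : t ≤ c.T + 1) : 1 ≤ c.D t :=
  (c.props t h1 h2).2.2.2.2.2

lemma Ctx.ptl_le_one (t : ℕ) (h1 : 1 ≤ t) (h2 : t ≤ c.T + 1) (i : Fin c.K) :
    c.ptl t i ≤ 1 := by
  rw [← c.ptl_sum t h1 h2]
  exact Finset.single_le_sum (fun j _ => le_of_lt (c.ptl_pos t h1 h2 j)) (Finset.mem_univ i)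

lemma Ctx.p_pos (t : ℕ) (h1 : 1 ≤ t) (h2 : t ≤ c.T) : ∀ i, 0 < c.p t i :=
  (c.p_pos_sum t h1 h2
    (fun τ hτ1 hτ2 => ⟨c.ptl_pos τ (le_trans (c.t0_ge t h1 (by omega)) hτ1) (by omega),
      c.ptl_sum τ (le_trans (c.t0_ge t h1 (by omega)) hτ1) (by omega)⟩)
    (c.t0_ge t h1 (by omega)) (c.t0_le t h1 (by omega))).1

lemma Ctx.p_sum (t : ℕ) (h1 : 1 ≤ t) (h2 : t ≤ c.T) : (∑ i, c.p t i) = 1 :=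
  (c.p_pos_sum t h1 h2
    (fun τ hτ1 hτ2 => ⟨c.ptl_pos τ (le_trans (c.t0_ge t h1 (by omega)) hτ1) (by omega),
      c.ptl_sum τ (le_trans (c.t0_ge t h1 (by omega)) hτ1) (by omega)⟩)
    (c.t0_ge t h1 (by omega)) (c.t0_le t h1 (by omega))).2


lemma Ctx.pl_abs (t : ℕ) (h1 : 1 ≤ t) (h2 : t ≤ c.T) : |∑ j, c.p t j * c.l t j| ≤ 1 := by
  have hb := c.hl t (Finset.mem_Icc.2 ⟨h1, h2⟩)
  calc |∑ j, c.p t j * c.l t j| ≤ ∑ j, |c.p t j * c.l t j| := Finset.abs_sum_le_sum_abs _ _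
    _ ≤ ∑ j, c.p t j := by
        apply Finset.sum_le_sum
        intro j _
        rw [abs_mul, abs_of_pos (c.p_pos t h1 h2 j)]
        calc c.p t j * |c.l t j| ≤ c.p t j * 1 :=
              mul_le_mul_of_nonneg_left (hb j) (le_of_lt (c.p_pos t h1 h2 j))
          _ = c.p t j := mul_one _
    _ = 1 := c.p_sum t h1 h2

lemma Ctx.r_abs (t : ℕ) (h1 : 1 ≤ t) (h2 : t ≤ c.T) (i : Fin c.K) : |c.r t i| ≤ 2 := by
  have hb := c.hl t (Finset.mem_Icc.2 ⟨h1, h2⟩) i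
  have := c.pl_abs t h1 h2
  unfold Ctx.r
  have h3 := abs_sub (∑ j, c.p t j * c.l t j) (c.l t i)
  calc |(∑ j, c.p t j * c.l t j) - c.l t i| ≤ |∑ j, c.p t j * c.l t j| + |c.l t i| :=
        abs_sub _ _
    _ ≤ 2 := by linarith

lemma Ctx.sum_p_r (t : ℕ) (h1 : 1 ≤ t) (h2 : t ≤ c.T) : (∑ i, c.p t i * c.r t i) = 0 := by
  unfold Ctx.r
  have hs := c.p_sum t h1 h2
  calc (∑ i, c.p t i * ((∑ j, c.p t j * c.l t j) - c.l t i))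
      = (∑ i, c.p t i) * (∑ j, c.p t j * c.l t j) - ∑ i, c.p t i * c.l t i := by
        rw [Finset.sum_mul]
        rw [← Finset.sum_sub_distrib]
        apply Finset.sum_congr rfl
        intro i _; ring
    _ = 0 := by rw [hs]; ring

lemma Ctx.v_nonneg (t : ℕ) (h1 : 1 ≤ t) (h2 : t ≤ c.T) : 0 ≤ c.v t := by
  unfold Ctx.v
  apply Finset.sum_nonneg
  intro i _
  exact mul_nonneg (le_of_lt (c.p_pos t h1 h2 i)) (sq_nonneg _)

lemma Ctx.v_le_four (t : ℕ) (h1 : 1 ≤ t) (h2 : t ≤ c.T) : c.v t ≤ 4 := by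
  unfold Ctx.v
  calc (∑ i, c.p t i * (c.r t i)^2) ≤ ∑ i, c.p t i * 4 := by
        apply Finset.sum_le_sum
        intro i _
        apply mul_le_mul_of_nonneg_left _ (le_of_lt (c.p_pos t h1 h2 i))
        have := c.r_abs t h1 h2 i
        nlinarith [abs_nonneg (c.r t i), sq_abs (c.r t i)]
    _ = 4 := by rw [← Finset.sum_mul, c.p_sum t h1 h2, one_mul]

lemma exp_quad {x : ℝ} (h : |x| ≤ 1) : Real.exp x ≤ 1 + x + x ^ 2 := by
  have := Real.exp_bound h (by norm_num : 0 < 2)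
  have h2 : |Real.exp x - (1 + x)| ≤ x ^ 2 * (3 / (2 * 2)) := by
    simpa [Finset.sum_range_succ] using this
  have := abs_le.1 h2
  nlinarith [sq_abs x, sq_nonneg x]

lemma Ctx.Z_pos (η : ℝ) (t : ℕ) (h1 : 1 ≤ t) (h2 : t ≤ c.T) : 0 < c.Z η t := by
  unfold Ctx.Z
  apply Finset.sum_pos
  · intro i _; exact mul_pos (c.p_pos t h1 h2 i) (Real.exp_pos _)
  · exact Finset.univ_nonempty

lemma Ctx.q_pos (η : ℝ) (t : ℕ) (h1 : 1 ≤ t) (h2 : t ≤ c.T) (i : Fin c.K) :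
    0 < c.q η t i := by
  unfold Ctx.q
  exact div_pos (mul_pos (c.p_pos t h1 h2 i) (Real.exp_pos _)) (c.Z_pos η t h1 h2)

lemma Ctx.q_le_one (η : ℝ) (t : ℕ) (h1 : 1 ≤ t) (h2 : t ≤ c.T) (i : Fin c.K) :
    c.q η t i ≤ 1 := by
  have hsum : (∑ j, c.q η t j) = 1 := by
    unfold Ctx.q
    rw [← Finset.sum_div]
    unfold Ctx.Z
    exact div_self (ne_of_gt (by
      have := c.Z_pos η t h1 h2; unfold Ctx.Z at this; exact this))
  rw [← hsum]
  exact Finset.single_le_sum (fun j _ => le_of_lt (c.q_pos η t h1 h2 j)) (Finset.mem_univ i)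

lemma Ctx.log_q_nonpos (η : ℝ) (t : ℕ) (h1 : 1 ≤ t) (h2 : t ≤ c.T) (i : Fin c.K) :
    Real.log (c.q η t i) ≤ 0 :=
  Real.log_nonpos (le_of_lt (c.q_pos η t h1 h2 i)) (c.q_le_one η t h1 h2 i)

lemma Ctx.eta_r_identity (η : ℝ) (t : ℕ) (h1 : 1 ≤ t) (h2 : t ≤ c.T) (i : Fin c.K) :
    η * c.r t i = Real.log (c.q η t i) - Real.log (c.p t i) + Real.log (c.Z η t) := by
  have hp := c.p_pos t h1 h2 i
  have hZ := c.Z_pos η t h1 h2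
  unfold Ctx.q
  rw [Real.log_div (by positivity) (ne_of_gt hZ),
    Real.log_mul (ne_of_gt hp) (ne_of_gt (Real.exp_pos _)), Real.log_exp]
  ring

lemma Ctx.logZ_le (η : ℝ) (hη0 : 0 ≤ η) (hη : η ≤ 1/5) (t : ℕ) (h1 : 1 ≤ t) (h2 : t ≤ c.T) :
    Real.log (c.Z η t) ≤ η ^ 2 * c.v t := by
  have hZle : c.Z η t ≤ 1 + η ^ 2 * c.v t := by
    unfold Ctx.Z
    have hterm : ∀ i : Fin c.K, c.p t i * Real.exp (η * c.r t i) ≤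
        c.p t i * (1 + η * c.r t i + (η * c.r t i) ^ 2) := by
      intro i
      apply mul_le_mul_of_nonneg_left _ (le_of_lt (c.p_pos t h1 h2 i))
      apply exp_quad
      rw [abs_mul, abs_of_nonneg hη0]
      have := c.r_abs t h1 h2 i
      nlinarith [abs_nonneg (c.r t i)]
    calc (∑ i, c.p t i * Real.exp (η * c.r t i))
        ≤ ∑ i, c.p t i * (1 + η * c.r t i + (η * c.r t i) ^ 2) :=
          Finset.sum_le_sum (fun i _ => hterm i)
      _ = (∑ i, c.p t i) + η * (∑ i, c.p t i * c.r t i) + η ^ 2 * (∑ i, c.p t i * (c.r t i) ^ 2) := by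
          rw [Finset.mul_sum, Finset.mul_sum, ← Finset.sum_add_distrib, ← Finset.sum_add_distrib]
          apply Finset.sum_congr rfl
          intro i _; ring
      _ = 1 + η ^ 2 * c.v t := by
          rw [c.p_sum t h1 h2, c.sum_p_r t h1 h2]
          unfold Ctx.v; ring
  calc Real.log (c.Z η t) ≤ c.Z η t - 1 :=
        Real.log_le_sub_one_of_pos (c.Z_pos η t h1 h2)
    _ ≤ η ^ 2 * c.v t := by linarith

lemma Ctx.eta_le (d : ℝ) : c.eta d ≤ 1/5 := min_le_left _ _
lemma Ctx.eta_pos (d : ℝ) (hd : 0 < d) : 0 < c.eta d := by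
  unfold Ctx.eta
  apply lt_min (by norm_num)
  apply Real.sqrt_pos.2
  exact div_pos c.Q_pos hd
lemma Ctx.eta_le_sqrt (d : ℝ) : c.eta d ≤ Real.sqrt (c.Q / d) := min_le_right _ _


variable {KK : ℕ}

noncomputable def eOcc (a : ℕ) (idx : ℕ → Fin KK) (j : Fin KK) (t : ℕ) : ℕ :=
  if h : ((Finset.Icc a t).filter (fun τ => idx τ = j)).Nonempty
  then ((Finset.Icc a t).filter (fun τ => idx τ = j)).max' h else 0

lemma eOcc_mem {a : ℕ} {idx : ℕ → Fin KK} {j : Fin KK} {t : ℕ}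
    (h : j ∈ (Finset.Icc a t).image idx) :
    eOcc a idx j t ∈ Finset.Icc a t ∧ idx (eOcc a idx j t) = j := by
  obtain ⟨τ, hτ, hj⟩ := Finset.mem_image.1 h
  have hne : ((Finset.Icc a t).filter (fun τ => idx τ = j)).Nonempty :=
    ⟨τ, Finset.mem_filter.2 ⟨hτ, hj⟩⟩
  rw [eOcc, dif_pos hne]
  have := Finset.max'_mem _ hne
  rw [Finset.mem_filter] at this
  exact this

lemma eOcc_stable {a : ℕ} {idx : ℕ → Fin KK} {j : Fin KK} {t : ℕ}
    (ha : a ≤ t + 1) (hne : idx (t + 1) ≠ j) :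
    eOcc a idx j (t + 1) = eOcc a idx j t := by
  have hfil : ((Finset.Icc a (t+1)).filter (fun τ => idx τ = j)) =
      ((Finset.Icc a t).filter (fun τ => idx τ = j)) := by
    apply Finset.ext
    intro x
    simp only [Finset.mem_filter, Finset.mem_Icc]
    constructor
    · rintro ⟨⟨hx1, hx2⟩, hx3⟩
      refine ⟨⟨hx1, ?_⟩, hx3⟩
      rcases Nat.lt_or_ge x (t+1) with h | h
      · omega
      · exfalso; have : x = t + 1 := by omega
        rw [this] at hx3; exact hne hx3
    · rintro ⟨⟨hx1, hx2⟩, hx3⟩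
      exact ⟨⟨hx1, by omega⟩, hx3⟩
  rw [eOcc, eOcc, hfil]

lemma eOcc_last {a : ℕ} {idx : ℕ → Fin KK} {t : ℕ}
    (ha : a ≤ t) {j : Fin KK} (hj : idx t = j) (hne : idx (t + 1) ≠ j) :
    eOcc a idx j (t + 1) = t := by
  have hmem : t ∈ ((Finset.Icc a (t+1)).filter (fun τ => idx τ = j)) :=
    Finset.mem_filter.2 ⟨Finset.mem_Icc.2 ⟨ha, by omega⟩, hj⟩
  have hne' : ((Finset.Icc a (t+1)).filter (fun τ => idx τ = j)).Nonempty := ⟨t, hmem⟩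
  rw [eOcc, dif_pos hne']
  apply le_antisymm
  · apply Finset.max'_le
    intro y hy
    rw [Finset.mem_filter, Finset.mem_Icc] at hy
    rcases Nat.lt_or_ge y (t+1) with h | h
    · omega
    · exfalso; have : y = t + 1 := by omega
      rw [this] at hy; exact hne hy.2
  · exact Finset.le_max' _ t hmem


lemma Icc_succ_insert (a t : ℕ) (h : a ≤ t + 1) :
    Finset.Icc a (t + 1) = insert (t + 1) (Finset.Icc a t) := by
  ext x
  simp only [Finset.mem_Icc, Finset.mem_insert]
  omega

set_option maxHeartbeats 1000000 in
lemma Ctx.period (a b : ℕ) (idx : ℕ → Fin c.K) (d : ℝ)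
    (ha : 1 ≤ a) (hb : b ≤ c.T) (hab : a ≤ b) (hd : 1 ≤ d)
    (hunif : ∀ i, c.ptl a i = 1 / (c.K : ℝ))
    (ht0 : ∀ τ, a ≤ τ → τ ≤ b → c.t0 τ = a)
    (hD : ∀ τ, a ≤ τ → τ ≤ b → c.D τ = d)
    (hnr : ∀ τ, a ≤ τ → τ < b → ¬ c.Res τ) :
    (∑ τ ∈ Finset.Icc a b, c.eta d * c.r τ (idx τ)) ≤
      (c.eta d) ^ 2 * (∑ τ ∈ Finset.Icc a b, c.v τ)
      + ((b : ℝ) - a + 1) * (Real.log c.T - Real.log ((c.T : ℝ) - 1))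
      + (((Finset.Icc a b).image idx).card : ℝ) * Real.log c.K
      + (1 + (∑ τ ∈ Finset.Icc (a + 1) b, if idx τ = idx (τ - 1) then (0:ℝ) else 1))
          * (2 * Real.log c.T) := by
  set η := c.eta d with hη_def
  set L := Real.log c.T - Real.log ((c.T : ℝ) - 1) with hL_def
  have hη0 : 0 < η := c.eta_pos d (by linarith)
  have hη5 : η ≤ 1/5 := c.eta_le d
  have hT2 : (2:ℝ) ≤ c.T := by exact_mod_cast c.hT
  have hL0 : 0 ≤ L := by
    rw [hL_def]
    have := Real.log_le_log (by linarith : (0:ℝ) < (c.T:ℝ) - 1) (by linarith : (c.T:ℝ) - 1 ≤ c.T)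
    linarith
  have hlogT0 : 0 ≤ Real.log c.T := le_of_lt c.logT_pos
  have hlogK0 : 0 ≤ Real.log c.K := le_of_lt c.logK_pos
  -- posterior update within the period
  have hqup : ∀ τ, a ≤ τ → τ < b → ∀ i, c.ptl (τ + 1) i = c.q η τ i := by
    intro τ h1 h2 i
    have hst := (c.step_nores τ (le_trans ha h1) (by omega) (hnr τ h1 h2)).2.2 i
    rw [hD τ h1 (by omega)] at hst
    exact hst
  -- p at period start
  have hpa : ∀ i, c.p a i = 1 / (c.K : ℝ) := by
    intro i
    rw [c.mix a ha (le_trans hab hb) i, if_pos (ht0 a le_rfl hab).symm]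
    exact hunif i
  -- mixing formula inside the period
  have hpmix : ∀ t, a ≤ t → t < b → ∀ i,
      c.p (t+1) i = (1 - 1 / (c.T : ℝ)) * c.ptl (t+1) i +
        ((1 / (c.T : ℝ)) / (((t:ℝ) + 1) - a)) * ∑ τ ∈ Finset.Icc a t, c.ptl τ i := by
    intro t h1 h2 i
    have hmx := c.mix (t+1) (by omega) (by omega) i
    rw [ht0 (t+1) (by omega) (by omega)] at hmx
    rw [if_neg (by omega)] at hmx
    have hsimp : t + 1 - 1 = t := by omega
    rw [hsimp] at hmx
    rw [hmx]
    norm_num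
  have hptl_pos : ∀ τ, a ≤ τ → τ ≤ b → ∀ i, 0 < c.ptl τ i := by
    intro τ h1 h2 i
    exact c.ptl_pos τ (le_trans ha h1) (by omega) i
  -- lower bound via current posterior
  have hp_ge_cur : ∀ t, a ≤ t → t < b → ∀ i,
      (1 - 1 / (c.T : ℝ)) * c.ptl (t+1) i ≤ c.p (t+1) i := by
    intro t h1 h2 i
    rw [hpmix t h1 h2 i]
    have hden : (0:ℝ) < ((t:ℝ) + 1) - a := by
      have : (a:ℝ) ≤ t := by exact_mod_cast h1
      linarith
    have hsum : (0:ℝ) ≤ ∑ τ ∈ Finset.Icc a t, c.ptl τ i := by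
      apply Finset.sum_nonneg
      intro τ hτ
      rw [Finset.mem_Icc] at hτ
      exact le_of_lt (hptl_pos τ hτ.1 (by omega) i)
    have hco : (0:ℝ) ≤ (1 / (c.T : ℝ)) / (((t:ℝ) + 1) - a) := by positivity
    nlinarith
  -- lower bound via any past posterior in the period
  have hp_ge_past : ∀ t, a ≤ t → t < b → ∀ s, a ≤ s → s ≤ t → ∀ i,
      (1 / ((c.T : ℝ) * c.T)) * c.ptl s i ≤ c.p (t+1) i := by
    intro t h1 h2 s hs1 hs2 i
    rw [hpmix t h1 h2 i]
    have haR : (1:ℝ) ≤ (a:ℝ) := by exact_mod_cast ha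
    have htR : ((t:ℝ) + 1) ≤ c.T := by
      have : t + 1 ≤ c.T := by omega
      exact_mod_cast this
    have hden : (1:ℝ) ≤ ((t:ℝ) + 1) - a := by
      have : (a:ℝ) ≤ t := by exact_mod_cast h1
      linarith
    have hdenT : ((t:ℝ) + 1) - a ≤ c.T := by linarith
    have hsum_ge : c.ptl s i ≤ ∑ τ ∈ Finset.Icc a t, c.ptl τ i := by
      apply Finset.single_le_sum (f := fun τ => c.ptl τ i)
      · intro τ hτ
        rw [Finset.mem_Icc] at hτ
        exact le_of_lt (hptl_pos τ hτ.1 (by omega) i)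
      · exact Finset.mem_Icc.2 ⟨hs1, hs2⟩
    have hptl_s_pos : 0 < c.ptl s i := hptl_pos s hs1 (by omega) i
    have hco : (1 / ((c.T : ℝ) * c.T)) ≤ (1 / (c.T : ℝ)) / (((t:ℝ) + 1) - a) := by
      rw [div_div]
      apply one_div_le_one_div_of_le
      · nlinarith
      · nlinarith
    have hfirst : (0:ℝ) ≤ (1 - 1 / (c.T : ℝ)) * c.ptl (t+1) i := by
      have h1T : 1 / (c.T:ℝ) ≤ 1 := by
        rw [div_le_one (by linarith)]; linarith
      have := hptl_pos (t+1) (by omega) (by omega) i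
      nlinarith
    have hcopos : (0:ℝ) < 1 / ((c.T : ℝ) * c.T) := by positivity
    calc (1 / ((c.T : ℝ) * c.T)) * c.ptl s i
        ≤ ((1 / (c.T : ℝ)) / (((t:ℝ) + 1) - a)) * c.ptl s i := by
          apply mul_le_mul_of_nonneg_right hco (le_of_lt hptl_s_pos)
      _ ≤ ((1 / (c.T : ℝ)) / (((t:ℝ) + 1) - a)) * ∑ τ ∈ Finset.Icc a t, c.ptl τ i := by
          apply mul_le_mul_of_nonneg_left hsum_ge
          positivity
      _ ≤ _ := by linarith
  have hTm1 : (0:ℝ) < (c.T:ℝ) - 1 := by linarith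
  have hone_sub : (0:ℝ) < 1 - 1 / (c.T:ℝ) := by
    have : 1 / (c.T:ℝ) < 1 := by
      rw [div_lt_one (by linarith)]; linarith
    linarith
  have hlog_one_sub : Real.log (1 - 1 / (c.T:ℝ)) = -L := by
    have : 1 - 1 / (c.T:ℝ) = ((c.T:ℝ) - 1) / c.T := by
      field_simp
    rw [this, Real.log_div (by linarith) (by linarith), hL_def]
    ring
  have hlog_TT : Real.log (1 / ((c.T : ℝ) * c.T)) = -(2 * Real.log c.T) := by
    rw [one_div, Real.log_inv, Real.log_mul (by linarith) (by linarith)]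
    ring
  -- log-form of the lower bounds
  have hlog_cur : ∀ t, a ≤ t → t < b → ∀ i,
      -Real.log (c.p (t+1) i) ≤ L - Real.log (c.q η t i) := by
    intro t h1 h2 i
    have hq := c.q_pos η t (by omega) (by omega) i
    have hle := hp_ge_cur t h1 h2 i
    rw [hqup t h1 h2 i] at hle
    have := Real.log_le_log (by positivity) hle
    rw [Real.log_mul (ne_of_gt hone_sub) (ne_of_gt hq), hlog_one_sub] at this
    linarith
  have hlog_past : ∀ t, a ≤ t → t < b → ∀ s, a ≤ s → s ≤ t → ∀ i,
      -Real.log (c.p (t+1) i) ≤ 2 * Real.log c.T - Real.log (c.ptl s i) := by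
    intro t h1 h2 s hs1 hs2 i
    have hps := hptl_pos s hs1 (by omega) i
    have hle := hp_ge_past t h1 h2 s hs1 hs2 i
    have := Real.log_le_log (by positivity) hle
    rw [Real.log_mul (by positivity) (ne_of_gt hps), hlog_TT] at this
    linarith
  have hlog_start : ∀ t, a ≤ t → t < b → ∀ i,
      -Real.log (c.p (t+1) i) ≤ 2 * Real.log c.T + Real.log c.K := by
    intro t h1 h2 i
    have := hlog_past t h1 h2 a le_rfl h1 i
    rw [hunif i, one_div, Real.log_inv] at this
    linarith
  -- per-round inequality
  have hstep : ∀ t, a ≤ t → t < b → ∀ i,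
      η * c.r (t+1) i ≤ Real.log (c.q η (t+1) i) - Real.log (c.p (t+1) i)
        + η^2 * c.v (t+1) := by
    intro t h1 h2 i
    have hid := c.eta_r_identity η (t+1) (by omega) (by omega) i
    have hZ := c.logZ_le η (le_of_lt hη0) hη5 (t+1) (by omega) (by omega)
    linarith
  -- the master invariant
  have key : ∀ t, a ≤ t → t ≤ b →
      (∑ τ ∈ Finset.Icc a t, η * c.r τ (idx τ)) ≤
        η ^ 2 * (∑ τ ∈ Finset.Icc a t, c.v τ) + ((t : ℝ) - a + 1) * L
        + (((Finset.Icc a t).image idx).card : ℝ) * Real.log c.K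
        + (1 + (∑ τ ∈ Finset.Icc (a + 1) t, if idx τ = idx (τ - 1) then (0:ℝ) else 1))
            * (2 * Real.log c.T)
        + Real.log (c.q η t (idx t))
        + ∑ j ∈ (((Finset.Icc a t).image idx).erase (idx t)),
            Real.log (c.q η (eOcc a idx j t) j) := by
    intro t ht
    induction t, ht using Nat.le_induction with
    | base =>
      intro _
      rw [Finset.Icc_self, Finset.sum_singleton, Finset.sum_singleton,
        Finset.image_singleton, Finset.erase_singleton, Finset.sum_empty,
        Finset.Icc_eq_empty (by omega : ¬ a + 1 ≤ a), Finset.sum_empty]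
      have hid := c.eta_r_identity η a ha (le_trans hab hb) (idx a)
      have hZ := c.logZ_le η (le_of_lt hη0) hη5 a ha (le_trans hab hb)
      have hpav : Real.log (c.p a (idx a)) = -Real.log c.K := by
        rw [hpa (idx a), one_div, Real.log_inv]
      simp only [Finset.card_singleton]
      push_cast
      rw [hpav] at hid
      linarith [hlogT0, hL0]
    | succ t hat IH =>
      intro h1b
      have htb : t < b := by omega
      have IH' := IH (by omega)
      have hsplit_r : (∑ τ ∈ Finset.Icc a (t+1), η * c.r τ (idx τ)) =
          (∑ τ ∈ Finset.Icc a t, η * c.r τ (idx τ)) + η * c.r (t+1) (idx (t+1)) :=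
        Finset.sum_Icc_succ_top (by omega) _
      have hsplit_v : (∑ τ ∈ Finset.Icc a (t+1), c.v τ) =
          (∑ τ ∈ Finset.Icc a t, c.v τ) + c.v (t+1) :=
        Finset.sum_Icc_succ_top (by omega) _
      have hsplit_sw : (∑ τ ∈ Finset.Icc (a+1) (t+1), if idx τ = idx (τ - 1) then (0:ℝ) else 1) =
          (∑ τ ∈ Finset.Icc (a+1) t, if idx τ = idx (τ - 1) then (0:ℝ) else 1)
            + (if idx (t+1) = idx t then (0:ℝ) else 1) := by
        rw [Finset.sum_Icc_succ_top (by omega)]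
        norm_num
      have hstp := hstep t hat htb (idx (t+1))
      have himg_ins : (Finset.Icc a (t+1)).image idx =
          insert (idx (t+1)) ((Finset.Icc a t).image idx) := by
        rw [Icc_succ_insert a t (by omega), Finset.image_insert]
      have hmem_i0 : idx t ∈ (Finset.Icc a t).image idx :=
        Finset.mem_image.2 ⟨t, Finset.mem_Icc.2 ⟨hat, le_rfl⟩, rfl⟩
      by_cases hcase : idx (t+1) = idx t
      · -- same expert
        have himg : (Finset.Icc a (t+1)).image idx = (Finset.Icc a t).image idx := by
          rw [himg_ins, hcase, Finset.insert_eq_self.2 hmem_i0]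
        have hCR : (∑ j ∈ (((Finset.Icc a t).image idx).erase (idx (t+1))),
              Real.log (c.q η (eOcc a idx j (t+1)) j)) =
            ∑ j ∈ (((Finset.Icc a t).image idx).erase (idx t)),
              Real.log (c.q η (eOcc a idx j t) j) := by
          rw [hcase]
          apply Finset.sum_congr rfl
          intro j hj
          have hjne : j ≠ idx t := (Finset.mem_erase.1 hj).1
          rw [eOcc_stable (by omega) (by rw [hcase]; exact fun h => hjne h.symm)]
        have hlg := hlog_cur t hat htb (idx (t+1))
        rw [hcase] at hlg hstp
        rw [hsplit_r, hsplit_v, himg, hCR, hsplit_sw, if_pos hcase, hcase]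
        have hexp1 : (((t+1:ℕ)):ℝ) = (t:ℝ) + 1 := by push_cast; ring
        rw [hexp1]
        have he1 : ((t:ℝ) + 1 - a + 1) * L = ((t:ℝ) - a + 1) * L + L := by ring
        have he2 : η ^ 2 * ((∑ τ ∈ Finset.Icc a t, c.v τ) + c.v (t+1))
            = η ^ 2 * (∑ τ ∈ Finset.Icc a t, c.v τ) + η ^ 2 * c.v (t+1) := by ring
        have he3 : (1 + ((∑ τ ∈ Finset.Icc (a+1) t, if idx τ = idx (τ - 1) then (0:ℝ) else 1) + 0))
              * (2 * Real.log c.T)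
            = (1 + (∑ τ ∈ Finset.Icc (a+1) t, if idx τ = idx (τ - 1) then (0:ℝ) else 1))
              * (2 * Real.log c.T) := by ring
        linarith [IH', hstp, hlg, hL0]
      · have hsw1 : (if idx (t+1) = idx t then (0:ℝ) else 1) = 1 := if_neg hcase
        by_cases hmem : idx (t+1) ∈ (Finset.Icc a t).image idx
        · -- revived expert
          obtain ⟨heIcc, heidx⟩ := eOcc_mem hmem
          rw [Finset.mem_Icc] at heIcc
          have he1 : a ≤ eOcc a idx (idx (t+1)) t := heIcc.1
          have heb : eOcc a idx (idx (t+1)) t < t := by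
            rcases Nat.lt_or_ge (eOcc a idx (idx (t+1)) t) t with h | h
            · exact h
            · exfalso
              have : eOcc a idx (idx (t+1)) t = t := by omega
              rw [this] at heidx
              exact hcase heidx.symm
          set e := eOcc a idx (idx (t+1)) t with he_def
          have hlg0 := hlog_past t hat htb (e+1) (by omega) (by omega) (idx (t+1))
          rw [hqup e he1 (by omega) (idx (t+1))] at hlg0
          have himg : (Finset.Icc a (t+1)).image idx = (Finset.Icc a t).image idx := by
            rw [himg_ins, Finset.insert_eq_self.2 hmem]
          -- credit bookkeeping
          set U := (Finset.Icc a t).image idx with hU_def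
          have hi0_mem_er : idx t ∈ U.erase (idx (t+1)) :=
            Finset.mem_erase.2 ⟨fun h => hcase h.symm, hmem_i0⟩
          have hi1_mem_er : idx (t+1) ∈ U.erase (idx t) :=
            Finset.mem_erase.2 ⟨hcase, hmem⟩
          have hnew : (∑ j ∈ U.erase (idx (t+1)), Real.log (c.q η (eOcc a idx j (t+1)) j)) =
              Real.log (c.q η t (idx t)) +
              ∑ j ∈ (U.erase (idx (t+1))).erase (idx t), Real.log (c.q η (eOcc a idx j t) j) := by
            conv_lhs => rw [← Finset.insert_erase hi0_mem_er,
              Finset.sum_insert (Finset.notMem_erase _ _)]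
            congr 1
            · rw [eOcc_last hat rfl hcase]
            · apply Finset.sum_congr rfl
              intro j hj
              have hj1 : j ≠ idx (t+1) :=
                (Finset.mem_erase.1 (Finset.mem_of_mem_erase hj)).1
              rw [eOcc_stable (by omega) (fun h => hj1 h.symm)]
          have hold : (∑ j ∈ U.erase (idx t), Real.log (c.q η (eOcc a idx j t) j)) =
              Real.log (c.q η e (idx (t+1))) +
              ∑ j ∈ (U.erase (idx t)).erase (idx (t+1)), Real.log (c.q η (eOcc a idx j t) j) := by
            conv_lhs => rw [← Finset.insert_erase hi1_mem_er,
              Finset.sum_insert (Finset.notMem_erase _ _)]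
          have hcomm : (U.erase (idx (t+1))).erase (idx t) = (U.erase (idx t)).erase (idx (t+1)) :=
            Finset.erase_right_comm
          rw [hold] at IH'
          rw [hsplit_r, hsplit_v, himg, hsplit_sw, hsw1, hnew, hcomm]
          have hexp1 : (((t+1:ℕ)):ℝ) = (t:ℝ) + 1 := by push_cast; ring
          rw [hexp1]
          have he1 : ((t:ℝ) + 1 - a + 1) * L = ((t:ℝ) - a + 1) * L + L := by ring
          have he2 : η ^ 2 * ((∑ τ ∈ Finset.Icc a t, c.v τ) + c.v (t+1))
              = η ^ 2 * (∑ τ ∈ Finset.Icc a t, c.v τ) + η ^ 2 * c.v (t+1) := by ring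
          have he3 : (1 + ((∑ τ ∈ Finset.Icc (a+1) t, if idx τ = idx (τ - 1) then (0:ℝ) else 1) + 1))
                * (2 * Real.log c.T)
              = (1 + (∑ τ ∈ Finset.Icc (a+1) t, if idx τ = idx (τ - 1) then (0:ℝ) else 1))
                * (2 * Real.log c.T) + 2 * Real.log c.T := by ring
          linarith [IH', hstp, hlg0, hL0]
        · -- fresh expert
          have hlg := hlog_start t hat htb (idx (t+1))
          have himg : (Finset.Icc a (t+1)).image idx =
              insert (idx (t+1)) ((Finset.Icc a t).image idx) := himg_ins
          set U := (Finset.Icc a t).image idx with hU_def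
          have hcard : (((insert (idx (t+1)) U)).card : ℝ) = ((U.card) : ℝ) + 1 := by
            rw [Finset.card_insert_of_notMem hmem]
            push_cast; ring
          have herase : ((insert (idx (t+1)) U).erase (idx (t+1))) = U :=
            Finset.erase_insert hmem
          have hnew : (∑ j ∈ U, Real.log (c.q η (eOcc a idx j (t+1)) j)) =
              Real.log (c.q η t (idx t)) +
              ∑ j ∈ U.erase (idx t), Real.log (c.q η (eOcc a idx j t) j) := by
            conv_lhs => rw [← Finset.insert_erase hmem_i0,
              Finset.sum_insert (Finset.notMem_erase _ _)]
            congr 1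
            · rw [eOcc_last hat rfl hcase]
            · apply Finset.sum_congr rfl
              intro j hj
              have hj1 : j ≠ idx (t+1) := by
                intro h
                apply hmem
                rw [← h]
                exact Finset.mem_of_mem_erase hj
              rw [eOcc_stable (by omega) (fun h => hj1 h.symm)]
          rw [hsplit_r, hsplit_v, himg, herase, hsplit_sw, hsw1, hnew, hcard]
          have hexp1 : (((t+1:ℕ)):ℝ) = (t:ℝ) + 1 := by push_cast; ring
          rw [hexp1]
          have he1 : ((t:ℝ) + 1 - a + 1) * L = ((t:ℝ) - a + 1) * L + L := by ring
          have he2 : η ^ 2 * ((∑ τ ∈ Finset.Icc a t, c.v τ) + c.v (t+1))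
              = η ^ 2 * (∑ τ ∈ Finset.Icc a t, c.v τ) + η ^ 2 * c.v (t+1) := by ring
          have he3 : (1 + ((∑ τ ∈ Finset.Icc (a+1) t, if idx τ = idx (τ - 1) then (0:ℝ) else 1) + 1))
                * (2 * Real.log c.T)
              = (1 + (∑ τ ∈ Finset.Icc (a+1) t, if idx τ = idx (τ - 1) then (0:ℝ) else 1))
                * (2 * Real.log c.T) + 2 * Real.log c.T := by ring
          have he4 : ((((Finset.Icc a t).image idx).card : ℝ) + 1) * Real.log c.K
              = (((Finset.Icc a t).image idx).card : ℝ) * Real.log c.K + Real.log c.K := by ring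
          linarith [IH', hstp, hlg, hL0]
  -- conclude: drop the nonpositive terms at t = b
  have hfin := key b hab le_rfl
  have hq_b : Real.log (c.q η b (idx b)) ≤ 0 :=
    c.log_q_nonpos η b (le_trans ha hab) hb (idx b)
  have hcr_np : (∑ j ∈ (((Finset.Icc a b).image idx).erase (idx b)),
      Real.log (c.q η (eOcc a idx j b) j)) ≤ 0 := by
    apply Finset.sum_nonpos
    intro j hj
    have hjm := Finset.mem_of_mem_erase hj
    obtain ⟨heIcc, _⟩ := eOcc_mem hjm
    rw [Finset.mem_Icc] at heIcc
    exact c.log_q_nonpos η _ (le_trans ha heIcc.1) (le_trans heIcc.2 hb) j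
  linarith


lemma sqrt_le_self' {x : ℝ} (h : 1 ≤ x) : Real.sqrt x ≤ x :=
  (Real.sqrt_le_left (by linarith)).2 (by nlinarith)

lemma Ctx.period_bound (a b : ℕ) (idx : ℕ → Fin c.K) (d : ℝ)
    (ha : 1 ≤ a) (hb : b ≤ c.T) (hab : a ≤ b) (hd : 1 ≤ d)
    (hunif : ∀ i, c.ptl a i = 1 / (c.K : ℝ))
    (ht0 : ∀ τ, a ≤ τ → τ ≤ b → c.t0 τ = a)
    (hD : ∀ τ, a ≤ τ → τ ≤ b → c.D τ = d)
    (hnr : ∀ τ, a ≤ τ → τ < b → ¬ c.Res τ)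
    (hsw_all : (∑ t ∈ Finset.Icc 2 c.T, if idx t = idx (t - 1) then (0:ℕ) else 1) ≤ c.S - 1)
    (hcard_all : ((Finset.Icc 1 c.T).image idx).card ≤ c.n)
    (hV : (∑ τ ∈ Finset.Icc a b, c.v τ) ≤ d + 4) :
    (∑ τ ∈ Finset.Icc a b, c.r τ (idx τ)) ≤ 7 * Real.sqrt (c.Q * d) + 35 * c.Q := by
  have hper := c.period a b idx d ha hb hab hd hunif ht0 hD hnr
  have hη0 : 0 < c.eta d := c.eta_pos d (by linarith)
  have hη5 : c.eta d ≤ 1/5 := c.eta_le d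
  have hQ1 : 1 ≤ c.Q := c.Q_ge_one
  have hQ0 : 0 < c.Q := c.Q_pos
  have hd0 : (0:ℝ) < d := by linarith
  have hT2 : (2:ℝ) ≤ c.T := by exact_mod_cast c.hT
  have hlogT0 : 0 ≤ Real.log c.T := le_of_lt c.logT_pos
  have hlogK0 : 0 ≤ Real.log c.K := le_of_lt c.logK_pos
  have hV0 : 0 ≤ ∑ τ ∈ Finset.Icc a b, c.v τ := by
    apply Finset.sum_nonneg
    intro τ hτ
    rw [Finset.mem_Icc] at hτ
    exact c.v_nonneg τ (by omega) (by omega)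
  have hL_le : ((b : ℝ) - a + 1) * (Real.log c.T - Real.log ((c.T : ℝ) - 1)) ≤ 2 := by
    have hTm1 : (0:ℝ) < (c.T:ℝ) - 1 := by linarith
    have hlog1 : Real.log ((c.T:ℝ)/((c.T:ℝ)-1)) ≤ (c.T:ℝ)/((c.T:ℝ)-1) - 1 :=
      Real.log_le_sub_one_of_pos (by positivity)
    have hlog2 : Real.log ((c.T:ℝ)/((c.T:ℝ)-1)) = Real.log c.T - Real.log ((c.T:ℝ)-1) :=
      Real.log_div (by linarith) (by linarith)
    have hfrac : (c.T:ℝ)/((c.T:ℝ)-1) - 1 = 1/((c.T:ℝ)-1) := by field_simp; ring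
    have hL1 : Real.log c.T - Real.log ((c.T:ℝ)-1) ≤ 1/((c.T:ℝ)-1) := by
      rw [hlog2, hfrac] at hlog1
      exact hlog1
    have hL0 : 0 ≤ Real.log c.T - Real.log ((c.T:ℝ)-1) := by
      have := Real.log_le_log hTm1 (by linarith : (c.T:ℝ) - 1 ≤ c.T)
      linarith
    have hba : ((b : ℝ) - a + 1) ≤ (c.T:ℝ) := by
      have h1 : (b:ℝ) ≤ c.T := by exact_mod_cast hb
      have h2 : (1:ℝ) ≤ a := by exact_mod_cast ha
      linarith
    have hba0 : (0:ℝ) ≤ (b : ℝ) - a + 1 := by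
      have : (a:ℝ) ≤ b := by exact_mod_cast hab
      linarith
    calc ((b : ℝ) - a + 1) * (Real.log c.T - Real.log ((c.T : ℝ) - 1))
        ≤ (c.T:ℝ) * (Real.log c.T - Real.log ((c.T : ℝ) - 1)) :=
          mul_le_mul_of_nonneg_right hba hL0
      _ ≤ (c.T:ℝ) * (1/((c.T:ℝ)-1)) := mul_le_mul_of_nonneg_left hL1 (by linarith)
      _ ≤ 2 := by
          rw [mul_one_div, div_le_iff₀ hTm1]
          linarith
  have hcard_le : (((Finset.Icc a b).image idx).card : ℝ) * Real.log c.K ≤ c.Q := by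
    have hsub : (Finset.Icc a b).image idx ⊆ (Finset.Icc 1 c.T).image idx :=
      Finset.image_subset_image (Finset.Icc_subset_Icc (by omega) hb)
    have h1 : ((Finset.Icc a b).image idx).card ≤ c.n :=
      le_trans (Finset.card_le_card hsub) hcard_all
    have h1' : (((Finset.Icc a b).image idx).card : ℝ) ≤ (c.n:ℝ) := by exact_mod_cast h1
    have hQdef : c.Q = (c.S : ℝ) * Real.log c.T + (c.n : ℝ) * Real.log c.K := rfl
    have hS0 : (0:ℝ) ≤ (c.S:ℝ) := by positivity
    nlinarith
  have hsw_le : (1 + (∑ τ ∈ Finset.Icc (a + 1) b, if idx τ = idx (τ - 1) then (0:ℝ) else 1))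
      * (2 * Real.log c.T) ≤ 2 * c.Q := by
    have hcast : (∑ τ ∈ Finset.Icc (a + 1) b, if idx τ = idx (τ - 1) then (0:ℝ) else 1)
        = ((∑ τ ∈ Finset.Icc (a + 1) b, if idx τ = idx (τ - 1) then (0:ℕ) else 1 : ℕ) : ℝ) := by
      push_cast
      apply Finset.sum_congr rfl
      intro τ _
      split <;> simp
    have hsubset : Finset.Icc (a+1) b ⊆ Finset.Icc 2 c.T :=
      Finset.Icc_subset_Icc (by omega) hb
    have hsum_le : (∑ τ ∈ Finset.Icc (a + 1) b, if idx τ = idx (τ - 1) then (0:ℕ) else 1)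
        ≤ (∑ t ∈ Finset.Icc 2 c.T, if idx t = idx (t - 1) then (0:ℕ) else 1) :=
      Finset.sum_le_sum_of_subset hsubset
    have hSn : (∑ τ ∈ Finset.Icc (a + 1) b, if idx τ = idx (τ - 1) then (0:ℕ) else 1) ≤ c.S - 1 :=
      le_trans hsum_le hsw_all
    have hS1 : 1 ≤ c.S := c.hS
    have hSr : (∑ τ ∈ Finset.Icc (a + 1) b, if idx τ = idx (τ - 1) then (0:ℝ) else 1)
        ≤ (c.S : ℝ) - 1 := by
      rw [hcast]
      have h2 : ((c.S - 1 : ℕ) : ℝ) = (c.S : ℝ) - 1 := by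
        rw [Nat.cast_sub hS1]; norm_num
      rw [← h2]
      exact_mod_cast hSn
    have hQdef : c.Q = (c.S : ℝ) * Real.log c.T + (c.n : ℝ) * Real.log c.K := rfl
    have hn0 : (0:ℝ) ≤ (c.n:ℝ) := by positivity
    nlinarith
  have hmain : c.eta d * (∑ τ ∈ Finset.Icc a b, c.r τ (idx τ)) ≤
      (c.eta d)^2 * (∑ τ ∈ Finset.Icc a b, c.v τ) + 5 * c.Q := by
    calc c.eta d * (∑ τ ∈ Finset.Icc a b, c.r τ (idx τ))
        = ∑ τ ∈ Finset.Icc a b, c.eta d * c.r τ (idx τ) := Finset.mul_sum _ _ _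
      _ ≤ _ := hper
      _ ≤ (c.eta d)^2 * (∑ τ ∈ Finset.Icc a b, c.v τ) + 5 * c.Q := by linarith
  have hsqd : Real.sqrt (c.Q/d) * d = Real.sqrt (c.Q*d) := by
    rw [Real.sqrt_div (le_of_lt hQ0), Real.sqrt_mul (le_of_lt hQ0)]
    rw [div_mul_eq_mul_div, mul_div_assoc, Real.div_sqrt]
  have hsqQ : Real.sqrt (c.Q/d) * Real.sqrt (c.Q*d) = c.Q := by
    rw [← Real.sqrt_mul (by positivity)]
    have h3 : c.Q / d * (c.Q * d) = (c.Q)^2 := by field_simp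
    rw [h3, Real.sqrt_sq (le_of_lt hQ0)]
  have hsq_le : Real.sqrt (c.Q/d) ≤ Real.sqrt c.Q :=
    Real.sqrt_le_sqrt (div_le_self (le_of_lt hQ0) hd)
  have hsqrtQ_le : Real.sqrt c.Q ≤ c.Q := sqrt_le_self' hQ1
  have hηd : c.eta d ≤ Real.sqrt (c.Q/d) := c.eta_le_sqrt d
  have hsnn : 0 ≤ Real.sqrt (c.Q*d) := Real.sqrt_nonneg _
  have hsnn2 : 0 ≤ Real.sqrt (c.Q/d) := Real.sqrt_nonneg _
  have hterm1 : (c.eta d)^2 * (∑ τ ∈ Finset.Icc a b, c.v τ) ≤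
      c.eta d * (Real.sqrt (c.Q*d) + 4*c.Q) := by
    have h1 : c.eta d * (∑ τ ∈ Finset.Icc a b, c.v τ) ≤ Real.sqrt (c.Q/d) * (d + 4) := by
      calc c.eta d * (∑ τ ∈ Finset.Icc a b, c.v τ)
          ≤ Real.sqrt (c.Q/d) * (∑ τ ∈ Finset.Icc a b, c.v τ) :=
            mul_le_mul_of_nonneg_right hηd hV0
        _ ≤ Real.sqrt (c.Q/d) * (d + 4) := mul_le_mul_of_nonneg_left hV hsnn2
    have h2 : Real.sqrt (c.Q/d) * (d + 4) ≤ Real.sqrt (c.Q*d) + 4*c.Q := by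
      have he : Real.sqrt (c.Q/d) * (d + 4) = Real.sqrt (c.Q/d) * d + 4 * Real.sqrt (c.Q/d) := by
        ring
      rw [he, hsqd]
      have : 4 * Real.sqrt (c.Q/d) ≤ 4 * c.Q := by
        have := le_trans hsq_le hsqrtQ_le
        linarith
      linarith
    calc (c.eta d)^2 * (∑ τ ∈ Finset.Icc a b, c.v τ)
        = c.eta d * (c.eta d * (∑ τ ∈ Finset.Icc a b, c.v τ)) := by ring
      _ ≤ c.eta d * (Real.sqrt (c.Q/d) * (d + 4)) :=
          mul_le_mul_of_nonneg_left h1 (le_of_lt hη0)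
      _ ≤ c.eta d * (Real.sqrt (c.Q*d) + 4*c.Q) :=
          mul_le_mul_of_nonneg_left h2 (le_of_lt hη0)
  have hterm2 : 5 * c.Q ≤ c.eta d * (25*c.Q + 5*Real.sqrt (c.Q*d)) := by
    have hetaeq : c.eta d = min (1/5) (Real.sqrt (c.Q / d)) := rfl
    rcases min_cases (1/5 : ℝ) (Real.sqrt (c.Q / d)) with ⟨hmin, hcmp⟩ | ⟨hmin, hcmp⟩
    · rw [hetaeq, hmin]
      linarith [hsnn]
    · rw [hetaeq, hmin]
      have hexp : Real.sqrt (c.Q/d) * (25*c.Q + 5*Real.sqrt (c.Q*d))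
          = 25*c.Q*Real.sqrt (c.Q/d) + 5*(Real.sqrt (c.Q/d) * Real.sqrt (c.Q*d)) := by ring
      rw [hexp, hsqQ]
      have h25 : 0 ≤ 25*c.Q*Real.sqrt (c.Q/d) := by positivity
      linarith
  have hfinal : c.eta d * (∑ τ ∈ Finset.Icc a b, c.r τ (idx τ)) ≤
      c.eta d * (7 * Real.sqrt (c.Q*d) + 35 * c.Q) := by
    have hmul : c.eta d * (7 * Real.sqrt (c.Q*d) + 35 * c.Q) =
        c.eta d * (Real.sqrt (c.Q*d) + 4*c.Q) + c.eta d * (25*c.Q + 5*Real.sqrt (c.Q*d)) +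
        c.eta d * (Real.sqrt (c.Q*d) + 6*c.Q) := by ring
    have hextra : 0 ≤ c.eta d * (Real.sqrt (c.Q*d) + 6*c.Q) := by positivity
    linarith
  have hdone := le_of_mul_le_mul_left hfinal hη0
  linarith


lemma sum_Icc_split (f : ℕ → ℝ) (u b T' : ℕ) (h1 : u ≤ b) (h2 : b ≤ T') :
    (∑ τ ∈ Finset.Icc u T', f τ) =
      (∑ τ ∈ Finset.Icc u b, f τ) + ∑ τ ∈ Finset.Icc (b+1) T', f τ := by
  have hdis : Disjoint (Finset.Icc u b) (Finset.Icc (b+1) T') := by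
    apply Finset.disjoint_left.2
    intro x hx hx2
    rw [Finset.mem_Icc] at hx hx2
    omega
  have hun : Finset.Icc u T' = Finset.Icc u b ∪ Finset.Icc (b+1) T' := by
    ext x
    simp only [Finset.mem_Icc, Finset.mem_union]
    omega
  rw [hun, Finset.sum_union hdis]

lemma Ctx.prop_period (u : ℕ) (hu1 : 1 ≤ u) (hut : c.t0 u = u) :
    ∀ τ, u ≤ τ → τ ≤ c.T → (∀ s, u ≤ s → s < τ → ¬ c.Res s) →
      c.t0 τ = u ∧ c.D τ = c.D u := by
  intro τ hτ1
  induction τ, hτ1 using Nat.le_induction with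
  | base => exact fun _ _ => ⟨hut, rfl⟩
  | succ τ hτ IH =>
    intro hT hnr
    have hprev := IH (by omega) (fun s h1 h2 => hnr s h1 (by omega))
    have hstep := c.step_nores τ (by omega) (by omega) (hnr τ hτ (by omega))
    exact ⟨by rw [hstep.1, hprev.1], by rw [hstep.2.1, hprev.2]⟩

lemma Ctx.D_le : ∀ t, t ≤ c.T →
    c.D (t+1) ≤ max 1 (2 * ∑ τ ∈ Finset.Icc 1 t, c.v τ) := by
  intro t
  induction t with
  | zero =>
    intro _
    rw [c.D_one]
    exact le_max_left _ _
  | succ s IH =>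
    intro hsT
    have hmono : (∑ τ ∈ Finset.Icc 1 s, c.v τ) ≤ ∑ τ ∈ Finset.Icc 1 (s+1), c.v τ := by
      rw [Finset.sum_Icc_succ_top (by omega)]
      have := c.v_nonneg (s+1) (by omega) hsT
      linarith
    by_cases hres : c.Res (s+1)
    · have h2 := (c.step_res (s+1) (by omega) hsT hres).2.1
      have hlt : c.D (s+1) < ∑ τ ∈ Finset.Icc (c.t0 (s+1)) (s+1), c.v τ := hres
      have hsum_le : (∑ τ ∈ Finset.Icc (c.t0 (s+1)) (s+1), c.v τ)
          ≤ ∑ τ ∈ Finset.Icc 1 (s+1), c.v τ := by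
        apply Finset.sum_le_sum_of_subset_of_nonneg
        · exact Finset.Icc_subset_Icc (c.t0_ge (s+1) (by omega) (by omega)) le_rfl
        · intro τ hτ _
          rw [Finset.mem_Icc] at hτ
          exact c.v_nonneg τ hτ.1 (by omega)
      rw [h2]
      have : 2 * c.D (s+1) ≤ 2 * ∑ τ ∈ Finset.Icc 1 (s+1), c.v τ := by linarith
      exact le_trans this (le_max_right _ _)
    · have h2 := (c.step_nores (s+1) (by omega) hsT hres).2.1
      rw [h2]
      refine le_trans (IH (by omega)) ?_
      exact max_le_max le_rfl (by linarith)

set_option maxHeartbeats 1000000 in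
lemma Ctx.suffix (idx : ℕ → Fin c.K)
    (hsw_all : (∑ t ∈ Finset.Icc 2 c.T, if idx t = idx (t - 1) then (0:ℕ) else 1) ≤ c.S - 1)
    (hcard_all : ((Finset.Icc 1 c.T).image idx).card ≤ c.n) :
    ∀ k u, c.T - u = k → 1 ≤ u → u ≤ c.T → c.t0 u = u →
      (∀ i, c.ptl u i = 1 / (c.K : ℝ)) →
      (∑ τ ∈ Finset.Icc u c.T, c.r τ (idx τ)) ≤
        (35 / Real.log 2) * c.Q * Real.log (2 * c.D (c.T+1) / c.D u)
        + 24 * Real.sqrt (c.Q * c.D (c.T+1)) - 17 * Real.sqrt (c.Q * c.D u) := by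
  intro k
  induction k using Nat.strong_induction_on with
  | _ k IH =>
    intro u hk hu1 huT hut0 hunif
    classical
    have hQ0 : 0 < c.Q := c.Q_pos
    have hQ1 : 1 ≤ c.Q := c.Q_ge_one
    have hlog2 : 0 < Real.log 2 := Real.log_pos (by norm_num)
    have hDu1 : 1 ≤ c.D u := c.D_ge_one u hu1 (by omega)
    have hDu0 : 0 < c.D u := by linarith
    have hDf1 : 1 ≤ c.D (c.T+1) := c.D_ge_one (c.T+1) (by omega) le_rfl
    have hDf0 : 0 < c.D (c.T+1) := by linarith
    have hsq2 : (24:ℝ)/17 ≤ Real.sqrt 2 := by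
      rw [show (24:ℝ)/17 = Real.sqrt ((24/17)^2) from (Real.sqrt_sq (by norm_num)).symm]
      exact Real.sqrt_le_sqrt (by norm_num)
    have hsqQDu : 0 ≤ Real.sqrt (c.Q * c.D u) := Real.sqrt_nonneg _
    by_cases hex : ∃ τ, u ≤ τ ∧ τ ≤ c.T ∧ c.Res τ
    · obtain ⟨b, hb1, hb2, hbres, hnr⟩ :
          ∃ b, u ≤ b ∧ b ≤ c.T ∧ c.Res b ∧ ∀ s, u ≤ s → s < b → ¬ c.Res s := by
        refine ⟨Nat.find hex, (Nat.find_spec hex).1, (Nat.find_spec hex).2.1,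
          (Nat.find_spec hex).2.2, ?_⟩
        intro s h1 h2 hres
        exact Nat.find_min hex h2 ⟨h1, le_trans (Nat.le_of_lt h2) (Nat.find_spec hex).2.1, hres⟩
      have hprop := c.prop_period u hu1 hut0
      have ht0' : ∀ τ, u ≤ τ → τ ≤ b → c.t0 τ = u := fun τ h1 h2 =>
        (hprop τ h1 (by omega) (fun s hs1 hs2 => hnr s hs1 (by omega))).1
      have hD' : ∀ τ, u ≤ τ → τ ≤ b → c.D τ = c.D u := fun τ h1 h2 =>
        (hprop τ h1 (by omega) (fun s hs1 hs2 => hnr s hs1 (by omega))).2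
      have hV : (∑ τ ∈ Finset.Icc u b, c.v τ) ≤ c.D u + 4 := by
        rcases eq_or_lt_of_le hb1 with heq | hlt
        · rw [← heq, Finset.Icc_self, Finset.sum_singleton]
          have := c.v_le_four u hu1 (by omega)
          linarith
        · have hb' : b - 1 + 1 = b := by omega
          have hsp : (∑ τ ∈ Finset.Icc u b, c.v τ) =
              (∑ τ ∈ Finset.Icc u (b-1), c.v τ) + c.v b := by
            rw [← hb', Finset.sum_Icc_succ_top (by omega)]
            rw [hb']
          have hnres : ¬ c.Res (b-1) := hnr (b-1) (by omega) (by omega)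
          unfold Ctx.Res at hnres
          push_neg at hnres
          rw [ht0' (b-1) (by omega) (by omega), hD' (b-1) (by omega) (by omega)] at hnres
          have hv4 := c.v_le_four b (by omega) hb2
          rw [hsp]
          linarith
      have hpb := c.period_bound u b idx (c.D u) hu1 hb2 hb1 hDu1 hunif ht0' hD' hnr
        hsw_all hcard_all hV
      have hres_step := c.step_res b (by omega) hb2 hbres
      have hDb : c.D b = c.D u := hD' b hb1 le_rfl
      by_cases hbT : b = c.T
      · -- restart at the last round
        have hDf : c.D (c.T+1) = 2 * c.D u := by
          rw [← hbT, hres_step.2.1, hDb]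
        have hsum_eq : (∑ τ ∈ Finset.Icc u c.T, c.r τ (idx τ))
            = ∑ τ ∈ Finset.Icc u b, c.r τ (idx τ) := by rw [hbT]
        rw [hsum_eq, hDf]
        have hlog4 : Real.log (2 * (2 * c.D u) / c.D u) = 2 * Real.log 2 := by
          have : 2 * (2 * c.D u) / c.D u = 4 := by field_simp; ring
          rw [this, show (4:ℝ) = 2^2 by norm_num, Real.log_pow]
          push_cast; ring
        rw [hlog4]
        have hsqrt2 : Real.sqrt (c.Q * (2 * c.D u)) = Real.sqrt 2 * Real.sqrt (c.Q * c.D u) := by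
          rw [show c.Q * (2 * c.D u) = 2 * (c.Q * c.D u) by ring,
            Real.sqrt_mul (by norm_num : (0:ℝ) ≤ 2)]
        rw [hsqrt2]
        have hc : (35 / Real.log 2) * c.Q * (2 * Real.log 2) = 70 * c.Q := by
          field_simp
          ring
        rw [hc]
        nlinarith [mul_nonneg (by linarith : (0:ℝ) ≤ Real.sqrt 2 - 24/17) hsqQDu]
      · -- restart strictly before the end
        have hbT' : b < c.T := lt_of_le_of_ne hb2 hbT
        have hIH := IH (c.T - (b+1)) (by omega) (b+1) rfl (by omega) (by omega)
          hres_step.1 hres_step.2.2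
        have hDb1 : c.D (b+1) = 2 * c.D u := by rw [hres_step.2.1, hDb]
        rw [hDb1] at hIH
        have hsplit := sum_Icc_split (fun τ => c.r τ (idx τ)) u b c.T hb1 hb2
        rw [hsplit]
        have hsqrt2 : Real.sqrt (c.Q * (2 * c.D u)) = Real.sqrt 2 * Real.sqrt (c.Q * c.D u) := by
          rw [show c.Q * (2 * c.D u) = 2 * (c.Q * c.D u) by ring,
            Real.sqrt_mul (by norm_num : (0:ℝ) ≤ 2)]
        rw [hsqrt2] at hIH
        have hlogsplit : Real.log (2 * c.D (c.T+1) / c.D u)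
            = Real.log (2 * c.D (c.T+1) / (2 * c.D u)) + Real.log 2 := by
          have h1 : 2 * c.D (c.T+1) / c.D u = (2 * c.D (c.T+1) / (2 * c.D u)) * 2 := by
            field_simp
          rw [h1, Real.log_mul (by positivity) (by norm_num)]
        rw [hlogsplit]
        have hterm : (35 / Real.log 2) * c.Q * (Real.log (2 * c.D (c.T+1) / (2 * c.D u)) + Real.log 2)
            = (35 / Real.log 2) * c.Q * Real.log (2 * c.D (c.T+1) / (2 * c.D u)) + 35 * c.Q := by
          field_simp
        rw [hterm]
        nlinarith [mul_nonneg (by linarith : (0:ℝ) ≤ Real.sqrt 2 - 24/17) hsqQDu]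
    · -- no restart until the horizon
      push_neg at hex
      have hnr : ∀ s, u ≤ s → s ≤ c.T → ¬ c.Res s := fun s h1 h2 => hex s h1 h2
      have hprop := c.prop_period u hu1 hut0
      have ht0' : ∀ τ, u ≤ τ → τ ≤ c.T → c.t0 τ = u := fun τ h1 h2 =>
        (hprop τ h1 h2 (fun s hs1 hs2 => hnr s hs1 (by omega))).1
      have hD' : ∀ τ, u ≤ τ → τ ≤ c.T → c.D τ = c.D u := fun τ h1 h2 =>
        (hprop τ h1 h2 (fun s hs1 hs2 => hnr s hs1 (by omega))).2
      have hV : (∑ τ ∈ Finset.Icc u c.T, c.v τ) ≤ c.D u + 4 := by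
        have hnres : ¬ c.Res c.T := hnr c.T huT le_rfl
        unfold Ctx.Res at hnres
        push_neg at hnres
        rw [ht0' c.T huT le_rfl, hD' c.T huT le_rfl] at hnres
        linarith
      have hpb := c.period_bound u c.T idx (c.D u) hu1 le_rfl huT hDu1 hunif ht0' hD'
        (fun s h1 h2 => hnr s h1 (by omega)) hsw_all hcard_all hV
      have hDf : c.D (c.T+1) = c.D u := by
        rw [(c.step_nores c.T (by omega) le_rfl (hnr c.T huT le_rfl)).2.1]
        exact hD' c.T huT le_rfl
      rw [hDf]
      have hlog2' : Real.log (2 * c.D u / c.D u) = Real.log 2 := by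
        have : 2 * c.D u / c.D u = 2 := by field_simp
        rw [this]
      rw [hlog2']
      have hc : (35 / Real.log 2) * c.Q * Real.log 2 = 35 * c.Q := by
        field_simp
      linarith


lemma sqrt_add_le {x y : ℝ} (hx : 0 ≤ x) (hy : 0 ≤ y) :
    Real.sqrt (x + y) ≤ Real.sqrt x + Real.sqrt y := by
  apply (Real.sqrt_le_left (by positivity)).2
  nlinarith [Real.sq_sqrt hx, Real.sq_sqrt hy, Real.sqrt_nonneg x, Real.sqrt_nonneg y,
    mul_nonneg (Real.sqrt_nonneg x) (Real.sqrt_nonneg y)]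

end MPP

set_option maxHeartbeats 1000000 in
/-- Theorem 5, adversarial part / Eq. (22).
There is a universal constant `C` such that any trajectory of Algorithm 5 satisfies
`Σ_t r_t(i_t) ≤ C (√((S ln T + n ln K) Σ_t Σ_i p_t(i) r_t(i)²) + (S ln T + n ln K) ln T)`
against any benchmark with at most `S-1` switches and at most `n` distinct actions. -/
theorem stmt_9 :
    ∃ C : ℝ, 0 < C ∧
      ∀ (K T S n : ℕ), 2 ≤ K → 2 ≤ T → 1 ≤ S → 1 ≤ n →
      ∀ ℓ ptl p : ℕ → Fin K → ℝ, ∀ t0 : ℕ → ℕ, ∀ D : ℕ → ℝ,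
        (∀ t ∈ Finset.Icc 1 T, ∀ i, |ℓ t i| ≤ 1) →
        Alg5Traj K T S n ℓ ptl p t0 D →
        ∀ idx : ℕ → Fin K,
          (∑ t ∈ Finset.Icc 2 T, if idx t = idx (t - 1) then 0 else 1) ≤ S - 1 →
          ((Finset.Icc 1 T).image idx).card ≤ n →
          (∑ t ∈ Finset.Icc 1 T, ((∑ j, p t j * ℓ t j) - ℓ t (idx t))) ≤
            C * (Real.sqrt (((S : ℝ) * Real.log T + (n : ℝ) * Real.log K) *
                  ∑ t ∈ Finset.Icc 1 T, ∑ i,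
                    p t i * ((∑ j, p t j * ℓ t j) - ℓ t i) ^ 2) +
                ((S : ℝ) * Real.log T + (n : ℝ) * Real.log K) * Real.log T) := by
  refine ⟨300, by norm_num, ?_⟩
  intro K T S n hK hT hS hn ℓ ptl p t0 D hℓ htraj idx hsw hcard
  set c : MPP.Ctx := ⟨K, T, S, n, hK, hT, hS, hn, ℓ, ptl, p, t0, D, hℓ, htraj⟩ with hc_def
  -- identify quantities
  have hLHS : (∑ t ∈ Finset.Icc 1 T, ((∑ j, p t j * ℓ t j) - ℓ t (idx t)))
      = ∑ t ∈ Finset.Icc 1 T, c.r t (idx t) := rfl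
  have hVeq : (∑ t ∈ Finset.Icc 1 T, ∑ i, p t i * ((∑ j, p t j * ℓ t j) - ℓ t i) ^ 2)
      = ∑ t ∈ Finset.Icc 1 T, c.v t := rfl
  have hQeq : ((S : ℝ) * Real.log T + (n : ℝ) * Real.log K) = c.Q := rfl
  rw [hLHS, hVeq, hQeq]
  set V := ∑ t ∈ Finset.Icc 1 T, c.v t with hV_def
  have hQ0 : 0 < c.Q := c.Q_pos
  have hQ1 : 1 ≤ c.Q := c.Q_ge_one
  have hlog2 : 0 < Real.log 2 := Real.log_pos (by norm_num)
  have hlogT : Real.log 2 ≤ Real.log c.T := c.log2_le_logT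
  have hlogT0 : 0 < Real.log c.T := c.logT_pos
  have hTc : c.T = T := rfl
  have hsuf := c.suffix idx hsw hcard (c.T - 1) 1 rfl le_rfl (by omega) c.t0_one c.ptl_one
  rw [c.D_one] at hsuf
  have hV0 : 0 ≤ V := by
    rw [hV_def]
    apply Finset.sum_nonneg
    intro τ hτ
    rw [Finset.mem_Icc] at hτ
    exact c.v_nonneg τ (by omega) (by omega)
  have hV4T : V ≤ 4 * (c.T : ℝ) := by
    rw [hV_def]
    calc (∑ t ∈ Finset.Icc 1 c.T, c.v t) ≤ ∑ t ∈ Finset.Icc 1 c.T, (4:ℝ) := by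
          apply Finset.sum_le_sum
          intro τ hτ
          rw [Finset.mem_Icc] at hτ
          exact c.v_le_four τ (by omega) (by omega)
      _ = 4 * (c.T : ℝ) := by
          rw [Finset.sum_const, Nat.card_Icc]
          simp
          ring
  have hDf1 : 1 ≤ c.D (c.T + 1) := c.D_ge_one (c.T+1) (by omega) le_rfl
  have hDf0 : 0 < c.D (c.T + 1) := by linarith
  have hDle := c.D_le c.T le_rfl
  rw [← hV_def] at hDle
  have hT2 : (2:ℝ) ≤ (c.T:ℝ) := by exact_mod_cast c.hT
  -- log term bound
  have h2Df : 2 * c.D (c.T+1) ≤ (c.T:ℝ)^5 := by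
    have h1 : c.D (c.T+1) ≤ max 1 (2 * V) := hDle
    have h2 : max 1 (2*V) ≤ 8 * (c.T:ℝ) := by
      apply max_le
      · linarith
      · linarith
    have h4 : (4:ℝ) ≤ (c.T:ℝ)^2 := by nlinarith
    have h16 : (16:ℝ) ≤ (c.T:ℝ)^4 := by
      nlinarith [mul_le_mul h4 h4 (by norm_num : (0:ℝ) ≤ 4) (by positivity : (0:ℝ) ≤ (c.T:ℝ)^2)]
    nlinarith [mul_nonneg (by linarith : (0:ℝ) ≤ (c.T:ℝ)^4 - 16) (by linarith : (0:ℝ) ≤ (c.T:ℝ))]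
  have hlogDf : Real.log (2 * c.D (c.T+1) / 1) ≤ 5 * Real.log c.T := by
    rw [div_one]
    calc Real.log (2 * c.D (c.T+1)) ≤ Real.log ((c.T:ℝ)^5) :=
          Real.log_le_log (by linarith) h2Df
      _ = 5 * Real.log c.T := by
          rw [Real.log_pow]
          push_cast; ring
  have hterm1 : (35 / Real.log 2) * c.Q * Real.log (2 * c.D (c.T+1) / 1)
      ≤ 253 * (c.Q * Real.log c.T) := by
    have hco : 0 ≤ (35 / Real.log 2) * c.Q := by positivity
    have h1 : (35 / Real.log 2) * c.Q * Real.log (2 * c.D (c.T+1) / 1)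
        ≤ (35 / Real.log 2) * c.Q * (5 * Real.log c.T) :=
      mul_le_mul_of_nonneg_left hlogDf hco
    have h2 : (35 / Real.log 2) * c.Q * (5 * Real.log c.T)
        = (175 / Real.log 2) * (c.Q * Real.log c.T) := by ring
    have h3 : (175 / Real.log 2) ≤ 253 := by
      rw [div_le_iff₀ hlog2]
      nlinarith [Real.log_two_gt_d9]
    have h4 : 0 ≤ c.Q * Real.log c.T := by positivity
    nlinarith
  -- sqrt term bound
  have hsqrt_bound : Real.sqrt (c.Q * c.D (c.T+1)) ≤ c.Q + (17/12) * Real.sqrt (c.Q * V) := by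
    have h1 : c.D (c.T+1) ≤ 1 + 2 * V := by
      refine le_trans hDle (max_le (by linarith) (by linarith))
    have h2 : Real.sqrt (c.Q * c.D (c.T+1)) ≤ Real.sqrt (c.Q + 2 * (c.Q * V)) := by
      apply Real.sqrt_le_sqrt
      nlinarith
    have h3 : Real.sqrt (c.Q + 2 * (c.Q * V)) ≤ Real.sqrt c.Q + Real.sqrt (2 * (c.Q * V)) :=
      MPP.sqrt_add_le (by linarith) (by positivity)
    have h4 : Real.sqrt c.Q ≤ c.Q := MPP.sqrt_le_self' hQ1
    have h5 : Real.sqrt (2 * (c.Q * V)) = Real.sqrt 2 * Real.sqrt (c.Q * V) :=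
      Real.sqrt_mul (by norm_num) _
    have h6 : Real.sqrt 2 ≤ 17/12 := by
      rw [show (17:ℝ)/12 = Real.sqrt ((17/12)^2) from (Real.sqrt_sq (by norm_num)).symm]
      exact Real.sqrt_le_sqrt (by norm_num)
    have h7 : 0 ≤ Real.sqrt (c.Q * V) := Real.sqrt_nonneg _
    nlinarith
  have h24Q : 24 * c.Q ≤ 35 * (c.Q * Real.log c.T) := by
    have : (0.6931471803:ℝ) < Real.log c.T := lt_of_lt_of_le Real.log_two_gt_d9 hlogT
    nlinarith
  have hsqQ1 : 0 ≤ Real.sqrt (c.Q * 1) := Real.sqrt_nonneg _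
  have hsqQV : 0 ≤ Real.sqrt (c.Q * V) := Real.sqrt_nonneg _
  -- combine
  calc (∑ t ∈ Finset.Icc 1 T, c.r t (idx t))
      ≤ (35 / Real.log 2) * c.Q * Real.log (2 * c.D (c.T+1) / 1)
        + 24 * Real.sqrt (c.Q * c.D (c.T+1)) - 17 * Real.sqrt (c.Q * 1) := hsuf
    _ ≤ 253 * (c.Q * Real.log c.T) + 24 * (c.Q + (17/12) * Real.sqrt (c.Q * V)) := by
        linarith [hterm1, hsqrt_bound, hsqQ1]
    _ ≤ 300 * (Real.sqrt (c.Q * V) + c.Q * Real.log c.T) := by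
        have hA : 0 ≤ c.Q * Real.log c.T := by positivity
        linarith [h24Q, hsqQV]
end

section
/- Fix K, T ≥ 2, S ∈ [T], n ≥ 1, let M = ⌊log₂(√T/5)⌋ + 1 and η_j = min{1/5, 2^{j−1}/√T} for j ∈ [M]. Let ℓ_1,…,ℓ_T ∈ [−1,1]^K, let w_1,…,w_T ∈ Δ_{KM} and z_t(i,j) ∈ [0,1] with Σ_{i,j} z_t(i,j)w_t(i,j) > 0, define p_t(i) proportional to Σ_{j=1}^M z_t(i,j)w_t(i,j), r_t(i) = ⟨p_t, ℓ_t⟩ − ℓ_t(i), and c_t(i,j) = −z_t(i,j)r_t(i). Assume (w_t) satisfies Condition 3 with constant C for the losses (c_t) and rates η_1,…,η_M, and for every (i,j) the sequence q_t = (1 − z_t(i,j), z_t(i,j)) satisfies Condition 2 with constant C and parameter η_j for the losses h_t = (0, 5η_j|r_t(i)| − r_t(i)). Then there is a constant C' depending only on C such that for every benchmark sequence i_1,…,i_T ∈ [K] with at most S−1 switches and at most n distinct actions, Σ_{t=1}^T r_t(i_t) ≤ C'·√(T(S ln T + n ln(K ln T))). -/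
section stmt11helpers

lemma stmt11_no_switch (g : ℕ → Bool) (T : ℕ) (h : ∀ t ∈ Finset.Icc 2 T, g t = g (t-1)) :
    ∀ t, 1 ≤ t → t ≤ T → g t = g 1 := by
  intro t
  induction t with
  | zero => omega
  | succ k ih =>
    intro h1 h2
    rcases Nat.lt_or_ge k 1 with hk | hk
    · have : k = 0 := by omega
      subst this; rfl
    · have := h (k+1) (Finset.mem_Icc.mpr ⟨by omega, h2⟩)
      simp only [Nat.add_sub_cancel] at this
      rw [this]
      exact ih hk (by omega)

lemma stmt11_M_le_twolog (T : ℕ) (hT : 2 ≤ T) :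
    ((⌊Real.logb 2 (Real.sqrt T / 5)⌋₊ + 1 : ℕ) : ℝ) ≤ 2 * Real.log T := by
  have hT0 : (0:ℝ) < (T:ℝ) := by positivity
  have hT2 : (2:ℝ) ≤ (T:ℝ) := by exact_mod_cast hT
  have hL2 : Real.log 2 ≤ Real.log T := Real.log_le_log (by norm_num) hT2
  have hlog2 : (0.6931471803 : ℝ) < Real.log 2 := Real.log_two_gt_d9
  have hlog2' : Real.log 2 < 0.6931471808 := Real.log_two_lt_d9
  have hsT0 : (0:ℝ) < Real.sqrt T := Real.sqrt_pos.mpr hT0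
  by_cases hc : Real.sqrt T / 5 < 2
  · have hfl : ⌊Real.logb 2 (Real.sqrt T / 5)⌋₊ = 0 := by
      apply Nat.floor_eq_zero.mpr
      have : Real.logb 2 (Real.sqrt T / 5) < 1 := by
        rw [Real.logb_lt_iff_lt_rpow (by norm_num) (by positivity)]
        simpa using hc
      exact this
    rw [hfl]
    push_cast
    linarith
  · push_neg at hc
    have harg1 : (1:ℝ) ≤ Real.sqrt T / 5 := by linarith
    have hfl : (⌊Real.logb 2 (Real.sqrt T / 5)⌋₊ : ℝ) ≤ Real.logb 2 (Real.sqrt T / 5) :=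
      Nat.floor_le (Real.logb_nonneg (by norm_num) harg1)
    have hT100 : (100:ℝ) ≤ (T:ℝ) := by
      nlinarith [Real.sq_sqrt hT0.le]
    have hlogT2 : (2:ℝ) ≤ Real.log T := by
      rw [Real.le_log_iff_exp_le hT0]
      have h1 : Real.exp 1 < 2.7182818286 := Real.exp_one_lt_d9
      have : Real.exp 2 = Real.exp 1 * Real.exp 1 := by
        rw [← Real.exp_add]; norm_num
      nlinarith [Real.exp_pos 1]
    have hlogb : Real.logb 2 (Real.sqrt T / 5) ≤ Real.log T / (2 * Real.log 2) := by
      rw [Real.logb]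
      have h5 : Real.log (Real.sqrt T / 5) ≤ Real.log T / 2 := by
        rw [Real.log_div (by positivity) (by norm_num), Real.log_sqrt hT0.le]
        have : (0:ℝ) ≤ Real.log 5 := Real.log_nonneg (by norm_num)
        linarith
      rw [show Real.log (T:ℝ) / (2 * Real.log 2) = (Real.log T / 2) / Real.log 2 by ring]
      gcongr
    have h3 : (⌊Real.logb 2 (Real.sqrt T / 5)⌋₊ : ℝ) * (2 * Real.log 2) ≤ Real.log T := by
      rw [← le_div_iff₀ (by linarith : (0:ℝ) < 2 * Real.log 2)]
      exact hfl.trans hlogb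
    have hfl0 : (0:ℝ) ≤ (⌊Real.logb 2 (Real.sqrt T / 5)⌋₊ : ℝ) := by positivity
    push_cast
    nlinarith [h3, hfl0, hlogT2]

lemma stmt11_logKM_le (K T M : ℕ) (hK : 2 ≤ K) (hT : 2 ≤ T) (hM1 : 1 ≤ M)
    (hMle : (M:ℝ) ≤ 2 * Real.log T) :
    Real.log ((K:ℝ) * (M:ℝ)) ≤ 4 * Real.log ((K:ℝ) * Real.log T) := by
  have hlog2 : (0.6931471803 : ℝ) < Real.log 2 := Real.log_two_gt_d9
  have hT2 : (2:ℝ) ≤ (T:ℝ) := by exact_mod_cast hT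
  have hK2 : (2:ℝ) ≤ (K:ℝ) := by exact_mod_cast hK
  have hlnT : Real.log 2 ≤ Real.log T := Real.log_le_log (by norm_num) hT2
  set y := (K:ℝ) * Real.log T with hy
  have hy0 : (1.38:ℝ) ≤ y := by nlinarith
  have hKM : (K:ℝ) * (M:ℝ) ≤ 2 * y := by
    rw [hy]; nlinarith
  have h2y : 2 * y ≤ y ^ 4 := by
    have h3 : (1.38:ℝ)^3 ≤ y^3 := by
      apply pow_le_pow_left₀ (by norm_num) hy0
    nlinarith
  calc Real.log ((K:ℝ) * (M:ℝ)) ≤ Real.log (y ^ 4) := by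
        apply Real.log_le_log ?_ (hKM.trans h2y)
        have : (1:ℝ) ≤ (M:ℝ) := by exact_mod_cast hM1
        nlinarith
    _ = 4 * Real.log y := by rw [Real.log_pow]; norm_num

lemma stmt11_rate_select (C R A T : ℝ) (hC : 0 < C) (hT : 2 ≤ T) (hA : 1/2 ≤ A)
    (M : ℕ) (hM : M = Nat.floor (Real.logb 2 (Real.sqrt T / 5)) + 1)
    (htriv : R ≤ 2 * T)
    (hbound : ∀ j : Fin M, R ≤ C * A / (min (1/5) ((2:ℝ)^(j:ℕ) / Real.sqrt T)) +
        14 * (min (1/5) ((2:ℝ)^(j:ℕ) / Real.sqrt T)) * T) :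
    R ≤ (C + 28) * Real.sqrt (T * A) := by
  have hT0 : (0:ℝ) < T := by linarith
  have hA0 : (0:ℝ) < A := by linarith
  have hsT : 0 < Real.sqrt T := Real.sqrt_pos.mpr hT0
  have hsA : 0 < Real.sqrt A := Real.sqrt_pos.mpr hA0
  have hsTA : Real.sqrt (T * A) = Real.sqrt T * Real.sqrt A := Real.sqrt_mul hT0.le A
  have hT2 : Real.sqrt T * Real.sqrt T = T := Real.mul_self_sqrt hT0.le
  have hA2 : Real.sqrt A * Real.sqrt A = A := Real.mul_self_sqrt hA0.le
  have hM1 : 1 ≤ M := by omega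
  by_cases hcase : T ≤ 100 * A
  · have h10 : Real.sqrt T ≤ 10 * Real.sqrt A := by
      calc Real.sqrt T ≤ Real.sqrt (100 * A) := Real.sqrt_le_sqrt hcase
        _ = 10 * Real.sqrt A := by
          rw [show (100:ℝ) * A = 10^2 * A by norm_num, Real.sqrt_mul (by positivity),
            Real.sqrt_sq (by norm_num)]
    calc R ≤ 2 * T := htriv
      _ = 2 * (Real.sqrt T * Real.sqrt T) := by rw [hT2]
      _ ≤ (C + 28) * Real.sqrt (T * A) := by
          rw [hsTA]; nlinarith [mul_pos hsT hsA]
  · push_neg at hcase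
    set β := Real.sqrt A / Real.sqrt T with hβdef
    have hβ0 : 0 < β := by positivity
    have hβT : β * T = Real.sqrt (T * A) := by
      rw [hsTA, hβdef, div_mul_eq_mul_div, div_eq_iff hsT.ne']
      linear_combination (-Real.sqrt A) * hT2
    have hbeta : β < 1/10 := by
      rw [hβdef, div_lt_iff₀ hsT]
      nlinarith
    have main : ∀ j : Fin M, β ≤ min (1/5) ((2:ℝ)^(j:ℕ) / Real.sqrt T) →
        min (1/5) ((2:ℝ)^(j:ℕ) / Real.sqrt T) ≤ 2 * β →
        R ≤ (C + 28) * Real.sqrt (T * A) := by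
      intro j h1 h2
      have hb := hbound j
      set η := min (1/5 : ℝ) ((2:ℝ)^(j:ℕ) / Real.sqrt T) with hη
      have hη0 : 0 < η := lt_of_lt_of_le hβ0 h1
      have t1 : C * A / η ≤ C * A / β := by
        apply div_le_div_of_nonneg_left (by positivity) hβ0 h1
      have t2 : C * A / β = C * Real.sqrt (T * A) := by
        rw [hβdef, hsTA]; field_simp
        linear_combination (-1 : ℝ) * hA2
      have t3 : 14 * η * T ≤ 28 * Real.sqrt (T * A) := by
        calc 14 * η * T ≤ 14 * (2*β) * T := by nlinarith
          _ = 28 * (β * T) := by ring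
          _ = 28 * Real.sqrt (T * A) := by rw [hβT]
      calc R ≤ C * A / η + 14 * η * T := hb
        _ ≤ C * Real.sqrt (T*A) + 28 * Real.sqrt (T*A) := by rw [t2] at t1; linarith
        _ = (C + 28) * Real.sqrt (T*A) := by ring
    by_cases hA1 : A ≤ 1
    · apply main ⟨0, by omega⟩
      · simp only [Fin.val_mk, pow_zero]
        have h1 : β ≤ 1 / Real.sqrt T := by
          rw [hβdef]; gcongr; exact Real.sqrt_le_one.mpr hA1
        exact le_min (by linarith) h1
      · simp only [Fin.val_mk, pow_zero]
        have hhalf : (1:ℝ)/2 ≤ Real.sqrt A := by nlinarith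
        have : 1 / Real.sqrt T ≤ 2 * β := by
          rw [hβdef, ← mul_div_assoc]
          gcongr
          linarith
        exact (min_le_right _ _).trans this
    · push_neg at hA1
      have hsA1 : 1 < Real.sqrt A := by
        nlinarith [Real.sqrt_lt_sqrt (by norm_num : (0:ℝ) ≤ 1) hA1, Real.sqrt_one]
      have hlb : 0 < Real.logb 2 (Real.sqrt A) := Real.logb_pos (by norm_num) hsA1
      set k := ⌈Real.logb 2 (Real.sqrt A)⌉₊ with hk
      have hk_low : Real.sqrt A ≤ (2:ℝ)^k := by
        have : (2:ℝ)^(Real.logb 2 (Real.sqrt A)) ≤ (2:ℝ)^((k:ℝ)) :=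
          (Real.rpow_le_rpow_left_iff (by norm_num : (1:ℝ) < 2)).mpr (Nat.le_ceil _)
        rwa [Real.rpow_logb (by norm_num) (by norm_num) hsA, Real.rpow_natCast] at this
      have hk_high : (2:ℝ)^k ≤ 2 * Real.sqrt A := by
        have h1 : (k:ℝ) ≤ Real.logb 2 (Real.sqrt A) + 1 := (Nat.ceil_lt_add_one hlb.le).le
        have : (2:ℝ)^((k:ℝ)) ≤ (2:ℝ)^(Real.logb 2 (Real.sqrt A) + 1) :=
          (Real.rpow_le_rpow_left_iff (by norm_num : (1:ℝ) < 2)).mpr h1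
        rwa [Real.rpow_add (by norm_num), Real.rpow_logb (by norm_num) (by norm_num) hsA,
          Real.rpow_natCast, Real.rpow_one, mul_comm] at this
      have hkM : k < M := by
        have h2k : (2:ℝ)^k < Real.sqrt T / 5 := by
          have : 2 * Real.sqrt A < Real.sqrt T / 5 := by
            rw [hβdef, div_lt_iff₀ hsT] at hbeta; nlinarith
          linarith
        have hkfl : (k:ℝ) ≤ Real.logb 2 (Real.sqrt T / 5) := by
          have := Real.logb_lt_logb (by norm_num : (1:ℝ) < 2) (by positivity) h2k
          rw [show Real.logb 2 ((2:ℝ)^k) = k by rw [Real.logb_pow]; simp] at this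
          linarith
        have := Nat.le_floor hkfl
        omega
      apply main ⟨k, hkM⟩
      · simp only [Fin.val_mk]
        refine le_min (by linarith) ?_
        rw [hβdef]; gcongr
      · simp only [Fin.val_mk]
        have : (2:ℝ)^k / Real.sqrt T ≤ 2 * β := by
          rw [hβdef, ← mul_div_assoc]
          gcongr
        exact (min_le_right _ _).trans this

end stmt11helpers

set_option maxHeartbeats 2000000 in
/-- Theorem 2, adversarial part.
For the parameter-free reduction (Algorithm 2) with `M = ⌊log₂(√T/5)⌋ + 1` copies
and rates `η_j = min{1/5, 2^{j-1}/√T}`, whose sub-routines satisfy Condition 3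
(static regret of `𝒜` with individual rates) and Condition 2 (switching regret of
each `𝒜_{ij}` with rate `η_j`) with constant `C`, the switching regret against any
benchmark with at most `S-1` switches and at most `n` distinct actions is at most
`C' √(T (S ln T + n ln(K ln T)))` for a constant `C'` depending only on `C`. -/
theorem stmt_11 (C : ℝ) (hC : 0 < C) :
    ∃ C' : ℝ, 0 < C' ∧
      ∀ (K T S n M : ℕ), 2 ≤ K → 2 ≤ T → 1 ≤ S → S ≤ T → 1 ≤ n →
      M = Nat.floor (Real.logb 2 (Real.sqrt T / 5)) + 1 →
      ∀ ηs : Fin M → ℝ,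
        (∀ j : Fin M, ηs j = min (1 / 5) ((2 : ℝ) ^ (j : ℕ) / Real.sqrt T)) →
      ∀ (ℓ : ℕ → Fin K → ℝ) (w : ℕ → Fin K × Fin M → ℝ)
        (z : ℕ → Fin K → Fin M → ℝ) (p r : ℕ → Fin K → ℝ)
        (c : ℕ → Fin K × Fin M → ℝ),
        (∀ t ∈ Finset.Icc 1 T, ∀ i, |ℓ t i| ≤ 1) →
        (∀ t ∈ Finset.Icc 1 T, (∀ q, 0 ≤ w t q) ∧ (∑ q, w t q) = 1) →
        (∀ t ∈ Finset.Icc 1 T, ∀ i j, 0 ≤ z t i j ∧ z t i j ≤ 1) →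
        (∀ t ∈ Finset.Icc 1 T, 0 < ∑ q : Fin K × Fin M, z t q.1 q.2 * w t q) →
        -- p_t(i) ∝ Σ_j z_t(i,j) w_t(i,j)
        (∀ t ∈ Finset.Icc 1 T, ∀ i,
          p t i = (∑ j, z t i j * w t (i, j)) /
            ∑ q : Fin K × Fin M, z t q.1 q.2 * w t q) →
        (∀ t ∈ Finset.Icc 1 T, ∀ i, r t i = (∑ j, p t j * ℓ t j) - ℓ t i) →
        (∀ t ∈ Finset.Icc 1 T, ∀ i j, c t (i, j) = -(z t i j * r t i)) →
        -- Condition 3 for 𝒜 with individual learning rates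
        (∀ i : Fin K, ∀ j : Fin M,
          (∑ t ∈ Finset.Icc 1 T, ∑ q, w t q * c t q) -
              (∑ t ∈ Finset.Icc 1 T, c t (i, j)) ≤
            C * Real.log ((K : ℝ) * (M : ℝ)) / ηs j +
              ηs j * ∑ t ∈ Finset.Icc 1 T, |(∑ q, w t q * c t q) - c t (i, j)|) →
        -- Condition 2 for each 𝒜_{ij} on losses h_t = (0, 5 η_j |r_t(i)| - r_t(i))
        (∀ i : Fin K, ∀ j : Fin M, ∀ S' : ℕ, 1 ≤ S' → S' ≤ T → ∀ b : ℕ → Bool,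
          (∑ t ∈ Finset.Icc 2 T, if b t = b (t - 1) then 0 else 1) ≤ S' - 1 →
          ((∑ t ∈ Finset.Icc 1 T,
              ((1 - z t i j) * 0 + z t i j * (5 * ηs j * |r t i| - r t i))) -
              (∑ t ∈ Finset.Icc 1 T,
                if b t then 5 * ηs j * |r t i| - r t i else 0) ≤
              C * S' * Real.log T / ηs j +
                ηs j * ∑ t ∈ Finset.Icc 1 T,
                  |if b t then 5 * ηs j * |r t i| - r t i else (0 : ℝ)|) ∨
          ((∑ t ∈ Finset.Icc 1 T,
              ((1 - z t i j) * 0 + z t i j * (5 * ηs j * |r t i| - r t i))) -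
              (∑ t ∈ Finset.Icc 1 T,
                if b t then 5 * ηs j * |r t i| - r t i else 0) ≤
              C * S' * Real.log T / ηs j +
                ηs j * ∑ t ∈ Finset.Icc 1 T,
                  |((1 - z t i j) * 0 + z t i j * (5 * ηs j * |r t i| - r t i)) -
                    (if b t then 5 * ηs j * |r t i| - r t i else 0)|) ∨
          ((∑ t ∈ Finset.Icc 1 T,
              ((1 - z t i j) * 0 + z t i j * (5 * ηs j * |r t i| - r t i))) -
              (∑ t ∈ Finset.Icc 1 T,
                if b t then 5 * ηs j * |r t i| - r t i else 0) ≤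
              C * S' * Real.log T / ηs j +
                ηs j * ∑ t ∈ Finset.Icc 1 T,
                  ((1 - z t i j) * |(0 : ℝ)| +
                    z t i j * |5 * ηs j * |r t i| - r t i|))) →
        ∀ idx : ℕ → Fin K,
          (∑ t ∈ Finset.Icc 2 T, if idx t = idx (t - 1) then 0 else 1) ≤ S - 1 →
          ((Finset.Icc 1 T).image idx).card ≤ n →
          (∑ t ∈ Finset.Icc 1 T, r t (idx t)) ≤
            C' * Real.sqrt ((T : ℝ) *
              ((S : ℝ) * Real.log T +
                (n : ℝ) * Real.log ((K : ℝ) * Real.log T))) := by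
  refine ⟨2 * C + 56, by linarith, ?_⟩
  intro K T S n M hK hT hS1 hST hn hM ηs hηs ℓ w z p r c hℓ hw hz hD hp hr hc cond3 cond2 idx hsw hcard
  -- |r| ≤ 2
  have hr2 : ∀ t ∈ Finset.Icc 1 T, ∀ i, |r t i| ≤ 2 := by
    intro t ht i
    have hp0 : ∀ i', 0 ≤ p t i' := by
      intro i'
      rw [hp t ht i']
      apply div_nonneg ?_ (hD t ht).le
      apply Finset.sum_nonneg
      intro j _
      exact mul_nonneg (hz t ht i' j).1 ((hw t ht).1 _)
    have hp1 : ∑ i', p t i' = 1 := by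
      calc ∑ i', p t i'
          = ∑ i', (∑ j', z t i' j' * w t (i', j')) /
              (∑ q : Fin K × Fin M, z t q.1 q.2 * w t q) :=
            Finset.sum_congr rfl fun i' _ => hp t ht i'
        _ = (∑ i', ∑ j', z t i' j' * w t (i', j')) /
              (∑ q : Fin K × Fin M, z t q.1 q.2 * w t q) := by rw [Finset.sum_div]
        _ = (∑ q : Fin K × Fin M, z t q.1 q.2 * w t q) /
              (∑ q : Fin K × Fin M, z t q.1 q.2 * w t q) := by
            rw [Fintype.sum_prod_type]
        _ = 1 := div_self (hD t ht).ne'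
    have hPl : |∑ j', p t j' * ℓ t j'| ≤ 1 := by
      calc |∑ j', p t j' * ℓ t j'| ≤ ∑ j', |p t j' * ℓ t j'| := Finset.abs_sum_le_sum_abs _ _
        _ ≤ ∑ j', p t j' := by
            apply Finset.sum_le_sum
            intro j' _
            rw [abs_mul, abs_of_nonneg (hp0 j')]
            exact mul_le_of_le_one_right (hp0 j') (hℓ t ht j')
        _ = 1 := hp1
    rw [hr t ht i]
    have := hℓ t ht i
    have h1 := abs_sub (∑ j', p t j' * ℓ t j') (ℓ t i)
    linarith
  -- <w_t, c_t> = 0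
  have hwc : ∀ t ∈ Finset.Icc 1 T, (∑ q, w t q * c t q) = 0 := by
    intro t ht
    have hp0 : ∀ i', 0 ≤ p t i' := by
      intro i'
      rw [hp t ht i']
      apply div_nonneg ?_ (hD t ht).le
      apply Finset.sum_nonneg
      intro j _
      exact mul_nonneg (hz t ht i' j).1 ((hw t ht).1 _)
    have hp1 : ∑ i', p t i' = 1 := by
      calc ∑ i', p t i'
          = ∑ i', (∑ j', z t i' j' * w t (i', j')) /
              (∑ q : Fin K × Fin M, z t q.1 q.2 * w t q) :=
            Finset.sum_congr rfl fun i' _ => hp t ht i'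
        _ = (∑ i', ∑ j', z t i' j' * w t (i', j')) /
              (∑ q : Fin K × Fin M, z t q.1 q.2 * w t q) := by rw [Finset.sum_div]
        _ = (∑ q : Fin K × Fin M, z t q.1 q.2 * w t q) /
              (∑ q : Fin K × Fin M, z t q.1 q.2 * w t q) := by
            rw [Fintype.sum_prod_type]
        _ = 1 := div_self (hD t ht).ne'
    have hpr0 : ∑ i', p t i' * r t i' = 0 := by
      calc ∑ i', p t i' * r t i'
          = ∑ i', (p t i' * (∑ j', p t j' * ℓ t j') - p t i' * ℓ t i') :=
            Finset.sum_congr rfl fun i' _ => by rw [hr t ht i']; ring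
        _ = (∑ i', p t i') * (∑ j', p t j' * ℓ t j') - ∑ i', p t i' * ℓ t i' := by
            rw [Finset.sum_sub_distrib, ← Finset.sum_mul]
        _ = 0 := by rw [hp1]; ring
    have hnum : ∀ i', ∑ j', z t i' j' * w t (i', j') =
        p t i' * (∑ q : Fin K × Fin M, z t q.1 q.2 * w t q) := by
      intro i'
      rw [hp t ht i', div_mul_cancel₀]
      exact (hD t ht).ne'
    calc ∑ q : Fin K × Fin M, w t q * c t q
        = ∑ i', ∑ j', w t (i', j') * c t (i', j') := Fintype.sum_prod_type _
      _ = ∑ i', -((∑ j', z t i' j' * w t (i', j')) * r t i') := by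
          apply Finset.sum_congr rfl
          intro i' _
          rw [Finset.sum_mul, ← Finset.sum_neg_distrib]
          apply Finset.sum_congr rfl
          intro j' _
          rw [hc t ht i' j']
          ring
      _ = ∑ i', -((p t i' * (∑ q : Fin K × Fin M, z t q.1 q.2 * w t q)) * r t i') :=
          Finset.sum_congr rfl fun i' _ => by rw [hnum i']
      _ = -((∑ q : Fin K × Fin M, z t q.1 q.2 * w t q) * ∑ i', p t i' * r t i') := by
          rw [Finset.mul_sum, ← Finset.sum_neg_distrib]
          apply Finset.sum_congr rfl
          intro i' _
          ring
      _ = 0 := by rw [hpr0]; ring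
  -- switch counts per action
  set σ : Fin K → ℕ := fun i => ∑ t ∈ Finset.Icc 2 T,
    if (decide (idx t = i)) = (decide (idx (t-1) = i)) then 0 else 1 with hσdef
  have hσT : ∀ i, σ i ≤ T - 1 := by
    intro i
    calc σ i ≤ ∑ t ∈ Finset.Icc 2 T, 1 := by
          apply Finset.sum_le_sum
          intro t _
          split <;> omega
      _ = T - 1 := by rw [Finset.sum_const, smul_eq_mul, mul_one, Nat.card_Icc]; omega
  -- key per-action, per-rate bound
  have key : ∀ (i : Fin K) (j : Fin M),
      (∑ t ∈ Finset.Icc 1 T, if idx t = i then r t i else 0) ≤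
        C * Real.log ((K:ℝ)*(M:ℝ)) / ηs j + C * ((σ i : ℝ) + 1) * Real.log T / ηs j +
        7 * ηs j * (∑ t ∈ Finset.Icc 1 T, if idx t = i then |r t i| else 0) := by
    intro i j
    have hη0 : 0 < ηs j := by
      rw [hηs j]
      apply lt_min (by norm_num)
      have : (0:ℝ) < Real.sqrt T := Real.sqrt_pos.mpr (by positivity)
      positivity
    have hη5 : ηs j ≤ 1/5 := by rw [hηs j]; exact min_le_left _ _
    have hX2 : ∀ t ∈ Finset.Icc 1 T, |5 * ηs j * |r t i| - r t i| ≤ 2 * |r t i| := by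
      intro t ht
      rw [abs_sub_le_iff]
      constructor <;>
        nlinarith [abs_nonneg (r t i), neg_abs_le (r t i), le_abs_self (r t i)]
    set ZR := ∑ t ∈ Finset.Icc 1 T, z t i j * r t i with hZR
    set ZA := ∑ t ∈ Finset.Icc 1 T, z t i j * |r t i| with hZA
    set IR := ∑ t ∈ Finset.Icc 1 T, (if idx t = i then r t i else 0) with hIR
    set IA := ∑ t ∈ Finset.Icc 1 T, (if idx t = i then |r t i| else 0) with hIA
    have hZA0 : 0 ≤ ZA := by
      apply Finset.sum_nonneg
      intro t ht
      exact mul_nonneg (hz t ht i j).1 (abs_nonneg _)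
    have hIA0 : 0 ≤ IA := by
      apply Finset.sum_nonneg
      intro t _
      split <;> simp [abs_nonneg]
    -- condition 3
    have key3 : ZR ≤ C * Real.log ((K:ℝ)*(M:ℝ)) / ηs j + ηs j * ZA := by
      have h3 := cond3 i j
      have e0 : (∑ t ∈ Finset.Icc 1 T, ∑ q, w t q * c t q) = 0 :=
        Finset.sum_eq_zero fun t ht => hwc t ht
      have e1 : (∑ t ∈ Finset.Icc 1 T, c t (i, j)) = -ZR := by
        rw [hZR, ← Finset.sum_neg_distrib]
        exact Finset.sum_congr rfl fun t ht => by rw [hc t ht i j]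
      have e2 : (∑ t ∈ Finset.Icc 1 T, |(∑ q, w t q * c t q) - c t (i, j)|) = ZA := by
        apply Finset.sum_congr rfl
        intro t ht
        rw [hwc t ht, hc t ht i j, zero_sub, neg_neg, abs_mul,
          abs_of_nonneg (hz t ht i j).1]
      rw [e0, e1, e2] at h3
      linarith
    -- condition 2
    have h2 := cond2 i j (σ i + 1) (by omega) (by have := hσT i; omega)
      (fun t => decide (idx t = i))
      (by simp only [Nat.add_sub_cancel, hσdef]; exact le_of_eq rfl)
    simp only [decide_eq_true_eq] at h2
    -- rewrite the common parts
    have eL : (∑ t ∈ Finset.Icc 1 T,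
        ((1 - z t i j) * 0 + z t i j * (5 * ηs j * |r t i| - r t i)))
        = 5 * ηs j * ZA - ZR := by
      rw [hZA, hZR, Finset.mul_sum, ← Finset.sum_sub_distrib]
      apply Finset.sum_congr rfl
      intro t _
      ring
    have eB : (∑ t ∈ Finset.Icc 1 T,
        if idx t = i then 5 * ηs j * |r t i| - r t i else 0)
        = 5 * ηs j * IA - IR := by
      rw [hIA, hIR, Finset.mul_sum, ← Finset.sum_sub_distrib]
      apply Finset.sum_congr rfl
      intro t _
      by_cases h : idx t = i <;> simp [h]
    have key2 : (5 * ηs j * ZA - ZR) - (5 * ηs j * IA - IR) ≤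
        C * ((σ i : ℝ) + 1) * Real.log T / ηs j + ηs j * (2 * ZA + 2 * IA) := by
      have ecast : ((σ i + 1 : ℕ) : ℝ) = (σ i : ℝ) + 1 := by push_cast; ring
      have hE : ∀ (E : ℕ → ℝ), (∑ t ∈ Finset.Icc 1 T, E t) ≤ 2 * ZA + 2 * IA →
          (5 * ηs j * ZA - ZR) - (5 * ηs j * IA - IR) ≤
            C * ((σ i + 1 : ℕ) : ℝ) * Real.log T / ηs j +
              ηs j * (∑ t ∈ Finset.Icc 1 T, E t) →
          (5 * ηs j * ZA - ZR) - (5 * ηs j * IA - IR) ≤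
            C * ((σ i : ℝ) + 1) * Real.log T / ηs j + ηs j * (2 * ZA + 2 * IA) := by
        intro E hEb hle
        rw [ecast] at hle
        have := mul_le_mul_of_nonneg_left hEb hη0.le
        linarith
      have hsum_le : ∀ (f : ℕ → ℝ),
          (∀ t ∈ Finset.Icc 1 T, f t ≤ 2 * (z t i j * |r t i|) +
            2 * (if idx t = i then |r t i| else 0)) →
          (∑ t ∈ Finset.Icc 1 T, f t) ≤ 2 * ZA + 2 * IA := by
        intro f hf
        calc ∑ t ∈ Finset.Icc 1 T, f t
            ≤ ∑ t ∈ Finset.Icc 1 T, (2 * (z t i j * |r t i|) +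
                2 * (if idx t = i then |r t i| else 0)) := Finset.sum_le_sum hf
          _ = 2 * ZA + 2 * IA := by
              rw [Finset.sum_add_distrib, hZA, hIA, ← Finset.mul_sum, ← Finset.mul_sum]
      rcases h2 with h2 | h2 | h2
      · rw [eL, eB] at h2
        refine hE _ ?_ h2
        apply hsum_le
        intro t ht
        have hz01 := hz t ht i j
        have hzr : 0 ≤ z t i j * |r t i| := mul_nonneg hz01.1 (abs_nonneg _)
        by_cases h : idx t = i
        · simp only [h, if_pos, if_true]
          have := hX2 t ht
          linarith
        · simp only [h, if_neg, if_false, abs_zero]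
          linarith
      · rw [eL, eB] at h2
        refine hE _ ?_ h2
        apply hsum_le
        intro t ht
        have hz01 := hz t ht i j
        have hzr : 0 ≤ z t i j * |r t i| := mul_nonneg hz01.1 (abs_nonneg _)
        have hXa := hX2 t ht
        have e1 : (1 - z t i j) * 0 + z t i j * (5 * ηs j * |r t i| - r t i)
            = z t i j * (5 * ηs j * |r t i| - r t i) := by ring
        rw [e1]
        by_cases h : idx t = i
        · simp only [h, if_pos, if_true]
          have e2 : |z t i j * (5 * ηs j * |r t i| - r t i) -
              (5 * ηs j * |r t i| - r t i)| =
              (1 - z t i j) * |5 * ηs j * |r t i| - r t i| := by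
            rw [show z t i j * (5 * ηs j * |r t i| - r t i) -
                (5 * ηs j * |r t i| - r t i) =
                -((1 - z t i j) * (5 * ηs j * |r t i| - r t i)) by ring,
              abs_neg, abs_mul, abs_of_nonneg (by linarith : (0:ℝ) ≤ 1 - z t i j)]
          rw [e2]
          have h3 : (1 - z t i j) * |5 * ηs j * |r t i| - r t i| ≤
              |5 * ηs j * |r t i| - r t i| := by
            nlinarith [abs_nonneg (5 * ηs j * |r t i| - r t i)]
          linarith
        · simp only [h, if_neg, if_false, sub_zero]
          rw [abs_mul, abs_of_nonneg hz01.1]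
          have : z t i j * |5 * ηs j * |r t i| - r t i| ≤ z t i j * (2 * |r t i|) :=
            mul_le_mul_of_nonneg_left hXa hz01.1
          linarith
      · rw [eL, eB] at h2
        refine hE _ ?_ h2
        apply hsum_le
        intro t ht
        have hz01 := hz t ht i j
        have hXa := hX2 t ht
        simp only [abs_zero, mul_zero, zero_add]
        have : z t i j * |5 * ηs j * |r t i| - r t i| ≤ z t i j * (2 * |r t i|) :=
          mul_le_mul_of_nonneg_left hXa hz01.1
        have hite : (0:ℝ) ≤ 2 * (if idx t = i then |r t i| else 0) := by
          split <;> simp [abs_nonneg]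
        linarith
    rw [hIR]
    nlinarith [key3, key2, mul_nonneg hη0.le hZA0]
  -- sums over the image
  set img := (Finset.Icc 1 T).image idx with himg
  have hTcard : (Finset.Icc 1 T).card = T := by rw [Nat.card_Icc]; omega
  have hsum_r : (∑ i ∈ img, ∑ t ∈ Finset.Icc 1 T, if idx t = i then r t i else 0)
      = ∑ t ∈ Finset.Icc 1 T, r t (idx t) := by
    rw [Finset.sum_comm]
    apply Finset.sum_congr rfl
    intro t ht
    rw [Finset.sum_ite_eq img (idx t) (fun i' => r t i'),
      if_pos (Finset.mem_image_of_mem idx ht)]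
  have hsum_abs : (∑ i ∈ img, ∑ t ∈ Finset.Icc 1 T, if idx t = i then |r t i| else 0)
      ≤ 2 * (T:ℝ) := by
    have e : (∑ i ∈ img, ∑ t ∈ Finset.Icc 1 T, if idx t = i then |r t i| else 0)
        = ∑ t ∈ Finset.Icc 1 T, |r t (idx t)| := by
      rw [Finset.sum_comm]
      apply Finset.sum_congr rfl
      intro t ht
      rw [Finset.sum_ite_eq img (idx t) (fun i' => |r t i'|),
        if_pos (Finset.mem_image_of_mem idx ht)]
    rw [e]
    calc ∑ t ∈ Finset.Icc 1 T, |r t (idx t)| ≤ ∑ t ∈ Finset.Icc 1 T, 2 :=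
          Finset.sum_le_sum fun t ht => hr2 t ht (idx t)
      _ = 2 * (T:ℝ) := by rw [Finset.sum_const, hTcard, nsmul_eq_mul]; ring
  -- total switch count
  have hσsum : (∑ i ∈ img, σ i) ≤ 2 * (S - 1) := by
    have step : ∀ t ∈ Finset.Icc 2 T,
        (∑ i ∈ img, if (decide (idx t = i)) = (decide (idx (t-1) = i)) then 0 else 1)
          ≤ 2 * (if idx t = idx (t-1) then 0 else 1) := by
      intro t _
      by_cases he : idx t = idx (t-1)
      · simp [he]
      · have hpt : ∀ i' ∈ img,
            (if (decide (idx t = i')) = (decide (idx (t-1) = i')) then 0 else 1)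
              ≤ (if i' = idx t then 1 else 0) + (if i' = idx (t-1) then 1 else 0) := by
          intro i' _
          by_cases h1 : idx t = i'
          · by_cases h2 : idx (t-1) = i'
            · exact absurd (h1.trans h2.symm) he
            · rw [if_neg (by simp [h1, h2]), if_pos h1.symm]
              split <;> omega
          · by_cases h2 : idx (t-1) = i'
            · rw [if_neg (by simp [h1, h2]), if_pos h2.symm]
              split <;> omega
            · rw [if_pos (by simp [h1, h2])]
              exact Nat.zero_le _
        calc (∑ i ∈ img, if (decide (idx t = i)) = (decide (idx (t-1) = i)) then 0 else 1)
            ≤ ∑ i ∈ img, ((if i = idx t then 1 else 0) + (if i = idx (t-1) then 1 else 0)) :=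
              Finset.sum_le_sum hpt
          _ = (∑ i ∈ img, if i = idx t then 1 else 0) +
              (∑ i ∈ img, if i = idx (t-1) then 1 else 0) := Finset.sum_add_distrib
          _ ≤ 2 * (if idx t = idx (t-1) then 0 else 1) := by
              rw [Finset.sum_ite_eq' img (idx t) (fun _ => 1),
                Finset.sum_ite_eq' img (idx (t-1)) (fun _ => 1)]
              rw [if_neg he]
              split <;> split <;> omega
    calc (∑ i ∈ img, σ i)
        = ∑ t ∈ Finset.Icc 2 T, ∑ i ∈ img,
            (if (decide (idx t = i)) = (decide (idx (t-1) = i)) then 0 else 1) :=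
          Finset.sum_comm
      _ ≤ ∑ t ∈ Finset.Icc 2 T, 2 * (if idx t = idx (t-1) then 0 else 1) :=
          Finset.sum_le_sum step
      _ = 2 * ∑ t ∈ Finset.Icc 2 T, (if idx t = idx (t-1) then 0 else 1) :=
          (Finset.mul_sum _ _ _).symm
      _ ≤ 2 * (S - 1) := Nat.mul_le_mul_left 2 hsw
  have hone : ∀ i ∈ img, σ i = 0 → i = idx 1 := by
    intro i hi h0
    have h0' : (∑ t ∈ Finset.Icc 2 T,
        if (decide (idx t = i)) = (decide (idx (t-1) = i)) then 0 else 1) = 0 := h0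
    have hz' : ∀ t ∈ Finset.Icc 2 T, (decide (idx t = i)) = (decide (idx (t-1) = i)) := by
      intro t ht
      have := Finset.sum_eq_zero_iff.mp h0' t ht
      by_contra hne
      simp [hne] at this
    have hconst := stmt11_no_switch (fun t => decide (idx t = i)) T hz'
    obtain ⟨t0, ht0, hidx⟩ := Finset.mem_image.mp hi
    have hmem := Finset.mem_Icc.mp ht0
    have h1' := hconst t0 hmem.1 hmem.2
    simp only [decide_eq_decide] at h1'
    exact (h1'.mp hidx).symm
  have hcard2 : img.card ≤ (∑ i ∈ img, σ i) + 1 := by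
    have hpt : ∀ i ∈ img, 1 ≤ σ i + (if i = idx 1 then 1 else 0) := by
      intro i hi
      by_cases h0 : σ i = 0
      · rw [if_pos (hone i hi h0)]; omega
      · omega
    calc img.card = ∑ _i ∈ img, 1 := by rw [Finset.card_eq_sum_ones]
      _ ≤ ∑ i ∈ img, (σ i + if i = idx 1 then 1 else 0) := Finset.sum_le_sum hpt
      _ = (∑ i ∈ img, σ i) + (∑ i ∈ img, if i = idx 1 then 1 else 0) :=
          Finset.sum_add_distrib
      _ ≤ (∑ i ∈ img, σ i) + 1 := by
          have : (∑ i ∈ img, if i = idx 1 then 1 else 0) ≤ 1 := by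
            rw [Finset.sum_ite_eq' img (idx 1) (fun _ => 1)]
            split <;> omega
          omega
  have hNat : (∑ i ∈ img, (σ i + 1)) ≤ 4 * S := by
    rw [Finset.sum_add_distrib, Finset.sum_const, smul_eq_mul, mul_one]
    omega
  -- positivity facts
  have hT2r : (2:ℝ) ≤ (T:ℝ) := by exact_mod_cast hT
  have hlnT : (0:ℝ) < Real.log T := Real.log_pos (by linarith)
  have hM1 : 1 ≤ M := by omega
  have hKM2 : (2:ℝ) ≤ (K:ℝ) * (M:ℝ) := by
    have h1 : (2:ℝ) ≤ (K:ℝ) := by exact_mod_cast hK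
    have h2 : (1:ℝ) ≤ (M:ℝ) := by exact_mod_cast hM1
    nlinarith
  have hlnKM : Real.log 2 ≤ Real.log ((K:ℝ) * (M:ℝ)) :=
    Real.log_le_log (by norm_num) hKM2
  have hlog2 : (0.6931471803 : ℝ) < Real.log 2 := Real.log_two_gt_d9
  set A := (n:ℝ) * Real.log ((K:ℝ) * (M:ℝ)) + 4 * (S:ℝ) * Real.log T with hA
  have hbound : ∀ j : Fin M, (∑ t ∈ Finset.Icc 1 T, r t (idx t)) ≤
      C * A / ηs j + 14 * ηs j * (T:ℝ) := by
    intro j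
    have hη0 : 0 < ηs j := by
      rw [hηs j]
      apply lt_min (by norm_num)
      have : (0:ℝ) < Real.sqrt T := Real.sqrt_pos.mpr (by positivity)
      positivity
    have hc1 : (0:ℝ) ≤ C * Real.log ((K:ℝ) * (M:ℝ)) / ηs j := by
      apply div_nonneg ?_ hη0.le
      apply mul_nonneg hC.le
      linarith
    have hc2 : (0:ℝ) ≤ C * Real.log T / ηs j := by
      apply div_nonneg ?_ hη0.le
      apply mul_nonneg hC.le hlnT.le
    calc (∑ t ∈ Finset.Icc 1 T, r t (idx t))
        = ∑ i ∈ img, ∑ t ∈ Finset.Icc 1 T, (if idx t = i then r t i else 0) := hsum_r.symm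
      _ ≤ ∑ i ∈ img, (C * Real.log ((K:ℝ)*(M:ℝ)) / ηs j +
            C * ((σ i : ℝ) + 1) * Real.log T / ηs j +
            7 * ηs j * (∑ t ∈ Finset.Icc 1 T, if idx t = i then |r t i| else 0)) :=
          Finset.sum_le_sum fun i _ => key i j
      _ = (img.card : ℝ) * (C * Real.log ((K:ℝ)*(M:ℝ)) / ηs j) +
          (C * Real.log T / ηs j) * (∑ i ∈ img, ((σ i : ℝ) + 1)) +
          7 * ηs j * (∑ i ∈ img, ∑ t ∈ Finset.Icc 1 T,
            if idx t = i then |r t i| else 0) := by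
          have e2 : (∑ i ∈ img, C * ((σ i : ℝ) + 1) * Real.log T / ηs j)
              = (C * Real.log T / ηs j) * (∑ i ∈ img, ((σ i : ℝ) + 1)) := by
            rw [Finset.mul_sum]
            apply Finset.sum_congr rfl
            intro i _
            ring
          rw [Finset.sum_add_distrib, Finset.sum_add_distrib, Finset.sum_const,
            nsmul_eq_mul, e2, ← Finset.mul_sum]
      _ ≤ (n:ℝ) * (C * Real.log ((K:ℝ)*(M:ℝ)) / ηs j) +
          (C * Real.log T / ηs j) * (4 * (S:ℝ)) +
          7 * ηs j * (2 * (T:ℝ)) := by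
          have c1 : ((img.card : ℕ):ℝ) ≤ (n:ℝ) := by exact_mod_cast hcard
          have c2 : (∑ i ∈ img, ((σ i : ℝ) + 1)) ≤ 4 * (S:ℝ) := by
            have hc : ((∑ i ∈ img, (σ i + 1) : ℕ) : ℝ) ≤ ((4*S : ℕ):ℝ) := by
              exact_mod_cast hNat
            push_cast at hc
            exact hc
          have t1 := mul_le_mul_of_nonneg_right c1 hc1
          have t2 := mul_le_mul_of_nonneg_left c2 hc2
          have t3 := mul_le_mul_of_nonneg_left hsum_abs
            (by positivity : (0:ℝ) ≤ 7 * ηs j)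
          linarith
      _ = C * A / ηs j + 14 * ηs j * (T:ℝ) := by
          rw [hA]
          field_simp
          ring
  have htriv : (∑ t ∈ Finset.Icc 1 T, r t (idx t)) ≤ 2 * (T:ℝ) := by
    calc (∑ t ∈ Finset.Icc 1 T, r t (idx t)) ≤ ∑ t ∈ Finset.Icc 1 T, 2 := by
          apply Finset.sum_le_sum
          intro t ht
          have h1 := hr2 t ht (idx t)
          have h2 := le_abs_self (r t (idx t))
          linarith
      _ = 2 * (T:ℝ) := by rw [Finset.sum_const, hTcard, nsmul_eq_mul]; ring
  have hA_half : 1/2 ≤ A := by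
    rw [hA]
    have h1 : (1:ℝ) ≤ (n:ℝ) := by exact_mod_cast hn
    have h2 : (0:ℝ) ≤ (S:ℝ) := by positivity
    nlinarith [hlnT.le]
  have hrs := stmt11_rate_select C (∑ t ∈ Finset.Icc 1 T, r t (idx t)) A (T:ℝ)
    hC hT2r hA_half M hM htriv (fun j => by
      have h := hbound j
      rwa [hηs j] at h)
  set A' := (S:ℝ) * Real.log T + (n:ℝ) * Real.log ((K:ℝ) * Real.log T) with hA'
  have hMle : (M:ℝ) ≤ 2 * Real.log T := by
    have := stmt11_M_le_twolog T hT
    rw [← hM] at this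
    exact this
  have hlog4 := stmt11_logKM_le K T M hK hT hM1 hMle
  have hA4 : A ≤ 4 * A' := by
    rw [hA, hA']
    have hn0 : (0:ℝ) ≤ (n:ℝ) := by positivity
    nlinarith [mul_le_mul_of_nonneg_left hlog4 hn0]
  have hTA : Real.sqrt ((T:ℝ) * A) ≤ 2 * Real.sqrt ((T:ℝ) * A') := by
    calc Real.sqrt ((T:ℝ) * A) ≤ Real.sqrt ((T:ℝ) * (4 * A')) := by
          apply Real.sqrt_le_sqrt
          have hT0 : (0:ℝ) ≤ (T:ℝ) := by positivity
          nlinarith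
      _ = 2 * Real.sqrt ((T:ℝ) * A') := by
          rw [show (T:ℝ) * (4*A') = 2^2 * ((T:ℝ) * A') by ring,
            Real.sqrt_mul (by positivity), Real.sqrt_sq (by norm_num)]
  calc (∑ t ∈ Finset.Icc 1 T, r t (idx t)) ≤ (C + 28) * Real.sqrt ((T:ℝ) * A) := hrs
    _ ≤ (C + 28) * (2 * Real.sqrt ((T:ℝ) * A')) :=
        mul_le_mul_of_nonneg_left hTA (by linarith)
    _ = (2*C + 56) * Real.sqrt ((T:ℝ) * A') := by ring
end

section
/- Under the setup of Algorithm 2 (with M = ⌊log₂(√T/5)⌋ + 1, η_j = min{1/5, 2^{j−1}/√T}, w_t ∈ Δ_{KM} satisfying Condition 3 with constant C for the losses c_t(i,j) = −z_t(i,j)r_t(i), and for every (i,j) the sequence (1 − z_t(i,j), z_t(i,j)) satisfying Condition 2 with constant C and parameter η_j for the losses (0, 5η_j|r_t(i)| − r_t(i)), where p_t(i) ∝ Σ_j z_t(i,j)w_t(i,j) and r_t(i) = ⟨p_t, ℓ_t⟩ − ℓ_t(i)), there is a constant C' depending only on C such that for every benchmark sequence i_1,…,i_T ∈ [K] and every action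 i appearing in it: Σ_{t : i_t = i} r_t(i) ≤ C'·(√((S_i ln T + ln(KM))·Σ_{t : i_t = i}|r_t(i)|) + S_i ln T + ln(KM)), where S_i = 1 + Σ_{t=2}^T 1{(i_{t−1}=i and i_t≠i) or (i_{t−1}≠i and i_t=i)}. -/
set_option maxHeartbeats 1000000


lemma grid_low {x : ℝ} (hx : 1 ≤ x) :
    (2:ℝ) ^ (Nat.floor (Real.logb 2 x)) ≤ x := by
  have hx0 : 0 < x := lt_of_lt_of_le one_pos hx
  have hy : 0 ≤ Real.logb 2 x := Real.logb_nonneg one_lt_two hx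
  have h1 : ((Nat.floor (Real.logb 2 x) : ℝ)) ≤ Real.logb 2 x := Nat.floor_le hy
  calc (2:ℝ) ^ (Nat.floor (Real.logb 2 x)) = (2:ℝ) ^ ((Nat.floor (Real.logb 2 x) : ℝ)) := by
        rw [Real.rpow_natCast]
    _ ≤ (2:ℝ) ^ (Real.logb 2 x) := by
        exact Real.rpow_le_rpow_of_exponent_le (by norm_num) h1
    _ = x := Real.rpow_logb (by norm_num) (by norm_num) hx0

lemma grid_high {x : ℝ} (hx : 0 < x) :
    x < (2:ℝ) ^ (Nat.floor (Real.logb 2 x) + 1) := by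
  have h1 : Real.logb 2 x < (Nat.floor (Real.logb 2 x) : ℝ) + 1 := Nat.lt_floor_add_one _
  calc x = (2:ℝ) ^ (Real.logb 2 x) := (Real.rpow_logb (by norm_num) (by norm_num) hx).symm
    _ < (2:ℝ) ^ (((Nat.floor (Real.logb 2 x) : ℝ)) + 1) := by
        exact Real.rpow_lt_rpow_of_exponent_lt (by norm_num) h1
    _ = (2:ℝ) ^ (Nat.floor (Real.logb 2 x) + 1) := by
        rw [← Real.rpow_natCast]; push_cast; ring_nf

lemma grid_top {T : ℕ} (hT : 2 ≤ T) :
    Real.sqrt T / 10 ≤ (2:ℝ) ^ (Nat.floor (Real.logb 2 (Real.sqrt T / 5))) := by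
  set s := Real.sqrt T with hs
  have hs0 : 0 < s := Real.sqrt_pos.mpr (by positivity)
  by_cases h : 1 ≤ s / 5
  · have h1 : (s/5)/2 ≤ (2:ℝ) ^ (Nat.floor (Real.logb 2 (s/5))) := by
      have := grid_high (x := s/5) (by linarith)
      have h2 : (2:ℝ) ^ (Nat.floor (Real.logb 2 (s/5)) + 1) =
          2 * (2:ℝ) ^ (Nat.floor (Real.logb 2 (s/5))) := by ring
      nlinarith [this, h2]
    nlinarith
  · push_neg at h
    have : s / 10 < 1 := by linarith
    have h2 : (1:ℝ) ≤ (2:ℝ) ^ (Nat.floor (Real.logb 2 (s/5))) := one_le_pow₀ (by norm_num)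
    linarith

lemma grid_opt (C L V R : ℝ) (hC : 0 < C) (T M : ℕ) (hT : 2 ≤ T)
    (hM : M = Nat.floor (Real.logb 2 (Real.sqrt T / 5)) + 1)
    (ηs : Fin M → ℝ)
    (hηs : ∀ j : Fin M, ηs j = min (1/5) ((2:ℝ)^(j:ℕ) / Real.sqrt T))
    (hL : Real.log 2 ≤ L) (hV0 : 0 ≤ V) (hVT : V ≤ 2*T)
    (key : ∀ j : Fin M, R ≤ C*L/ηs j + 7 * ηs j * V) :
    R ≤ 50*(C+1)*(Real.sqrt (L*V) + L) := by
  have hT0 : (0:ℝ) < T := by positivity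
  have hst0 : 0 < Real.sqrt T := Real.sqrt_pos.mpr hT0
  have hTst : Real.sqrt T ^ 2 = (T:ℝ) := Real.sq_sqrt (by positivity)
  have hlog2 : (0.6931471803:ℝ) < Real.log 2 := Real.log_two_gt_d9
  have hL0 : 0 < L := by linarith
  have hCL0 : 0 < C * L := mul_pos hC hL0
  have hsq : 0 ≤ Real.sqrt (L*V) := Real.sqrt_nonneg _
  have hηpos : ∀ j : Fin M, 0 < ηs j := by
    intro j; rw [hηs j]; exact lt_min (by norm_num) (by positivity)
  have hη5 : ∀ j : Fin M, ηs j ≤ 1/5 := by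
    intro j; rw [hηs j]; exact min_le_left _ _
  rcases le_or_gt (7*V) (100*(C*L)) with hA | hA
  · -- case A : top learning rate
    have hj : Nat.floor (Real.logb 2 (Real.sqrt T / 5)) < M := by omega
    have htop : 1/10 ≤ ηs ⟨_, hj⟩ := by
      rw [hηs ⟨_, hj⟩]
      refine le_min (by norm_num) ?_
      rw [le_div_iff₀ hst0]
      have := grid_top hT
      calc (1:ℝ)/10 * Real.sqrt T = Real.sqrt T / 10 := by ring
        _ ≤ _ := this
    obtain ⟨η, hη1, hη2, hη0, hkey⟩ :
        ∃ η : ℝ, 1/10 ≤ η ∧ η ≤ 1/5 ∧ 0 < η ∧ R ≤ C*L/η + 7*η*V :=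
      ⟨ηs ⟨_, hj⟩, htop, hη5 _, hηpos _, key _⟩
    have e1 : C*L/η ≤ 10*(C*L) := by
      rw [div_le_iff₀ hη0]
      have := mul_le_mul_of_nonneg_left hη1 (show (0:ℝ) ≤ 10*(C*L) by linarith)
      linarith
    have e2 : 7*η*V ≤ 20*(C*L) := by
      have hp : (0:ℝ) ≤ (1/5 - η) * (7*V) :=
        mul_nonneg (by linarith) (by linarith)
      nlinarith [hp]
    have hnn : (0:ℝ) ≤ C * Real.sqrt (L*V) := mul_nonneg hC.le hsq
    nlinarith [hkey, e1, e2, hnn, hsq, hCL0, hL0]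
  rcases le_or_gt (7*V) ((T:ℝ)*(C*L)) with hB | hB2
  · -- case B : middle of the grid
    have hV : 0 < V := by nlinarith
    obtain ⟨x, hx0, hx2⟩ : ∃ x : ℝ, 0 < x ∧ x^2 = C*L/(7*V) :=
      ⟨Real.sqrt (C*L/(7*V)), Real.sqrt_pos.mpr (by positivity),
        Real.sq_sqrt (by positivity)⟩
    have hCL7 : C*L = 7*V*x^2 := by rw [hx2]; field_simp
    have hx100 : x^2 < 1/100 := by
      rw [hx2, div_lt_iff₀ (by positivity)]; linarith
    have hx10 : x < 1/10 := by nlinarith [hx100, hx0]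
    have hxT : 1 ≤ x * Real.sqrt T := by
      have hx2T : 1 ≤ x^2 * T := by
        rw [hx2, div_mul_eq_mul_div, le_div_iff₀ (by positivity)]
        linarith
      nlinarith [hTst, mul_pos hx0 hst0, sq_nonneg (x * Real.sqrt T - 1),
        sq_nonneg (x * Real.sqrt T + 1)]
    obtain ⟨d, hd0, hdx, hxd, hkey⟩ :
        ∃ d : ℝ, 0 < d ∧ d ≤ x ∧ x ≤ 2*d ∧ R ≤ C*L/d + 7*d*V := by
      have hj0lt : Nat.floor (Real.logb 2 (x * Real.sqrt T)) < M := by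
        rw [hM, Nat.lt_succ_iff]
        apply Nat.floor_le_floor
        apply Real.logb_le_logb_of_le one_lt_two (by linarith)
        nlinarith
      have h2l : (2:ℝ)^(Nat.floor (Real.logb 2 (x * Real.sqrt T))) ≤ x * Real.sqrt T :=
        grid_low hxT
      have h2h : x * Real.sqrt T < (2:ℝ)^(Nat.floor (Real.logb 2 (x * Real.sqrt T))+1) :=
        grid_high (by positivity)
      have hkey := key ⟨_, hj0lt⟩
      have hval : ((⟨Nat.floor (Real.logb 2 (x * Real.sqrt T)), hj0lt⟩ : Fin M) : ℕ) =
          Nat.floor (Real.logb 2 (x * Real.sqrt T)) := rfl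
      rw [hηs ⟨_, hj0lt⟩, hval] at hkey
      generalize hgen : Nat.floor (Real.logb 2 (x * Real.sqrt T)) = m
        at h2l h2h hkey
      clear hgen hval hj0lt
      have hdle : (2:ℝ)^m / Real.sqrt T ≤ x := by
        rw [div_le_iff₀ hst0]; exact h2l
      have hmin : min (1/5 : ℝ) ((2:ℝ)^m / Real.sqrt T) = (2:ℝ)^m / Real.sqrt T := by
        apply min_eq_right
        linarith
      rw [hmin] at hkey
      refine ⟨_, by positivity, hdle, ?_, hkey⟩
      rw [pow_succ] at h2h
      rw [show (2:ℝ)*((2:ℝ)^m/Real.sqrt T) = ((2:ℝ)^m*2)/Real.sqrt T by ring,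
        le_div_iff₀ hst0]
      linarith
    have hb1 : C*L/d ≤ 14*V*x := by
      rw [div_le_iff₀ hd0]
      have hp : (0:ℝ) ≤ (2*d - x) * (7*V*x) :=
        mul_nonneg (by linarith) (by positivity)
      nlinarith [hp]
    have hb2 : 7*d*V ≤ 7*x*V := by
      have := mul_le_mul_of_nonneg_right hdx (show (0:ℝ) ≤ 7*V by linarith)
      nlinarith [this]
    have hR21 : R ≤ 21*V*x := by nlinarith [hkey, hb1, hb2]
    have hfin : 21*V*x ≤ 50*(C+1)*Real.sqrt (L*V) := by
      have hs1 : (21*V*x) = Real.sqrt ((21*V*x)^2) := (Real.sqrt_sq (by positivity)).symm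
      have hs2 : (21*V*x)^2 = (63*C) * (L*V) := by linear_combination (-63*V) * hCL7
      rw [hs1, hs2, Real.sqrt_mul (by positivity)]
      have : Real.sqrt (63*C) ≤ 50*(C+1) := by
        rw [show (50:ℝ)*(C+1) = Real.sqrt ((50*(C+1))^2) from (Real.sqrt_sq (by positivity)).symm]
        apply Real.sqrt_le_sqrt; nlinarith
      exact mul_le_mul_of_nonneg_right this hsq
    have hnn : (0:ℝ) ≤ 50*(C+1)*L := by positivity
    linarith [hR21, hfin, hnn]
  · -- case C : smallest learning rate
    have hM1 : 0 < M := by omega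
    obtain ⟨η, hη0, hη0st, hinv, hkey⟩ :
        ∃ η : ℝ, 0 < η ∧ η ≤ 1/Real.sqrt T ∧ 1/η ≤ 5 + Real.sqrt T ∧
          R ≤ C*L/η + 7*η*V := by
      have h0 : ((⟨0, hM1⟩ : Fin M) : ℕ) = 0 := rfl
      have hηj : ηs ⟨0, hM1⟩ = min (1/5) (1 / Real.sqrt T) := by
        rw [hηs ⟨0, hM1⟩, h0, pow_zero]
      refine ⟨ηs ⟨0, hM1⟩, hηpos _, ?_, ?_, key _⟩
      · rw [hηj]; exact min_le_right _ _
      · rw [hηj]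
        rcases min_cases (1/5 : ℝ) (1/Real.sqrt T) with ⟨h1, _⟩ | ⟨h1, _⟩ <;> rw [h1]
        · norm_num
        · rw [one_div_one_div]; linarith
    have e1 : C*L/η ≤ C*L*(5 + Real.sqrt T) := by
      rw [div_eq_mul_one_div]
      exact mul_le_mul_of_nonneg_left hinv (le_of_lt hCL0)
    have e2 : C*L*Real.sqrt T ≤ 7*V/Real.sqrt T := by
      rw [le_div_iff₀ hst0]; nlinarith
    have e3 : 7*η*V ≤ 7*V/Real.sqrt T := by
      have := mul_le_mul_of_nonneg_right hη0st (show (0:ℝ) ≤ 7*V by linarith)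
      have hrw : 1/Real.sqrt T * (7*V) = 7*V/Real.sqrt T := by ring
      nlinarith [this]
    have e4 : 7*V/Real.sqrt T ≤ 13*Real.sqrt (L*V) := by
      have h1 : 7*V/Real.sqrt T = Real.sqrt ((7*V/Real.sqrt T)^2) :=
        (Real.sqrt_sq (by positivity)).symm
      have h2 : (7*V/Real.sqrt T)^2 = 49*V^2/T := by
        rw [div_pow, hTst, mul_pow]; norm_num
      have h3 : 49*V^2/(T:ℝ) ≤ 169*(L*V) := by
        rw [div_le_iff₀ hT0]
        nlinarith [mul_le_mul_of_nonneg_left hVT hV0, mul_nonneg hT0.le hV0,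
          mul_le_mul_of_nonneg_right hL (mul_nonneg hT0.le hV0)]
      have h169 : Real.sqrt (169*(L*V)) = 13*Real.sqrt (L*V) := by
        rw [show (169:ℝ) = 13^2 by norm_num, Real.sqrt_mul (by positivity),
          Real.sqrt_sq (by norm_num)]
      rw [h1, ← h169]
      apply Real.sqrt_le_sqrt; rw [h2]; exact h3
    have hnn : (0:ℝ) ≤ C * Real.sqrt (L*V) := mul_nonneg hC.le hsq
    nlinarith [hkey, e1, e2, e3, e4, hnn, hsq, hCL0, hL0]

/-- per-action adaptive bound, Eq. (17) in the proof of Theorem 2.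
Under the setup of Algorithm 2 (Condition 3 for `𝒜` and Condition 2 for each
`𝒜_{ij}` with constant `C`), for every benchmark sequence and every action `i`
appearing in it,
`Σ_{t : i_t = i} r_t(i) ≤ C' (√((S_i ln T + ln(KM)) Σ_{t : i_t = i} |r_t(i)|)
  + S_i ln T + ln(KM))` for a constant `C'` depending only on `C`. -/
theorem stmt_12 (C : ℝ) (hC : 0 < C) :
    ∃ C' : ℝ, 0 < C' ∧
      ∀ (K T S n M : ℕ), 2 ≤ K → 2 ≤ T → 1 ≤ S → S ≤ T → 1 ≤ n →
      M = Nat.floor (Real.logb 2 (Real.sqrt T / 5)) + 1 →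
      ∀ ηs : Fin M → ℝ,
        (∀ j : Fin M, ηs j = min (1 / 5) ((2 : ℝ) ^ (j : ℕ) / Real.sqrt T)) →
      ∀ (ℓ : ℕ → Fin K → ℝ) (w : ℕ → Fin K × Fin M → ℝ)
        (z : ℕ → Fin K → Fin M → ℝ) (p r : ℕ → Fin K → ℝ)
        (c : ℕ → Fin K × Fin M → ℝ),
        (∀ t ∈ Finset.Icc 1 T, ∀ i, |ℓ t i| ≤ 1) →
        (∀ t ∈ Finset.Icc 1 T, (∀ q, 0 ≤ w t q) ∧ (∑ q, w t q) = 1) →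
        (∀ t ∈ Finset.Icc 1 T, ∀ i j, 0 ≤ z t i j ∧ z t i j ≤ 1) →
        (∀ t ∈ Finset.Icc 1 T, 0 < ∑ q : Fin K × Fin M, z t q.1 q.2 * w t q) →
        -- p_t(i) ∝ Σ_j z_t(i,j) w_t(i,j)
        (∀ t ∈ Finset.Icc 1 T, ∀ i,
          p t i = (∑ j, z t i j * w t (i, j)) /
            ∑ q : Fin K × Fin M, z t q.1 q.2 * w t q) →
        (∀ t ∈ Finset.Icc 1 T, ∀ i, r t i = (∑ j, p t j * ℓ t j) - ℓ t i) →
        (∀ t ∈ Finset.Icc 1 T, ∀ i j, c t (i, j) = -(z t i j * r t i)) →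
        -- Condition 3 for 𝒜 with individual learning rates
        (∀ i : Fin K, ∀ j : Fin M,
          (∑ t ∈ Finset.Icc 1 T, ∑ q, w t q * c t q) -
              (∑ t ∈ Finset.Icc 1 T, c t (i, j)) ≤
            C * Real.log ((K : ℝ) * (M : ℝ)) / ηs j +
              ηs j * ∑ t ∈ Finset.Icc 1 T, |(∑ q, w t q * c t q) - c t (i, j)|) →
        -- Condition 2 for each 𝒜_{ij} on losses h_t = (0, 5 η_j |r_t(i)| - r_t(i))
        (∀ i : Fin K, ∀ j : Fin M, ∀ S' : ℕ, 1 ≤ S' → S' ≤ T → ∀ b : ℕ → Bool,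
          (∑ t ∈ Finset.Icc 2 T, if b t = b (t - 1) then 0 else 1) ≤ S' - 1 →
          ((∑ t ∈ Finset.Icc 1 T,
              ((1 - z t i j) * 0 + z t i j * (5 * ηs j * |r t i| - r t i))) -
              (∑ t ∈ Finset.Icc 1 T,
                if b t then 5 * ηs j * |r t i| - r t i else 0) ≤
              C * S' * Real.log T / ηs j +
                ηs j * ∑ t ∈ Finset.Icc 1 T,
                  |if b t then 5 * ηs j * |r t i| - r t i else (0 : ℝ)|) ∨
          ((∑ t ∈ Finset.Icc 1 T,
              ((1 - z t i j) * 0 + z t i j * (5 * ηs j * |r t i| - r t i))) -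
              (∑ t ∈ Finset.Icc 1 T,
                if b t then 5 * ηs j * |r t i| - r t i else 0) ≤
              C * S' * Real.log T / ηs j +
                ηs j * ∑ t ∈ Finset.Icc 1 T,
                  |((1 - z t i j) * 0 + z t i j * (5 * ηs j * |r t i| - r t i)) -
                    (if b t then 5 * ηs j * |r t i| - r t i else 0)|) ∨
          ((∑ t ∈ Finset.Icc 1 T,
              ((1 - z t i j) * 0 + z t i j * (5 * ηs j * |r t i| - r t i))) -
              (∑ t ∈ Finset.Icc 1 T,
                if b t then 5 * ηs j * |r t i| - r t i else 0) ≤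
              C * S' * Real.log T / ηs j +
                ηs j * ∑ t ∈ Finset.Icc 1 T,
                  ((1 - z t i j) * |(0 : ℝ)| +
                    z t i j * |5 * ηs j * |r t i| - r t i|))) →
        ∀ idx : ℕ → Fin K, ∀ i : Fin K,
          (∃ t ∈ Finset.Icc 1 T, idx t = i) →
          (∑ t ∈ (Finset.Icc 1 T).filter (fun t => idx t = i), r t i) ≤
            C' * (Real.sqrt
                ((((1 + (∑ t ∈ Finset.Icc 2 T,
                      if (idx (t - 1) = i ∧ idx t ≠ i) ∨ (idx (t - 1) ≠ i ∧ idx t = i)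
                      then 1 else 0 : ℕ) : ℝ)) * Real.log T +
                    Real.log ((K : ℝ) * (M : ℝ))) *
                  ∑ t ∈ (Finset.Icc 1 T).filter (fun t => idx t = i), |r t i|) +
              ((1 + (∑ t ∈ Finset.Icc 2 T,
                  if (idx (t - 1) = i ∧ idx t ≠ i) ∨ (idx (t - 1) ≠ i ∧ idx t = i)
                  then 1 else 0 : ℕ) : ℝ)) * Real.log T +
              Real.log ((K : ℝ) * (M : ℝ))) := by
  refine ⟨50 * (C + 1), by positivity, ?_⟩
  intro K T S n M hK hT hS hST hn hM ηs hηs ℓ w z p r c hlb hw hz hZ hp hr hc hc3 hc2 idx i _hi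
  -- basic positivity facts
  have hM1 : 1 ≤ M := by omega
  have hlog2pos : (0:ℝ) < Real.log 2 := Real.log_pos (by norm_num)
  have hlt : Real.log 2 ≤ Real.log T :=
    Real.log_le_log (by norm_num) (by exact_mod_cast hT)
  have hkm : Real.log 2 ≤ Real.log ((K:ℝ)*(M:ℝ)) := by
    apply Real.log_le_log (by norm_num)
    have h1 : (2:ℝ) ≤ (K:ℝ) := by exact_mod_cast hK
    have h2 : (1:ℝ) ≤ (M:ℝ) := by exact_mod_cast hM1
    nlinarith
  -- probabilities
  have hpnn : ∀ t ∈ Finset.Icc 1 T, ∀ i', 0 ≤ p t i' := by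
    intro t ht i'
    rw [hp t ht i']
    apply div_nonneg
    · exact Finset.sum_nonneg fun j _ => mul_nonneg (hz t ht i' j).1 ((hw t ht).1 _)
    · exact (hZ t ht).le
  have hZsplit : ∀ t, (∑ q : Fin K × Fin M, z t q.1 q.2 * w t q) =
      ∑ i', ∑ j, z t i' j * w t (i', j) := fun t =>
    Fintype.sum_prod_type _
  have hpsum : ∀ t ∈ Finset.Icc 1 T, ∑ i', p t i' = 1 := by
    intro t ht
    have hzz := (hZ t ht).ne'
    calc ∑ i', p t i'
        = (∑ i', ∑ j, z t i' j * w t (i', j)) /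
            (∑ q : Fin K × Fin M, z t q.1 q.2 * w t q) := by
          rw [Finset.sum_congr rfl (fun i' _ => hp t ht i'), ← Finset.sum_div]
      _ = 1 := by rw [← hZsplit t]; exact div_self hzz
  have hprz : ∀ t ∈ Finset.Icc 1 T, ∑ i', p t i' * r t i' = 0 := by
    intro t ht
    calc ∑ i', p t i' * r t i'
        = ∑ i', (p t i' * (∑ j', p t j' * ℓ t j') - p t i' * ℓ t i') :=
          Finset.sum_congr rfl (fun i' _ => by rw [hr t ht i']; ring)
      _ = (∑ i', p t i') * (∑ j', p t j' * ℓ t j') - ∑ i', p t i' * ℓ t i' := by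
          rw [Finset.sum_sub_distrib, ← Finset.sum_mul]
      _ = 0 := by rw [hpsum t ht, one_mul, sub_self]
  have hwc0 : ∀ t ∈ Finset.Icc 1 T, (∑ q, w t q * c t q) = 0 := by
    intro t ht
    have hzz := (hZ t ht).ne'
    calc (∑ q : Fin K × Fin M, w t q * c t q)
        = ∑ q : Fin K × Fin M, -(z t q.1 q.2 * w t q * r t q.1) := by
          refine Finset.sum_congr rfl fun q _ => ?_
          have hcq : c t q = -(z t q.1 q.2 * r t q.1) := by
            have := hc t ht q.1 q.2
            rwa [Prod.mk.eta] at this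
          rw [hcq]; ring
      _ = -∑ i', ∑ j, z t i' j * w t (i', j) * r t i' := by
          rw [Finset.sum_neg_distrib]
          congr 1
          exact Fintype.sum_prod_type _
      _ = -∑ i', (p t i' * (∑ q : Fin K × Fin M, z t q.1 q.2 * w t q)) * r t i' := by
          congr 1
          refine Finset.sum_congr rfl fun i' _ => ?_
          have hnum : (∑ j, z t i' j * w t (i', j)) =
              p t i' * (∑ q : Fin K × Fin M, z t q.1 q.2 * w t q) := by
            rw [hp t ht i', div_mul_cancel₀ _ hzz]
          rw [← hnum, Finset.sum_mul]
      _ = -((∑ q : Fin K × Fin M, z t q.1 q.2 * w t q) * ∑ i', p t i' * r t i') := by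
          rw [Finset.mul_sum]
          congr 1
          exact Finset.sum_congr rfl fun i' _ => by ring
      _ = 0 := by rw [hprz t ht, mul_zero, neg_zero]
  have habs2 : ∀ t ∈ Finset.Icc 1 T, ∀ i', |r t i'| ≤ 2 := by
    intro t ht i'
    rw [hr t ht i']
    have hA : |∑ j', p t j' * ℓ t j'| ≤ 1 := by
      calc |∑ j', p t j' * ℓ t j'| ≤ ∑ j', |p t j' * ℓ t j'| :=
            Finset.abs_sum_le_sum_abs _ _
        _ ≤ ∑ j', p t j' := by
            refine Finset.sum_le_sum fun j' _ => ?_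
            rw [abs_mul, abs_of_nonneg (hpnn t ht j')]
            calc p t j' * |ℓ t j'| ≤ p t j' * 1 :=
                mul_le_mul_of_nonneg_left (hlb t ht j') (hpnn t ht j')
              _ = p t j' := mul_one _
        _ = 1 := hpsum t ht
    have hB := hlb t ht i'
    calc |(∑ j', p t j' * ℓ t j') - ℓ t i'|
        ≤ |∑ j', p t j' * ℓ t j'| + |ℓ t i'| := abs_sub _ _
      _ ≤ 2 := by linarith
  -- abbreviations
  set F := (Finset.Icc 1 T).filter (fun t => idx t = i) with hF
  set SwN := ∑ t ∈ Finset.Icc 2 T,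
      (if (idx (t - 1) = i ∧ idx t ≠ i) ∨ (idx (t - 1) ≠ i ∧ idx t = i)
        then 1 else 0) with hSwN
  set V := ∑ t ∈ F, |r t i| with hVdef
  set R := ∑ t ∈ F, r t i with hRdef
  have hV0 : 0 ≤ V := Finset.sum_nonneg fun t _ => abs_nonneg _
  have hVT : V ≤ 2*(T:ℝ) := by
    have h2 : (Finset.Icc 1 T).card = T := by rw [Nat.card_Icc]; omega
    have h1 : (F.card : ℝ) ≤ (T:ℝ) := by
      exact_mod_cast (Finset.card_filter_le _ _).trans_eq h2
    calc V ≤ ∑ t ∈ F, 2 := Finset.sum_le_sum fun t ht =>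
          habs2 t (Finset.mem_filter.mp ht).1 i
      _ = (F.card : ℝ) * 2 := by rw [Finset.sum_const]; simp [mul_comm]
      _ ≤ 2*(T:ℝ) := by linarith
  have hSwT : SwN ≤ T - 1 := by
    rw [hSwN]
    calc (∑ t ∈ Finset.Icc 2 T,
          (if (idx (t - 1) = i ∧ idx t ≠ i) ∨ (idx (t - 1) ≠ i ∧ idx t = i)
            then 1 else 0))
        ≤ ∑ _t ∈ Finset.Icc 2 T, 1 :=
          Finset.sum_le_sum fun t _ => by split <;> omega
      _ = T - 1 := by rw [Finset.sum_const, smul_eq_mul, mul_one, Nat.card_Icc]; omega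
  -- the key per-learning-rate bound
  have key : ∀ j : Fin M,
      R ≤ C * ((1 + (SwN:ℝ)) * Real.log T + Real.log ((K:ℝ)*(M:ℝ))) / ηs j
        + 7 * ηs j * V := by
    intro j
    have hηj := hηs j
    have hη0 : 0 < ηs j := by rw [hηj]; exact lt_min (by norm_num) (by positivity)
    have hη5 : ηs j ≤ 1/5 := by rw [hηj]; exact min_le_left _ _
    set A := ∑ t ∈ Finset.Icc 1 T, z t i j * r t i with hAdef
    set B := ∑ t ∈ Finset.Icc 1 T, z t i j * |r t i| with hBdef
    have hB0 : 0 ≤ B :=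
      Finset.sum_nonneg fun t ht => mul_nonneg (hz t ht i j).1 (abs_nonneg _)
    -- Condition 3 consequence
    have star : A ≤ C * Real.log ((K:ℝ)*(M:ℝ)) / ηs j + ηs j * B := by
      have h3 := hc3 i j
      have e1 : (∑ t ∈ Finset.Icc 1 T, ∑ q, w t q * c t q) = 0 :=
        Finset.sum_eq_zero hwc0
      have e2 : (∑ t ∈ Finset.Icc 1 T, c t (i, j)) = -A := by
        rw [hAdef, ← Finset.sum_neg_distrib]
        exact Finset.sum_congr rfl fun t ht => by rw [hc t ht i j]
      have e3 : (∑ t ∈ Finset.Icc 1 T, |(∑ q, w t q * c t q) - c t (i, j)|) = B := by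
        refine Finset.sum_congr rfl fun t ht => ?_
        rw [hwc0 t ht, hc t ht i j, zero_sub, neg_neg, abs_mul,
          abs_of_nonneg (hz t ht i j).1]
      rw [e1, e2, e3] at h3
      linarith
    -- Condition 2 consequence
    set b : ℕ → Bool := fun t => decide (idx t = i) with hbdef
    have hswitch : (∑ t ∈ Finset.Icc 2 T, if b t = b (t-1) then 0 else 1) = SwN := by
      rw [hSwN]
      refine Finset.sum_congr rfl fun t _ => ?_
      by_cases h1 : idx (t-1) = i <;> by_cases h2 : idx t = i <;>
        simp [hbdef, h1, h2]
    have h2 := hc2 i j (1 + SwN) (by omega) (by omega) b (by rw [hswitch]; omega)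
    have eL : (∑ t ∈ Finset.Icc 1 T,
        ((1 - z t i j) * 0 + z t i j * (5 * ηs j * |r t i| - r t i)))
        = 5 * ηs j * B - A := by
      calc (∑ t ∈ Finset.Icc 1 T,
            ((1 - z t i j) * 0 + z t i j * (5 * ηs j * |r t i| - r t i)))
          = ∑ t ∈ Finset.Icc 1 T,
              (5 * ηs j * (z t i j * |r t i|) - z t i j * r t i) :=
            Finset.sum_congr rfl fun t _ => by ring
        _ = 5 * ηs j * B - A := by
            rw [Finset.sum_sub_distrib, ← Finset.mul_sum, hBdef, hAdef]
    have eR : (∑ t ∈ Finset.Icc 1 T,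
        if b t then 5 * ηs j * |r t i| - r t i else 0) = 5 * ηs j * V - R := by
      calc (∑ t ∈ Finset.Icc 1 T, if b t then 5 * ηs j * |r t i| - r t i else 0)
          = ∑ t ∈ Finset.Icc 1 T,
              (if idx t = i then 5 * ηs j * |r t i| - r t i else 0) :=
            Finset.sum_congr rfl fun t _ => by
              by_cases h : idx t = i <;> simp [hbdef, h]
        _ = ∑ t ∈ F, (5 * ηs j * |r t i| - r t i) := (Finset.sum_filter _ _).symm
        _ = 5 * ηs j * V - R := by
            rw [Finset.sum_sub_distrib, ← Finset.mul_sum, hVdef, hRdef]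
    have hXb : ∀ t ∈ Finset.Icc 1 T, |5 * ηs j * |r t i| - r t i| ≤ 2*|r t i| := by
      intro t ht
      have h1 : -(r t i) ≤ |r t i| := neg_le_abs _
      have h2 : r t i ≤ |r t i| := le_abs_self _
      have h3 : 0 ≤ |r t i| := abs_nonneg _
      have hp := mul_nonneg (show (0:ℝ) ≤ 1/5 - ηs j by linarith) h3
      have hq := mul_nonneg hη0.le h3
      rw [abs_le]; constructor <;> nlinarith [hp, hq]
    have hbV : (∑ t ∈ Finset.Icc 1 T, (if idx t = i then 2*|r t i| else 0)) = 2*V := by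
      rw [← Finset.sum_filter, ← Finset.mul_sum, hVdef]
    -- the three possible η-terms are all at most 2B + 2V
    have hbr1 : (∑ t ∈ Finset.Icc 1 T,
        |if b t then 5 * ηs j * |r t i| - r t i else (0:ℝ)|) ≤ 2*B + 2*V := by
      calc (∑ t ∈ Finset.Icc 1 T, |if b t then 5 * ηs j * |r t i| - r t i else (0:ℝ)|)
          ≤ ∑ t ∈ Finset.Icc 1 T, (if idx t = i then 2*|r t i| else 0) := by
            refine Finset.sum_le_sum fun t ht => ?_
            by_cases h : idx t = i
            · simp only [hbdef, h, decide_true, if_true]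
              exact hXb t ht
            · simp [hbdef, h]
        _ = 2*V := hbV
        _ ≤ 2*B + 2*V := by linarith
    have hbr2 : (∑ t ∈ Finset.Icc 1 T,
        |((1 - z t i j) * 0 + z t i j * (5 * ηs j * |r t i| - r t i)) -
          (if b t then 5 * ηs j * |r t i| - r t i else 0)|) ≤ 2*B + 2*V := by
      calc (∑ t ∈ Finset.Icc 1 T,
            |((1 - z t i j) * 0 + z t i j * (5 * ηs j * |r t i| - r t i)) -
              (if b t then 5 * ηs j * |r t i| - r t i else 0)|)
          ≤ ∑ t ∈ Finset.Icc 1 T,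
              (2*(z t i j * |r t i|) + (if idx t = i then 2*|r t i| else 0)) := by
            refine Finset.sum_le_sum fun t ht => ?_
            have hzr := hz t ht i j
            have hX := hXb t ht
            have hXnn : (0:ℝ) ≤ |5 * ηs j * |r t i| - r t i| := abs_nonneg _
            have hznn := mul_nonneg hzr.1 (abs_nonneg (r t i))
            by_cases h : idx t = i
            · simp only [hbdef, h, decide_true, if_true]
              have he : ((1 - z t i j) * 0 + z t i j * (5 * ηs j * |r t i| - r t i)) -
                  (5 * ηs j * |r t i| - r t i)
                  = -((1 - z t i j) * (5 * ηs j * |r t i| - r t i)) := by ring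
              rw [he, abs_neg, abs_mul, abs_of_nonneg (by linarith [hzr.2] : (0:ℝ) ≤ 1 - z t i j)]
              nlinarith [mul_nonneg hzr.1 hXnn]
            · have hcond : (b t = true) = False := by simp [hbdef, h]
              simp only [hcond, h, if_false]
              rw [sub_zero, add_zero,
                show ((1 - z t i j) * 0 + z t i j * (5 * ηs j * |r t i| - r t i))
                  = z t i j * (5 * ηs j * |r t i| - r t i) by ring,
                abs_mul, abs_of_nonneg hzr.1]
              nlinarith [mul_nonneg hzr.1 (sub_nonneg.mpr hX)]
        _ = 2*B + 2*V := by
            rw [Finset.sum_add_distrib, hbV, ← Finset.mul_sum, hBdef]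
    have hbr3 : (∑ t ∈ Finset.Icc 1 T,
        ((1 - z t i j) * |(0:ℝ)| + z t i j * |5 * ηs j * |r t i| - r t i|)) ≤ 2*B + 2*V := by
      calc (∑ t ∈ Finset.Icc 1 T,
            ((1 - z t i j) * |(0:ℝ)| + z t i j * |5 * ηs j * |r t i| - r t i|))
          ≤ ∑ t ∈ Finset.Icc 1 T, 2*(z t i j * |r t i|) := by
            refine Finset.sum_le_sum fun t ht => ?_
            have hzr := hz t ht i j
            rw [abs_zero, mul_zero, zero_add]
            nlinarith [mul_nonneg hzr.1 (sub_nonneg.mpr (hXb t ht))]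
        _ = 2*B := by rw [← Finset.mul_sum, hBdef]
        _ ≤ 2*B + 2*V := by linarith
    have common : 5 * ηs j * B - A - (5 * ηs j * V - R)
        ≤ C * (1 + (SwN:ℝ)) * Real.log T / ηs j + ηs j * (2*B + 2*V) := by
      rcases h2 with h | h | h <;> rw [eL, eR] at h <;> push_cast at h <;>
        [linarith [mul_le_mul_of_nonneg_left hbr1 hη0.le];
         linarith [mul_le_mul_of_nonneg_left hbr2 hη0.le];
         (simp only [abs_zero, mul_zero, zero_add] at h hbr3; linarith [mul_le_mul_of_nonneg_left hbr3 hη0.le])]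
    have hdiv : C * (1 + (SwN:ℝ)) * Real.log T / ηs j
        + C * Real.log ((K:ℝ)*(M:ℝ)) / ηs j
        = C * ((1 + (SwN:ℝ)) * Real.log T + Real.log ((K:ℝ)*(M:ℝ))) / ηs j := by
      rw [← add_div]; ring_nf
    have hetaB := mul_nonneg hη0.le hB0
    linarith [common, star, hdiv, hetaB]
  -- optimize over the grid of learning rates
  have hLlb : Real.log 2 ≤ (1 + (SwN:ℝ)) * Real.log T + Real.log ((K:ℝ)*(M:ℝ)) := by
    have hs0 : (0:ℝ) ≤ (SwN:ℝ) := Nat.cast_nonneg _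
    nlinarith [mul_nonneg hs0 (le_of_lt (lt_of_lt_of_le hlog2pos hlt))]
  have main := grid_opt C ((1 + (SwN:ℝ)) * Real.log T + Real.log ((K:ℝ)*(M:ℝ))) V R
    hC T M hT hM ηs hηs hLlb hV0 hVT key
  linarith [main]
end

section
/- Suppose a learner's distributions p_1,…,p_T ∈ Δ_K (each measurable with respect to the history before its round) satisfy the per-action adaptive bound: for every action i appearing in the benchmark, Σ_{t : i_t = i} r_t(i) ≤ C'·(√((S_i ln T + ln(KM))·Σ_{t : i_t = i}|r_t(i)|) + S_i ln T + ln(KM)) pathwise, where r_t(i) = ⟨p_t, ℓ_t⟩ − ℓ_t(i), M = ⌊log₂(√T/5)⌋ + 1, and S_i counts segments of the benchmark as defined below. Then in the stochastic setting with gaps α_1,…,α_n, the expected switching regret satisfies E[Σ_{t=1}^T r_t(i_t)] ≤ C''·Σ_{i=1}^n (S_i ln T + ln(K ln T))/α_i for a constant C'' depending only on C', where S_i = 1 + Σ_{t=2}^T 1{(i_{t−1}=i and i_t≠i) or (i_{t−1}≠i and i_t=i)} and Σ_{i∈[n]} S_i ≤ 3S. -/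
open MeasureTheory


lemma aux_int {Ω : Type} {m0 : MeasurableSpace Ω} {μ : Measure Ω} [IsFiniteMeasure μ]
    {f : Ω → ℝ} (hf : Measurable f) {C : ℝ} (h : ∀ ω, |f ω| ≤ C) : Integrable f μ :=
  ⟨hf.aestronglyMeasurable, HasFiniteIntegral.of_bounded (C := C) (ae_of_all _ h)⟩

lemma aux_amgm {a b : ℝ} (ha : 0 ≤ a) (hb : 0 ≤ b) : Real.sqrt (a * b) ≤ (a + b) / 2 := by
  nlinarith [sq_nonneg (Real.sqrt a - Real.sqrt b), Real.sq_sqrt ha, Real.sq_sqrt hb,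
    Real.sqrt_mul_self ha, Real.sqrt_nonneg a, Real.sqrt_nonneg b,
    Real.sqrt_mul ha b, Real.sqrt_nonneg (a*b)]

lemma aux_log3 {x : ℝ} (hx : 2 * Real.log 2 ≤ x) : Real.log (3 * x) ≤ 5 * Real.log x := by
  have h2 : (0.6931471803 : ℝ) < Real.log 2 := Real.log_two_gt_d9
  have hx1 : (1.386 : ℝ) ≤ x := by nlinarith
  have h4 : (3:ℝ) ≤ x ^ 4 := by nlinarith [sq_nonneg (x - 1.386), sq_nonneg (x^2 - 1.9216)]
  have h3x : 3 * x ≤ x ^ 5 := by nlinarith [h4, hx1]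
  calc Real.log (3 * x) ≤ Real.log (x ^ 5) := Real.log_le_log (by nlinarith) h3x
    _ = 5 * Real.log x := by rw [Real.log_pow]; push_cast; ring

lemma aux_core {Ω : Type} {m m0 : MeasurableSpace Ω} (hm : m ≤ m0) (μ : Measure Ω)
    [IsProbabilityMeasure μ] (g X : Ω → ℝ) (hg : Measurable[m] g)
    (hg0 : ∀ ω, 0 ≤ g ω) (hg1 : ∀ ω, g ω ≤ 1) (hX : Measurable X) (hXb : ∀ ω, |X ω| ≤ 2)
    (a : ℝ) (ha : ∀ᵐ ω ∂μ, a ≤ (μ[X|m]) ω) :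
    a * ∫ ω, g ω ∂μ ≤ ∫ ω, g ω * X ω ∂μ := by
  have hgm0 : Measurable g := hg.mono hm le_rfl
  have hgb : ∀ ω, |g ω| ≤ 1 := fun ω => abs_le.2 ⟨by linarith [hg0 ω], hg1 ω⟩
  have hXi : Integrable X μ := aux_int hX hXb
  have hgXi : Integrable (fun ω => g ω * X ω) μ := by
    refine aux_int (hgm0.mul hX) (C := 2) (fun ω => ?_)
    rw [abs_mul]
    calc |g ω| * |X ω| ≤ 1 * 2 := by
          exact mul_le_mul (hgb ω) (hXb ω) (abs_nonneg _) zero_le_one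
      _ = 2 := by ring
  have hpull : μ[g * X|m] =ᵐ[μ] g * μ[X|m] :=
    condExp_mul_of_stronglyMeasurable_left hg.stronglyMeasurable hgXi hXi
  have h1 : ∫ ω, g ω * X ω ∂μ = ∫ ω, g ω * (μ[X|m]) ω ∂μ := by
    have e1 : ∫ ω, g ω * X ω ∂μ = ∫ ω, (μ[fun ω' => g ω' * X ω'|m]) ω ∂μ :=
      (integral_condExp hm (f := fun ω => g ω * X ω)).symm
    rw [e1]
    exact integral_congr_ae hpull
  rw [h1]
  have hce : Integrable (fun ω => g ω * (μ[X|m]) ω) μ :=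
    (integrable_condExp (f := X)).bdd_mul hgm0.aestronglyMeasurable (c := 1) (ae_of_all _ fun ω => by
      simpa using hgb ω)
  have hgi : Integrable g μ := aux_int hgm0 hgb
  have : ∫ ω, a * g ω ∂μ ≤ ∫ ω, g ω * (μ[X|m]) ω ∂μ := by
    refine integral_mono_ae (hgi.const_mul a) hce ?_
    filter_upwards [ha] with ω hω
    calc a * g ω ≤ (μ[X|m]) ω * g ω := mul_le_mul_of_nonneg_right hω (hg0 ω)
      _ = g ω * (μ[X|m]) ω := by ring
  simpa [integral_const_mul] using this

lemma aux_solve {C' B a ER EV : ℝ} (hC' : 0 < C') (hB0 : 0 ≤ B) (ha : 0 < a) (ha2 : a ≤ 2)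
    (h1 : a * EV ≤ 2 * ER) (h2 : ER ≤ C' ^ 2 * B / a + a * EV / 4 + C' * B) :
    ER ≤ (2 * C' ^ 2 + 4 * C') * (B / a) := by
  rw [← mul_div_assoc, le_div_iff₀ ha]
  have e : a * (C' ^ 2 * B / a) = C' ^ 2 * B := by field_simp
  nlinarith [mul_le_mul_of_nonneg_left h2 ha.le, e, mul_nonneg (mul_nonneg hC'.le hB0) (sub_nonneg.2 ha2)]

set_option maxHeartbeats 2000000 in
/-- stochastic part of Theorem 2: from a pathwise per-action
adaptive bound to logarithmic expected regret in the stochastic setting.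
If the learner's (predictable) distributions satisfy, pathwise, the per-action
adaptive bound with constant `C'` (Eq. (17)), then in the stochastic setting with
gaps `α_1, …, α_n` the expected switching regret is at most
`C'' Σ_{i<n} (S_i ln T + ln(K ln T))/α_i` for a constant `C''` depending only on
`C'`. -/
theorem stmt_13 (C' : ℝ) (hC' : 0 < C') :
    ∃ C'' : ℝ, 0 < C'' ∧
      ∀ (K T S n : ℕ), 2 ≤ K → 2 ≤ T → 1 ≤ S → 1 ≤ n → n ≤ K →
      ∀ M : ℕ, M = Nat.floor (Real.logb 2 (Real.sqrt T / 5)) + 1 →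
      ∀ (Ω : Type) (m0 : MeasurableSpace Ω) (μ : Measure Ω),
        IsProbabilityMeasure μ →
      ∀ ℱ : Filtration ℕ m0,
      ∀ (ℓ : ℕ → Fin K → Ω → ℝ) (p : ℕ → Fin K → Ω → ℝ),
        -- bounded losses, adapted to the filtration
        (∀ t ∈ Finset.Icc 1 T, ∀ i, ∀ ω, |ℓ t i ω| ≤ 1) →
        (∀ t ∈ Finset.Icc 1 T, ∀ i, Measurable[ℱ t] (ℓ t i)) →
        -- the learner plays distributions measurable w.r.t. the history
        (∀ t ∈ Finset.Icc 1 T, (∀ i, Measurable[ℱ (t - 1)] (p t i)) ∧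
          ∀ ω, (∀ i, 0 ≤ p t i ω) ∧ (∑ i, p t i ω) = 1) →
      ∀ idx : ℕ → Fin K,
        -- benchmark with at most S-1 switches whose actions are among the first n
        (∑ t ∈ Finset.Icc 2 T, if idx t = idx (t - 1) then 0 else 1) ≤ S - 1 →
        (∀ t ∈ Finset.Icc 1 T, (idx t : ℕ) < n) →
        -- pathwise per-action adaptive regret bound (Eq. (17))
        (∀ ω, ∀ i : Fin K, (∃ t ∈ Finset.Icc 1 T, idx t = i) →
          (∑ t ∈ (Finset.Icc 1 T).filter (fun t => idx t = i),
              ((∑ j, p t j ω * ℓ t j ω) - ℓ t i ω)) ≤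
            C' * (Real.sqrt
                ((((1 + (∑ t ∈ Finset.Icc 2 T,
                      if (idx (t - 1) = i ∧ idx t ≠ i) ∨ (idx (t - 1) ≠ i ∧ idx t = i)
                      then 1 else 0 : ℕ) : ℝ)) * Real.log T +
                    Real.log ((K : ℝ) * (M : ℝ))) *
                  ∑ t ∈ (Finset.Icc 1 T).filter (fun t => idx t = i),
                    |(∑ j, p t j ω * ℓ t j ω) - ℓ t i ω|) +
              ((1 + (∑ t ∈ Finset.Icc 2 T,
                  if (idx (t - 1) = i ∧ idx t ≠ i) ∨ (idx (t - 1) ≠ i ∧ idx t = i)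
                  then 1 else 0 : ℕ) : ℝ)) * Real.log T +
              Real.log ((K : ℝ) * (M : ℝ)))) →
      ∀ α : Fin K → ℝ,
        (∀ i : Fin K, (i : ℕ) < n → 0 < α i) →
        -- the gap condition of the stochastic setting
        (∀ t ∈ Finset.Icc 1 T, ∀ j : Fin K, j ≠ idx t →
          ∀ᵐ ω ∂μ, α (idx t) ≤ (μ[fun ω' => ℓ t j ω' - ℓ t (idx t) ω' | ℱ (t - 1)]) ω) →
        (∫ ω, (∑ t ∈ Finset.Icc 1 T,
            ((∑ j, p t j ω * ℓ t j ω) - ℓ t (idx t) ω)) ∂μ) ≤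
          C'' * ∑ i ∈ Finset.univ.filter (fun i : Fin K => (i : ℕ) < n),
            (((1 + (∑ t ∈ Finset.Icc 2 T,
                if (idx (t - 1) = i ∧ idx t ≠ i) ∨ (idx (t - 1) ≠ i ∧ idx t = i)
                then 1 else 0 : ℕ) : ℝ)) * Real.log T +
              Real.log ((K : ℝ) * Real.log T)) / α i := by
  refine ⟨10 * C' ^ 2 + 20 * C', by positivity, ?_⟩
  intro K T S n hK hT hS hn hnK M hM Ω m0 μ hμ ℱ ℓ p hℓb hℓm hp idx hsw hidxn h17 α hα0 hgap
  have hlog2 : (0.6931471803 : ℝ) < Real.log 2 := Real.log_two_gt_d9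
  have hT2 : (2:ℝ) ≤ (T:ℝ) := by exact_mod_cast hT
  have hL : Real.log 2 ≤ Real.log T := Real.log_le_log (by norm_num) hT2
  have hL0 : (0:ℝ) < Real.log T := by linarith
  have hM1 : 1 ≤ M := by omega
  -- M ≤ 3 log T
  have hM3 : (M : ℝ) ≤ 3 * Real.log T := by
    have hsq : (0:ℝ) < Real.sqrt T / 5 := by positivity
    have hfl : (Nat.floor (Real.logb 2 (Real.sqrt T / 5)) : ℝ) ≤
        max (Real.logb 2 (Real.sqrt T / 5)) 0 := by
      rcases le_or_gt (Real.logb 2 (Real.sqrt T / 5)) 0 with h | h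
      · rw [Nat.floor_eq_zero.2 (by linarith)]
        simp
      · exact (Nat.floor_le h.le).trans (le_max_left _ _)
    have hmono : Real.logb 2 (Real.sqrt T / 5) ≤ Real.logb 2 (Real.sqrt T) := by
      apply Real.logb_le_logb_of_le (by norm_num : (1:ℝ) < 2) hsq
      have : (0:ℝ) < Real.sqrt T := by positivity
      linarith
    have hlb : Real.logb 2 (Real.sqrt T) = Real.log T / (2 * Real.log 2) := by
      rw [Real.logb, Real.log_sqrt (by positivity)]
      ring
    have hnn : (0:ℝ) ≤ Real.logb 2 (Real.sqrt T) := by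
      rw [hlb]; positivity
    have h1 : (Nat.floor (Real.logb 2 (Real.sqrt T / 5)) : ℝ) ≤ Real.log T / (2 * Real.log 2) := by
      rw [← hlb]
      exact hfl.trans (max_le hmono hnn)
    have hMr : (M : ℝ) = (Nat.floor (Real.logb 2 (Real.sqrt T / 5)) : ℝ) + 1 := by
      rw [hM]; push_cast; ring
    rw [hMr]
    have hd : Real.log T / (2 * Real.log 2) ≤ Real.log T := by
      rw [div_le_iff₀ (by linarith)]
      nlinarith
    nlinarith [div_nonneg hL0.le (by linarith : (0:ℝ) ≤ 2 * Real.log 2)]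
  -- log(K M) ≤ 5 log (K log T)
  have hKL : 2 * Real.log 2 ≤ (K:ℝ) * Real.log T := by
    have : (2:ℝ) ≤ (K:ℝ) := by exact_mod_cast hK
    nlinarith
  have hlogKM : Real.log ((K:ℝ) * (M:ℝ)) ≤ 5 * Real.log ((K:ℝ) * Real.log T) := by
    have hKM : (K:ℝ) * (M:ℝ) ≤ 3 * ((K:ℝ) * Real.log T) := by
      have hK0 : (0:ℝ) < (K:ℝ) := by positivity
      nlinarith
    have hKM0 : (0:ℝ) < (K:ℝ) * (M:ℝ) := by
      have : (0:ℝ) < (M:ℝ) := by exact_mod_cast hM1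
      positivity
    calc Real.log ((K:ℝ) * (M:ℝ)) ≤ Real.log (3 * ((K:ℝ) * Real.log T)) :=
          Real.log_le_log hKM0 hKM
      _ ≤ 5 * Real.log ((K:ℝ) * Real.log T) := aux_log3 hKL
  have hlogKM0 : (0:ℝ) < Real.log ((K:ℝ) * (M:ℝ)) := by
    apply Real.log_pos
    have h2K : (2:ℝ) ≤ (K:ℝ) := by exact_mod_cast hK
    have h1M : (1:ℝ) ≤ (M:ℝ) := by exact_mod_cast hM1
    nlinarith
  have hlogKL0 : (0:ℝ) < Real.log ((K:ℝ) * Real.log T) := by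
    apply Real.log_pos
    nlinarith

  -- measurability and bounds
  have hpm : ∀ t ∈ Finset.Icc 1 T, ∀ j, Measurable (p t j) :=
    fun t ht j => ((hp t ht).1 j).mono (ℱ.le (t - 1)) le_rfl
  have hp0 : ∀ t ∈ Finset.Icc 1 T, ∀ j (ω : Ω), 0 ≤ p t j ω :=
    fun t ht j ω => ((hp t ht).2 ω).1 j
  have hp1 : ∀ t ∈ Finset.Icc 1 T, ∀ j (ω : Ω), p t j ω ≤ 1 := by
    intro t ht j ω
    have h := ((hp t ht).2 ω).2
    calc p t j ω ≤ ∑ i, p t i ω :=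
          Finset.single_le_sum (fun i _ => ((hp t ht).2 ω).1 i) (Finset.mem_univ j)
      _ = 1 := h
  have hlm : ∀ t ∈ Finset.Icc 1 T, ∀ i, Measurable (ℓ t i) :=
    fun t ht i => (hℓm t ht i).mono (ℱ.le t) le_rfl
  have hrm : ∀ t ∈ Finset.Icc 1 T, ∀ i : Fin K,
      Measurable (fun ω => (∑ j, p t j ω * ℓ t j ω) - ℓ t i ω) := by
    intro t ht i
    exact (Finset.measurable_sum Finset.univ
      (fun j _ => (hpm t ht j).mul (hlm t ht j))).sub (hlm t ht i)
  have hrb : ∀ t ∈ Finset.Icc 1 T, ∀ i : Fin K, ∀ ω,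
      |(∑ j, p t j ω * ℓ t j ω) - ℓ t i ω| ≤ 2 := by
    intro t ht i ω
    have h1 : |∑ j, p t j ω * ℓ t j ω| ≤ 1 := by
      calc |∑ j, p t j ω * ℓ t j ω| ≤ ∑ j, |p t j ω * ℓ t j ω| :=
            Finset.abs_sum_le_sum_abs _ _
        _ ≤ ∑ j, p t j ω := by
            refine Finset.sum_le_sum (fun j _ => ?_)
            rw [abs_mul, abs_of_nonneg (hp0 t ht j ω)]
            calc p t j ω * |ℓ t j ω| ≤ p t j ω * 1 :=
                  mul_le_mul_of_nonneg_left (hℓb t ht j ω) (hp0 t ht j ω)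
              _ = p t j ω := by ring
        _ = 1 := ((hp t ht).2 ω).2
    have h2 := hℓb t ht i ω
    rw [abs_le] at h1 h2 ⊢
    constructor <;> linarith [h1.1, h1.2, h2.1, h2.2]
  have hri : ∀ t ∈ Finset.Icc 1 T, ∀ i : Fin K,
      Integrable (fun ω => (∑ j, p t j ω * ℓ t j ω) - ℓ t i ω) μ :=
    fun t ht i => aux_int (hrm t ht i) (hrb t ht i)
  -- representation of instantaneous regret
  have hrepr : ∀ t ∈ Finset.Icc 1 T, ∀ i : Fin K, ∀ ω,
      (∑ j, p t j ω * ℓ t j ω) - ℓ t i ω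
        = ∑ j ∈ Finset.univ.erase i, p t j ω * (ℓ t j ω - ℓ t i ω) := by
    intro t ht i ω
    have hsum1 : (∑ j, p t j ω) = 1 := ((hp t ht).2 ω).2
    have h0 : (∑ j, p t j ω * (ℓ t j ω - ℓ t i ω))
        = (∑ j, p t j ω * ℓ t j ω) - ℓ t i ω := by
      simp only [mul_sub]
      rw [Finset.sum_sub_distrib, ← Finset.sum_mul, hsum1, one_mul]
    rw [← h0, ← Finset.add_sum_erase _ _ (Finset.mem_univ i)]
    simp
  -- per-round key inequalities
  have hkey : ∀ t ∈ Finset.Icc 1 T,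
      α (idx t) * (∫ ω, |(∑ j, p t j ω * ℓ t j ω) - ℓ t (idx t) ω| ∂μ)
        ≤ 2 * ∫ ω, ((∑ j, p t j ω * ℓ t j ω) - ℓ t (idx t) ω) ∂μ ∧
      0 ≤ ∫ ω, ((∑ j, p t j ω * ℓ t j ω) - ℓ t (idx t) ω) ∂μ := by
    intro t ht
    have hαt : 0 < α (idx t) := hα0 (idx t) (hidxn t ht)
    set i := idx t with hi
    -- Q := sum over j ≠ i of ∫ p t j
    set Q : ℝ := ∑ j ∈ Finset.univ.erase i, ∫ ω, p t j ω ∂μ with hQ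
    have hQ0 : 0 ≤ Q := by
      refine Finset.sum_nonneg (fun j _ => ?_)
      exact integral_nonneg (fun ω => hp0 t ht j ω)
    have hpint : ∀ j : Fin K, Integrable (p t j) μ := by
      intro j
      refine aux_int (hpm t ht j) (C := 1) (fun ω => ?_)
      rw [abs_of_nonneg (hp0 t ht j ω)]; exact hp1 t ht j ω
    -- lower bound on ∫ r
    have hlow : α i * Q ≤ ∫ ω, ((∑ j, p t j ω * ℓ t j ω) - ℓ t i ω) ∂μ := by
      have hterm : ∀ j ∈ Finset.univ.erase i,
          α i * ∫ ω, p t j ω ∂μ ≤ ∫ ω, p t j ω * (ℓ t j ω - ℓ t i ω) ∂μ := by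
        intro j hj
        have hji : j ≠ i := Finset.ne_of_mem_erase hj
        have hgap' := hgap t ht j (by rw [← hi]; exact hji)
        refine aux_core (ℱ.le (t - 1)) μ (p t j) (fun ω => ℓ t j ω - ℓ t i ω)
          ((hp t ht).1 j) (fun ω => hp0 t ht j ω) (fun ω => hp1 t ht j ω)
          ((hlm t ht j).sub (hlm t ht i)) (fun ω => ?_) (α i) ?_
        · show |ℓ t j ω - ℓ t i ω| ≤ 2
          have h1 := hℓb t ht j ω; have h2 := hℓb t ht i ω
          rw [abs_le] at h1 h2 ⊢; constructor <;> linarith [h1.1, h1.2, h2.1, h2.2]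
        · exact hgap'
      have hintj : ∀ j ∈ Finset.univ.erase i,
          Integrable (fun ω => p t j ω * (ℓ t j ω - ℓ t i ω)) μ := by
        intro j _
        refine aux_int ((hpm t ht j).mul ((hlm t ht j).sub (hlm t ht i))) (C := 2)
          (fun ω => ?_)
        rw [abs_mul, abs_of_nonneg (hp0 t ht j ω)]
        have h1 := hℓb t ht j ω; have h2 := hℓb t ht i ω
        have h3 : |ℓ t j ω - ℓ t i ω| ≤ 2 := by
          rw [abs_le] at h1 h2 ⊢; constructor <;> linarith [h1.1, h1.2, h2.1, h2.2]
        calc p t j ω * |ℓ t j ω - ℓ t i ω| ≤ 1 * 2 :=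
              mul_le_mul (hp1 t ht j ω) h3 (abs_nonneg _) zero_le_one
          _ = 2 := by ring
      have e1 : ∫ ω, ((∑ j, p t j ω * ℓ t j ω) - ℓ t i ω) ∂μ
          = ∑ j ∈ Finset.univ.erase i, ∫ ω, p t j ω * (ℓ t j ω - ℓ t i ω) ∂μ := by
        rw [show (fun ω => (∑ j, p t j ω * ℓ t j ω) - ℓ t i ω)
            = fun ω => ∑ j ∈ Finset.univ.erase i, p t j ω * (ℓ t j ω - ℓ t i ω) from
          funext (fun ω => hrepr t ht i ω)]
        exact integral_finset_sum _ hintj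
      rw [e1, hQ, Finset.mul_sum]
      exact Finset.sum_le_sum hterm
    -- upper bound on ∫ |r|
    have hup : (∫ ω, |(∑ j, p t j ω * ℓ t j ω) - ℓ t i ω| ∂μ) ≤ 2 * Q := by
      have habs : ∀ ω, |(∑ j, p t j ω * ℓ t j ω) - ℓ t i ω|
          ≤ ∑ j ∈ Finset.univ.erase i, 2 * p t j ω := by
        intro ω
        rw [hrepr t ht i ω]
        calc |∑ j ∈ Finset.univ.erase i, p t j ω * (ℓ t j ω - ℓ t i ω)|
            ≤ ∑ j ∈ Finset.univ.erase i, |p t j ω * (ℓ t j ω - ℓ t i ω)| :=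
              Finset.abs_sum_le_sum_abs _ _
          _ ≤ ∑ j ∈ Finset.univ.erase i, 2 * p t j ω := by
              refine Finset.sum_le_sum (fun j _ => ?_)
              rw [abs_mul, abs_of_nonneg (hp0 t ht j ω)]
              have h1 := hℓb t ht j ω; have h2 := hℓb t ht i ω
              have h3 : |ℓ t j ω - ℓ t i ω| ≤ 2 := by
                rw [abs_le] at h1 h2 ⊢; constructor <;> linarith [h1.1, h1.2, h2.1, h2.2]
              nlinarith [hp0 t ht j ω]
      have hint2 : Integrable (fun ω => ∑ j ∈ Finset.univ.erase i, 2 * p t j ω) μ :=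
        integrable_finset_sum _ (fun j _ => (hpint j).const_mul 2)
      calc (∫ ω, |(∑ j, p t j ω * ℓ t j ω) - ℓ t i ω| ∂μ)
          ≤ ∫ ω, (∑ j ∈ Finset.univ.erase i, 2 * p t j ω) ∂μ :=
            integral_mono (hri t ht i).abs hint2 habs
        _ = ∑ j ∈ Finset.univ.erase i, 2 * ∫ ω, p t j ω ∂μ := by
            rw [integral_finset_sum _ (fun j _ => (hpint j).const_mul 2)]
            exact Finset.sum_congr rfl (fun j _ => integral_const_mul 2 _)
        _ = 2 * Q := by rw [hQ, Finset.mul_sum]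
    refine ⟨?_, le_trans (by positivity) hlow⟩
    calc α i * (∫ ω, |(∑ j, p t j ω * ℓ t j ω) - ℓ t i ω| ∂μ)
        ≤ α i * (2 * Q) := mul_le_mul_of_nonneg_left hup hαt.le
      _ = 2 * (α i * Q) := by ring
      _ ≤ 2 * ∫ ω, ((∑ j, p t j ω * ℓ t j ω) - ℓ t i ω) ∂μ := by linarith [hlow]
  -- the gaps are at most 2
  have hα2 : ∀ t ∈ Finset.Icc 1 T, α (idx t) ≤ 2 := by
    intro t ht
    set i := idx t with hi
    have hjex : ∃ j : Fin K, j ≠ i := by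
      by_cases h0 : (i : ℕ) = 0
      · refine ⟨⟨1, by omega⟩, fun hc => ?_⟩
        have := congrArg Fin.val hc; simp only at this; omega
      · refine ⟨⟨0, by omega⟩, fun hc => ?_⟩
        have := congrArg Fin.val hc; simp only at this; omega
    obtain ⟨j, hj⟩ := hjex
    have hgap' := hgap t ht j (by rw [← hi]; exact hj)
    have hXint : Integrable (fun ω => ℓ t j ω - ℓ t i ω) μ := by
      refine aux_int ((hlm t ht j).sub (hlm t ht i)) (C := 2) (fun ω => ?_)
      show |ℓ t j ω - ℓ t i ω| ≤ 2
      have h1 := hℓb t ht j ω; have h2 := hℓb t ht i ω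
      rw [abs_le] at h1 h2 ⊢; constructor <;> linarith [h1.1, h1.2, h2.1, h2.2]
    have h1 : (∫ _ω : Ω, α i ∂μ) ≤ ∫ ω, (μ[fun ω' => ℓ t j ω' - ℓ t i ω'|ℱ (t-1)]) ω ∂μ :=
      integral_mono_ae (integrable_const _) integrable_condExp hgap'
    rw [integral_condExp (ℱ.le (t-1)), integral_const] at h1
    simp only [measure_univ, probReal_univ, ENNReal.toReal_one, one_smul, smul_eq_mul, one_mul] at h1
    have h2 : (∫ ω, (ℓ t j ω - ℓ t i ω) ∂μ) ≤ 2 := by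
      calc (∫ ω, (ℓ t j ω - ℓ t i ω) ∂μ) ≤ ∫ _ω : Ω, (2:ℝ) ∂μ := by
            refine integral_mono hXint (integrable_const _) (fun ω => ?_)
            show ℓ t j ω - ℓ t i ω ≤ 2
            have h1' := hℓb t ht j ω; have h2' := hℓb t ht i ω
            rw [abs_le] at h1' h2'; linarith [h1'.1, h1'.2, h2'.1, h2'.2]
        _ = 2 := by simp [measure_univ]
    linarith
  -- swap integral and sum
  have hswap : (∫ ω, (∑ t ∈ Finset.Icc 1 T,
        ((∑ j, p t j ω * ℓ t j ω) - ℓ t (idx t) ω)) ∂μ)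
      = ∑ t ∈ Finset.Icc 1 T, ∫ ω, ((∑ j, p t j ω * ℓ t j ω) - ℓ t (idx t) ω) ∂μ :=
    integral_finset_sum _ (fun t ht => hri t ht (idx t))
  rw [hswap]
  have hmaps : ∀ t ∈ Finset.Icc 1 T, idx t ∈ Finset.univ.filter (fun i : Fin K => (i:ℕ) < n) :=
    fun t ht => Finset.mem_filter.2 ⟨Finset.mem_univ _, hidxn t ht⟩
  rw [← Finset.sum_fiberwise_of_maps_to hmaps
    (fun t => ∫ ω, ((∑ j, p t j ω * ℓ t j ω) - ℓ t (idx t) ω) ∂μ), Finset.mul_sum]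
  refine Finset.sum_le_sum (fun i himem => ?_)
  have hin : (i:ℕ) < n := (Finset.mem_filter.1 himem).2
  have hαi : 0 < α i := hα0 i hin
  have hfib : ∀ t ∈ (Finset.Icc 1 T).filter (fun t => idx t = i), idx t = i :=
    fun t ht => (Finset.mem_filter.1 ht).2
  have hsub : ∀ t ∈ (Finset.Icc 1 T).filter (fun t => idx t = i), t ∈ Finset.Icc 1 T :=
    fun t ht => (Finset.mem_filter.1 ht).1
  have hinner : (∑ t ∈ (Finset.Icc 1 T).filter (fun t => idx t = i),
        ∫ ω, ((∑ j, p t j ω * ℓ t j ω) - ℓ t (idx t) ω) ∂μ)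
      = ∑ t ∈ (Finset.Icc 1 T).filter (fun t => idx t = i),
        ∫ ω, ((∑ j, p t j ω * ℓ t j ω) - ℓ t i ω) ∂μ :=
    Finset.sum_congr rfl (fun t ht => by rw [hfib t ht])
  rw [hinner]
  set B' : ℝ := ((1 + (∑ t ∈ Finset.Icc 2 T,
      if (idx (t - 1) = i ∧ idx t ≠ i) ∨ (idx (t - 1) ≠ i ∧ idx t = i)
      then 1 else 0 : ℕ) : ℝ)) * Real.log T + Real.log ((K : ℝ) * Real.log T) with hB'def
  set B : ℝ := ((1 + (∑ t ∈ Finset.Icc 2 T,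
      if (idx (t - 1) = i ∧ idx t ≠ i) ∨ (idx (t - 1) ≠ i ∧ idx t = i)
      then 1 else 0 : ℕ) : ℝ)) * Real.log T + Real.log ((K : ℝ) * (M : ℝ)) with hBdef
  have hSL0 : (0:ℝ) ≤ ((1 + (∑ t ∈ Finset.Icc 2 T,
      if (idx (t - 1) = i ∧ idx t ≠ i) ∨ (idx (t - 1) ≠ i ∧ idx t = i)
      then 1 else 0 : ℕ) : ℝ)) * Real.log T :=
    mul_nonneg (by positivity) hL0.le
  have hB0 : 0 < B := by rw [hBdef]; linarith [hlogKM0]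
  have hB'0 : 0 < B' := by rw [hB'def]; linarith [hlogKL0]
  have hBB' : B ≤ 5 * B' := by rw [hBdef, hB'def]; linarith [hlogKM, hlogKL0]
  set ER : ℝ := ∑ t ∈ (Finset.Icc 1 T).filter (fun t => idx t = i),
      ∫ ω, ((∑ j, p t j ω * ℓ t j ω) - ℓ t i ω) ∂μ with hERdef
  by_cases hne : ((Finset.Icc 1 T).filter (fun t => idx t = i)).Nonempty
  swap
  · rw [Finset.not_nonempty_iff_eq_empty] at hne
    rw [hERdef, hne, Finset.sum_empty]
    have h0 : (0:ℝ) ≤ (10 * C' ^ 2 + 20 * C') := by nlinarith [sq_nonneg C']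
    exact mul_nonneg h0 (div_nonneg hB'0.le hαi.le)
  obtain ⟨t0, ht0⟩ := hne
  have hα2i : α i ≤ 2 := by
    have := hα2 t0 (hsub t0 ht0); rwa [hfib t0 ht0] at this
  set EV : ℝ := ∑ t ∈ (Finset.Icc 1 T).filter (fun t => idx t = i),
      ∫ ω, |(∑ j, p t j ω * ℓ t j ω) - ℓ t i ω| ∂μ with hEVdef
  have h1 : α i * EV ≤ 2 * ER := by
    rw [hEVdef, hERdef, Finset.mul_sum, Finset.mul_sum]
    refine Finset.sum_le_sum (fun t ht => ?_)
    have := (hkey t (hsub t ht)).1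
    rwa [hfib t ht] at this
  have hrint : ∀ t ∈ (Finset.Icc 1 T).filter (fun t => idx t = i),
      Integrable (fun ω => (∑ j, p t j ω * ℓ t j ω) - ℓ t i ω) μ :=
    fun t ht => hri t (hsub t ht) i
  have hVint : Integrable (fun ω => ∑ t ∈ (Finset.Icc 1 T).filter (fun t => idx t = i),
      |(∑ j, p t j ω * ℓ t j ω) - ℓ t i ω|) μ :=
    integrable_finset_sum _ (fun t ht => (hrint t ht).abs)
  have hC0 : C' ≠ 0 := ne_of_gt hC'
  have hαne : α i ≠ 0 := ne_of_gt hαi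
  -- pathwise bound
  have hpath : ∀ ω, (∑ t ∈ (Finset.Icc 1 T).filter (fun t => idx t = i),
        ((∑ j, p t j ω * ℓ t j ω) - ℓ t i ω))
      ≤ (α i / 4) * (∑ t ∈ (Finset.Icc 1 T).filter (fun t => idx t = i),
          |(∑ j, p t j ω * ℓ t j ω) - ℓ t i ω|)
        + (C' ^ 2 * B / α i + C' * B) := by
    intro ω
    have hVω0 : (0:ℝ) ≤ ∑ t ∈ (Finset.Icc 1 T).filter (fun t => idx t = i),
        |(∑ j, p t j ω * ℓ t j ω) - ℓ t i ω| :=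
      Finset.sum_nonneg (fun t _ => abs_nonneg _)
    have h17' := h17 ω i ⟨t0, hsub t0 ht0, hfib t0 ht0⟩
    have h17'' : (∑ t ∈ (Finset.Icc 1 T).filter (fun t => idx t = i),
          ((∑ j, p t j ω * ℓ t j ω) - ℓ t i ω))
        ≤ C' * (Real.sqrt (B * ∑ t ∈ (Finset.Icc 1 T).filter (fun t => idx t = i),
            |(∑ j, p t j ω * ℓ t j ω) - ℓ t i ω|) + B) := by
      rw [hBdef]
      calc (∑ t ∈ (Finset.Icc 1 T).filter (fun t => idx t = i),
            ((∑ j, p t j ω * ℓ t j ω) - ℓ t i ω)) ≤ _ := h17'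
        _ = _ := by ring
    have hsq : Real.sqrt (B * ∑ t ∈ (Finset.Icc 1 T).filter (fun t => idx t = i),
          |(∑ j, p t j ω * ℓ t j ω) - ℓ t i ω|)
        ≤ C' * B / α i + (α i / (4 * C')) * ∑ t ∈ (Finset.Icc 1 T).filter (fun t => idx t = i),
          |(∑ j, p t j ω * ℓ t j ω) - ℓ t i ω| := by
      have ha : (0:ℝ) ≤ 2 * C' * B / α i :=
        div_nonneg (by nlinarith [hB0.le]) hαi.le
      have hb : (0:ℝ) ≤ α i * (∑ t ∈ (Finset.Icc 1 T).filter (fun t => idx t = i),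
          |(∑ j, p t j ω * ℓ t j ω) - ℓ t i ω|) / (2 * C') :=
        div_nonneg (mul_nonneg hαi.le hVω0) (by linarith)
      have hab : (2 * C' * B / α i) * (α i * (∑ t ∈ (Finset.Icc 1 T).filter (fun t => idx t = i),
          |(∑ j, p t j ω * ℓ t j ω) - ℓ t i ω|) / (2 * C'))
          = B * ∑ t ∈ (Finset.Icc 1 T).filter (fun t => idx t = i),
            |(∑ j, p t j ω * ℓ t j ω) - ℓ t i ω| := by
        field_simp
      rw [← hab]
      calc Real.sqrt _ ≤ _ := aux_amgm ha hb
        _ = C' * B / α i + (α i / (4 * C')) * ∑ t ∈ (Finset.Icc 1 T).filter (fun t => idx t = i),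
            |(∑ j, p t j ω * ℓ t j ω) - ℓ t i ω| := by ring
    calc (∑ t ∈ (Finset.Icc 1 T).filter (fun t => idx t = i),
          ((∑ j, p t j ω * ℓ t j ω) - ℓ t i ω))
        ≤ C' * (Real.sqrt (B * ∑ t ∈ (Finset.Icc 1 T).filter (fun t => idx t = i),
            |(∑ j, p t j ω * ℓ t j ω) - ℓ t i ω|) + B) := h17''
      _ ≤ C' * ((C' * B / α i + (α i / (4 * C')) * ∑ t ∈ (Finset.Icc 1 T).filter (fun t => idx t = i),
            |(∑ j, p t j ω * ℓ t j ω) - ℓ t i ω|) + B) :=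
          mul_le_mul_of_nonneg_left (add_le_add_left hsq B) hC'.le
      _ = (α i / 4) * (∑ t ∈ (Finset.Icc 1 T).filter (fun t => idx t = i),
            |(∑ j, p t j ω * ℓ t j ω) - ℓ t i ω|) + (C' ^ 2 * B / α i + C' * B) := by
          field_simp
          ring
  -- integrate the pathwise bound
  have h2 : ER ≤ C' ^ 2 * B / α i + α i * EV / 4 + C' * B := by
    have e1 : ER = ∫ ω, (∑ t ∈ (Finset.Icc 1 T).filter (fun t => idx t = i),
        ((∑ j, p t j ω * ℓ t j ω) - ℓ t i ω)) ∂μ := by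
      rw [hERdef, integral_finset_sum _ hrint]
    have e2 : (∫ ω, ((α i / 4) * (∑ t ∈ (Finset.Icc 1 T).filter (fun t => idx t = i),
          |(∑ j, p t j ω * ℓ t j ω) - ℓ t i ω|)
        + (C' ^ 2 * B / α i + C' * B)) ∂μ)
        = (α i / 4) * EV + (C' ^ 2 * B / α i + C' * B) := by
      rw [integral_add (hVint.const_mul _) (integrable_const _), integral_const_mul,
        integral_const, integral_finset_sum _ (fun t ht => (hrint t ht).abs)]
      simp [measure_univ, hEVdef]
    have e3 : (∫ ω, (∑ t ∈ (Finset.Icc 1 T).filter (fun t => idx t = i),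
          ((∑ j, p t j ω * ℓ t j ω) - ℓ t i ω)) ∂μ)
        ≤ (α i / 4) * EV + (C' ^ 2 * B / α i + C' * B) := by
      rw [← e2]
      exact integral_mono (integrable_finset_sum _ hrint)
        ((hVint.const_mul _).add (integrable_const _)) hpath
    rw [e1]; linarith [e3]
  have hsolve : ER ≤ (2 * C' ^ 2 + 4 * C') * (B / α i) :=
    aux_solve hC' hB0.le hαi hα2i h1 h2
  calc ER ≤ (2 * C' ^ 2 + 4 * C') * (B / α i) := hsolve
    _ ≤ (2 * C' ^ 2 + 4 * C') * (5 * B' / α i) := by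
        refine mul_le_mul_of_nonneg_left ?_ (by nlinarith [sq_nonneg C'])
        rw [div_le_div_iff₀ hαi hαi]
        nlinarith [hBB', hαi]
    _ = (10 * C' ^ 2 + 20 * C') * (B' / α i) := by ring
end
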